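/- arXiv:2512.01129 — 13 statements merged into one kernel-verified Lean document; each statement's English description precedes it below -/
import Mathlib

section
/- Suppose Δ < 0 (society underestimates the agent's ability). Then ψ̃_Δ(β) > β* for every β ∈ [βlo, βhi], and ψ̃_Δ is antitone on [βlo, βhi]: ψ̃_Δ(β₁) ≥ ψ̃_Δ(β₂) whenever βlo ≤ β₁ < β₂ ≤ βhi, with strict inequality whenever ψ̃_Δ(β₁) < βhi. -/
open Set

theorem stmt_0
    (βlo βstar βhi : ℝ)
    (hlo : 0 < βlo) (hls : βlo < βstar) (hsh : βstar < βhi)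
    (R : ℝ → ℝ → ℝ)
    (hRcont : ContinuousOn (fun p : ℝ × ℝ => R p.1 p.2) (Icc (0:ℝ) 1 ×ˢ Ici (0:ℝ)))
    (hR0 : ∀ h ∈ Icc (0:ℝ) 1, R h 0 = 0)
    (hR0' : ∀ β ∈ Ici (0:ℝ), R 0 β = 0)
    (hRβ : ∀ h ∈ Ioc (0:ℝ) 1, StrictMonoOn (fun β => R h β) (Ici 0))
    (hRh : ∀ β > (0:ℝ), StrictMonoOn (fun h => R h β) (Icc 0 1))
    (hRid : ∀ h₁ h₂ β₁ β₂ : ℝ, 0 ≤ h₁ → h₁ < h₂ → h₂ ≤ 1 → 0 ≤ β₁ → β₁ < β₂ →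
      R h₂ β₁ - R h₁ β₁ < R h₂ β₂ - R h₁ β₂)
    (H : ℝ → ℝ)
    (hHcont : ContinuousOn H (Ici 0))
    (hHmono : StrictMonoOn H (Ici 0))
    (hH0 : H 0 = 0)
    (hHin : ∀ β > (0:ℝ), H β ∈ Ioo (0:ℝ) 1)
    (Δ : ℝ) (hΔ : Δ < 0)
    (ψ : ℝ → ℝ)
    (hψ : ∀ β ∈ Icc βlo βhi,
      ψ β ∈ Icc βlo βhi ∧
      ∀ x ∈ Icc βlo βhi, x ≠ ψ β →
        |Δ + R (H β) (ψ β) - R (H β) βstar| < |Δ + R (H β) x - R (H β) βstar|) :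
    (∀ β ∈ Icc βlo βhi, βstar < ψ β) ∧
    (∀ β₁ β₂ : ℝ, βlo ≤ β₁ → β₁ < β₂ → β₂ ≤ βhi →
      ψ β₂ ≤ ψ β₁ ∧ (ψ β₁ < βhi → ψ β₂ < ψ β₁)) := by
  have hstar0 : (0:ℝ) < βstar := lt_trans hlo hls
  have key : ∀ β ∈ Icc βlo βhi,
      βstar < ψ β ∧ Δ + R (H β) (ψ β) - R (H β) βstar ≤ 0 ∧
      (ψ β < βhi → Δ + R (H β) (ψ β) - R (H β) βstar = 0) := by
    intro β hβ
    have hβpos : 0 < β := lt_of_lt_of_le hlo hβ.1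
    have hh := hHin β hβpos
    obtain ⟨hy, hmin⟩ := hψ β hβ
    set h : ℝ := H β with hh_def
    set f : ℝ → ℝ := fun x => Δ + R h x - R h βstar with hf
    have fmono : ∀ a b : ℝ, 0 ≤ a → 0 ≤ b → a < b → f a < f b := by
      intro a b ha hb hab
      have := hRβ h ⟨hh.1, hh.2.le⟩ ha hb hab
      simp only at this
      simp only [hf]
      linarith
    have fcont : ContinuousOn f (Ici 0) := by
      have hR1 : ContinuousOn (fun x => R h x) (Ici 0) := by
        have hmap : MapsTo (fun x : ℝ => (h, x)) (Ici (0:ℝ)) (Icc (0:ℝ) 1 ×ˢ Ici (0:ℝ)) := by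
          intro x hx
          exact ⟨⟨hh.1.le, hh.2.le⟩, hx⟩
        exact hRcont.comp (Continuous.continuousOn (by continuity)) hmap
      exact (continuousOn_const.add hR1).sub continuousOn_const
    set y : ℝ := ψ β with hy_def
    have hy0 : (0:ℝ) < y := lt_of_lt_of_le hlo hy.1
    have hfstar : f βstar = Δ := by simp [hf]
    have hmin' : ∀ x ∈ Icc βlo βhi, x ≠ y → |f y| < |f x| := hmin
    have hB : f y ≤ 0 := by
      by_contra hpos
      push_neg at hpos
      have hys : βstar < y := by
        by_contra hle
        push_neg at hle
        rcases eq_or_lt_of_le hle with he | hlt2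
        · rw [he] at hpos; rw [hfstar] at hpos; linarith
        · have := fmono y βstar hy0.le hstar0.le hlt2
          rw [hfstar] at this; linarith
      have hsub : Icc βstar y ⊆ Ici (0:ℝ) := fun z hz => le_trans hstar0.le hz.1
      have h0mem : (0:ℝ) ∈ Ioo (f βstar) (f y) := by rw [hfstar]; exact ⟨hΔ, hpos⟩
      obtain ⟨x₀, hx₀, hfx₀⟩ := intermediate_value_Ioo hys.le (fcont.mono hsub) h0mem
      have hx₀mem : x₀ ∈ Icc βlo βhi :=
        ⟨le_of_lt (lt_trans hls hx₀.1), le_trans hx₀.2.le hy.2⟩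
      have hm := hmin' x₀ hx₀mem (ne_of_lt hx₀.2)
      rw [hfx₀, abs_zero] at hm
      have := abs_nonneg (f y); linarith
    have hC : y < βhi → f y = 0 := by
      intro hylt
      by_contra hne
      have hfy : f y < 0 := lt_of_le_of_ne hB hne
      have hfyhi : f y < f βhi := fmono y βhi hy0.le (le_trans hy0.le hylt.le) hylt
      by_cases hcase : 0 < f βhi
      · have hsub : Icc y βhi ⊆ Ici (0:ℝ) := fun z hz => le_trans hy0.le hz.1
        obtain ⟨x₀, hx₀, hfx₀⟩ :=
          intermediate_value_Ioo hylt.le (fcont.mono hsub) ⟨hfy, hcase⟩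
        have hx₀mem : x₀ ∈ Icc βlo βhi := ⟨le_trans hy.1 hx₀.1.le, hx₀.2.le⟩
        have hm := hmin' x₀ hx₀mem (ne_of_gt hx₀.1)
        rw [hfx₀, abs_zero] at hm
        have := abs_nonneg (f y); linarith
      · push_neg at hcase
        have hm := hmin' βhi ⟨le_of_lt (lt_trans hls hsh), le_refl βhi⟩ (ne_of_gt hylt)
        rw [abs_of_nonpos hcase, abs_of_neg hfy] at hm
        linarith
    have hA : βstar < y := by
      rcases lt_trichotomy y βstar with hlt | heq | hgt
      · have hm := hmin' βstar ⟨hls.le, hsh.le⟩ (ne_of_gt hlt)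
        have hlt' : f y < f βstar := fmono y βstar hy0.le hstar0.le hlt
        rw [hfstar] at hm hlt'
        rw [abs_of_neg (lt_trans hlt' hΔ), abs_of_neg hΔ] at hm
        linarith
      · have h0 := hC (by rw [heq]; exact hsh)
        rw [heq, hfstar] at h0
        linarith
      · exact hgt
    exact ⟨hA, hB, hC⟩
  constructor
  · intro β hβ; exact (key β hβ).1
  · intro β₁ β₂ h1 h12 h2
    have hβ₁ : β₁ ∈ Icc βlo βhi := ⟨h1, le_trans h12.le h2⟩
    have hβ₂ : β₂ ∈ Icc βlo βhi := ⟨le_trans h1 h12.le, h2⟩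
    obtain ⟨hA₁, hB₁, hC₁⟩ := key β₁ hβ₁
    obtain ⟨hA₂, hB₂, hC₂⟩ := key β₂ hβ₂
    have hy₁ := (hψ β₁ hβ₁).1
    have hy₂ := (hψ β₂ hβ₂).1
    have hh₁ := hHin β₁ (lt_of_lt_of_le hlo hβ₁.1)
    have hh₂ := hHin β₂ (lt_of_lt_of_le hlo hβ₂.1)
    have hH12 : H β₁ < H β₂ :=
      hHmono (le_of_lt (lt_of_lt_of_le hlo hβ₁.1)) (le_of_lt (lt_of_lt_of_le hlo hβ₂.1)) h12
    have hid := hRid (H β₁) (H β₂) βstar (ψ β₁) hh₁.1.le hH12 hh₂.2.le hstar0.le hA₁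
    have fmono₂ : ∀ a b : ℝ, 0 ≤ a → 0 ≤ b → a < b → R (H β₂) a < R (H β₂) b := by
      intro a b ha hb hab
      have := hRβ (H β₂) ⟨hh₂.1, hh₂.2.le⟩ ha hb hab
      simpa using this
    have hkey2le : ψ β₂ ≤ ψ β₁ := by
      by_contra hc
      push_neg at hc
      have hy1lt : ψ β₁ < βhi := lt_of_lt_of_le hc hy₂.2
      have h0 := hC₁ hy1lt
      have hmono := fmono₂ (ψ β₁) (ψ β₂)
        (le_trans hlo.le hy₁.1) (le_trans hlo.le hy₂.1) hc
      linarith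
    refine ⟨hkey2le, fun hy1lt => ?_⟩
    rcases lt_or_eq_of_le hkey2le with hlt | heq
    · exact hlt
    · exfalso
      have h0 := hC₁ hy1lt
      rw [heq] at hB₂
      linarith
end

section
/- (Theorem 1, Part A (i)–(ii)) Suppose Δ < 0. Then ψ̃_Δ has exactly one fixed point β̂ in [βlo, βhi]; this unique Berk–Nash equilibrium belief satisfies β̂ > β*, and ψ̃_Δ crosses the diagonal strictly from above at β̂ (the unique equilibrium is stable). -/
/-
Write `g_β(x) = Δ + R(h(β), x) - R(h(β), β*)` (`discrepancy R H Δ βstar β x`), so that `ψ̃_Δ(β)`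
minimizes `|g_β|` on `[βlo, βhi]`.
Since `g_β` is continuous and strictly increasing, the sign of `g_β(β)` tells on which side of `β`
the minimizer lies: `ψ̃_Δ(β) > β` when `g_β(β) < 0` (and `β < βhi`), `ψ̃_Δ(β) < β` when
`g_β(β) > 0`, and `ψ̃_Δ(β) = β` when `g_β(β) = 0`. Along the diagonal, `g_β(β) < 0` for `β ≤ β*`
because `g_β(β*) = Δ < 0`, while on `[β*, βhi]` the map `β ↦ g_β(β)` is continuous and, by
increasing differences of `R` and monotonicity of `h`, strictly increasing. Hence it changes sign
exactly once, at some `β̂ > β*` (or stays negative, and then `β̂ = βhi`): `ψ̃_Δ` lies above the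
diagonal left of `β̂`, below it right of `β̂`, and fixes `β̂`.
-/

open Set

/-- `F` crosses the diagonal strictly from above at `x` (within the interval `[a,b]`). -/
def CrossesFromAbove (F : ℝ → ℝ) (a b x : ℝ) : Prop :=
  ∃ ε > 0, (∀ t ∈ Ioo (x - ε) x ∩ Icc a b, t < F t) ∧
    (∀ t ∈ Ioo x (x + ε) ∩ Icc a b, F t < t)

def IsStrictMinOn {α β : Type*} [LT β] (g : α → β) (s : Set α) (m : α) : Prop :=
  m ∈ s ∧ ∀ x ∈ s, x ≠ m → g m < g x

section AbsMinimizer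

variable {f : ℝ → ℝ} {a b m x : ℝ}

theorem IsStrictMinOn.eq_of_le {α β : Type*} [Preorder β] {g : α → β} {s : Set α} {m x : α}
    (hm : IsStrictMinOn g s m) (hx : x ∈ s) (hle : g x ≤ g m) : x = m := by
  by_contra hne
  exact (hm.2 x hx hne).not_ge hle

theorem IsStrictMinOn.eq_of_apply_eq_zero (hm : IsStrictMinOn (fun x => |f x|) (Icc a b) m)
    (hx : x ∈ Icc a b) (hfx : f x = 0) : x = m :=
  hm.eq_of_le hx (by simp [hfx])

theorem IsStrictMinOn.eq_right_of_nonpos (hm : IsStrictMinOn (fun x => |f x|) (Icc a b) m)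
    (hf : StrictMonoOn f (Icc a b)) (hab : a ≤ b) (hfb : f b ≤ 0) : m = b := by
  have hb : b ∈ Icc a b := right_mem_Icc.2 hab
  refine (hm.eq_of_le hb ?_).symm
  have hfm : f m ≤ f b := hf.monotoneOn hm.1 hb hm.1.2
  simp only [abs_of_nonpos hfb, abs_of_nonpos (hfm.trans hfb)]
  linarith

theorem IsStrictMinOn.lt_of_neg (hm : IsStrictMinOn (fun x => |f x|) (Icc a b) m)
    (hf : StrictMonoOn f (Icc a b)) (hfc : ContinuousOn f (Icc a b))
    (hx : x ∈ Icc a b) (hxb : x < b) (hfx : f x < 0) : x < m := by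
  by_contra! hmx
  have hfm : f m < 0 := (hf.monotoneOn hm.1 hx hmx).trans_lt hfx
  rcases le_or_gt (f b) 0 with hfb | hfb
  · exact hxb.not_ge (hm.eq_right_of_nonpos hf (hx.1.trans hx.2) hfb ▸ hmx)
  · obtain ⟨z, hz, hfz⟩ := intermediate_value_Icc hxb.le (hfc.mono (Icc_subset_Icc_left hx.1))
      ⟨hfx.le, hfb.le⟩
    have hzm := hm.eq_of_apply_eq_zero ⟨hx.1.trans hz.1, hz.2⟩ hfz
    exact hfm.ne (hzm ▸ hfz)

theorem IsStrictMinOn.lt_of_pos (hm : IsStrictMinOn (fun x => |f x|) (Icc a b) m)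
    (hf : StrictMonoOn f (Icc a b)) (hfc : ContinuousOn f (Icc a b))
    (hx : x ∈ Icc a b) (hfa : f a < 0) (hfx : 0 < f x) : m < x := by
  by_contra! hxm
  obtain ⟨z, hz, hfz⟩ := intermediate_value_Icc hx.1 (hfc.mono (Icc_subset_Icc_right hx.2))
    ⟨hfa.le, hfx.le⟩
  have hzm := hm.eq_of_apply_eq_zero ⟨hz.1, hz.2.trans hx.2⟩ hfz
  exact (hfx.trans_le (hf.monotoneOn hx hm.1 hxm)).ne' (hzm ▸ hfz)

end AbsMinimizer

def discrepancy (R : ℝ → ℝ → ℝ) (H : ℝ → ℝ) (Δ βstar β x : ℝ) : ℝ :=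
  Δ + R (H β) x - R (H β) βstar

theorem ContinuousOn.uncurry_comp {R : ℝ → ℝ → ℝ} {A B s : Set ℝ}
    (hR : ContinuousOn (fun p : ℝ × ℝ => R p.1 p.2) (A ×ˢ B)) {u v : ℝ → ℝ}
    (hu : ContinuousOn u s) (hv : ContinuousOn v s) (hus : MapsTo u s A) (hvs : MapsTo v s B) :
    ContinuousOn (fun t => R (u t) (v t)) s :=
  hR.comp (hu.prodMk hv) fun _ ht => ⟨hus ht, hvs ht⟩

section Discrepancy

variable {R : ℝ → ℝ → ℝ} {H : ℝ → ℝ} {Δ βstar β : ℝ}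

@[simp]
theorem discrepancy_apply_self : discrepancy R H Δ βstar β βstar = Δ := by
  simp [discrepancy]

theorem discrepancy_strictMonoOn {s : Set ℝ} (hR : StrictMonoOn (R (H β)) s) :
    StrictMonoOn (discrepancy R H Δ βstar β) s := by
  intro x hx y hy hxy
  have := hR hx hy hxy
  simp only [discrepancy]
  linarith

theorem discrepancy_continuousOn
    (hRcont : ContinuousOn (fun p : ℝ × ℝ => R p.1 p.2) (Icc (0:ℝ) 1 ×ˢ Ici (0:ℝ)))
    (hHβ : H β ∈ Ioo (0:ℝ) 1) : ContinuousOn (discrepancy R H Δ βstar β) (Ici 0) :=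
  (continuousOn_const.add (hRcont.uncurry_comp continuousOn_const continuousOn_id
    (fun _ _ => Ioo_subset_Icc_self hHβ) (mapsTo_id _))).sub continuousOn_const

theorem discrepancy_neg_of_le (hR : StrictMonoOn (R (H β)) (Ici 0)) (hΔ : Δ < 0) {x : ℝ}
    (hx : 0 ≤ x) (hxs : x ≤ βstar) : discrepancy R H Δ βstar β x < 0 :=
  calc discrepancy R H Δ βstar β x
      ≤ discrepancy R H Δ βstar β βstar :=
        (discrepancy_strictMonoOn hR).monotoneOn hx (hx.trans hxs) hxs
    _ = Δ := discrepancy_apply_self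
    _ < 0 := hΔ

theorem discrepancy_diag_strictMonoOn (hβstar : 0 < βstar)
    (hRH : ∀ β > (0:ℝ), StrictMonoOn (R (H β)) (Ici 0))
    (hRid : ∀ h₁ h₂ β₁ β₂ : ℝ, 0 ≤ h₁ → h₁ < h₂ → h₂ ≤ 1 → 0 ≤ β₁ → β₁ < β₂ →
      R h₂ β₁ - R h₁ β₁ < R h₂ β₂ - R h₁ β₂)
    (hHmono : StrictMonoOn H (Ici 0)) (hHin : ∀ β > (0:ℝ), H β ∈ Ioo (0:ℝ) 1) :
    StrictMonoOn (fun β => discrepancy R H Δ βstar β β) (Ici βstar) := by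
  intro β₁ hβ₁ β₂ hβ₂ h₁₂
  have hβ₁0 : 0 < β₁ := hβstar.trans_le hβ₁
  have hβ₂0 : 0 < β₂ := hβ₁0.trans h₁₂
  -- increasing differences, applied to `H β₁ < H β₂` and `βstar ≤ β₁`
  have hshift : discrepancy R H Δ βstar β₁ β₁ ≤ discrepancy R H Δ βstar β₂ β₁ := by
    rcases (show βstar ≤ β₁ from hβ₁).eq_or_lt with rfl | hsβ₁
    · simp
    · have := hRid (H β₁) (H β₂) βstar β₁ (hHin β₁ hβ₁0).1.le
        (hHmono hβ₁0.le hβ₂0.le h₁₂) (hHin β₂ hβ₂0).2.le hβstar.le hsβ₁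
      simp only [discrepancy]
      linarith
  exact hshift.trans_lt
    (discrepancy_strictMonoOn (hRH β₂ hβ₂0) hβ₁0.le hβ₂0.le h₁₂)

theorem discrepancy_diag_continuousOn
    (hRcont : ContinuousOn (fun p : ℝ × ℝ => R p.1 p.2) (Icc (0:ℝ) 1 ×ˢ Ici (0:ℝ)))
    (hHcont : ContinuousOn H (Ici 0)) (hHin : ∀ β > (0:ℝ), H β ∈ Ioo (0:ℝ) 1)
    (hβstar : 0 ≤ βstar) :
    ContinuousOn (fun β => discrepancy R H Δ βstar β β) (Ioi 0) := by
  have hH : ContinuousOn H (Ioi 0) := hHcont.mono Ioi_subset_Ici_self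
  have hHmaps : MapsTo H (Ioi 0) (Icc 0 1) := fun β hβ => Ioo_subset_Icc_self (hHin β hβ)
  exact (continuousOn_const.add (hRcont.uncurry_comp hH continuousOn_id hHmaps
    fun _ hβ => mem_Ici.2 (le_of_lt hβ))).sub
    (hRcont.uncurry_comp hH continuousOn_const hHmaps fun _ _ => hβstar)

end Discrepancy

section FixedPoint

variable {ψ φ : ℝ → ℝ} {a c b : ℝ}

theorem exists_sign_change (hac : a ≤ c) (hcb : c < b) (hneg : ∀ t ∈ Icc a c, φ t < 0)
    (hmono : StrictMonoOn φ (Icc c b)) (hcont : ContinuousOn φ (Icc c b)) :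
    ∃ x ∈ Ioc c b, (∀ t ∈ Icc a b, t < x → φ t < 0) ∧ (∀ t ∈ Icc a b, x < t → 0 < φ t) ∧
      (φ x = 0 ∨ x = b ∧ φ b ≤ 0) := by
  have hφc : φ c < 0 := hneg c ⟨hac, le_rfl⟩
  obtain ⟨x, hx, hφx, hcases⟩ : ∃ x ∈ Ioc c b, φ x ≤ 0 ∧ (φ x = 0 ∨ x = b ∧ φ b ≤ 0) := by
    rcases le_or_gt (φ b) 0 with hφb | hφb
    · exact ⟨b, ⟨hcb, le_rfl⟩, hφb, .inr ⟨rfl, hφb⟩⟩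
    · obtain ⟨x, hx, hφx⟩ := intermediate_value_Icc hcb.le hcont ⟨hφc.le, hφb.le⟩
      have hcx : c ≠ x := by rintro rfl; exact hφc.ne hφx
      exact ⟨x, ⟨hx.1.lt_of_ne hcx, hx.2⟩, hφx.le, .inl hφx⟩
  have hxIcc : x ∈ Icc c b := Ioc_subset_Icc_self hx
  refine ⟨x, hx, fun t ht htx => ?_, fun t ht hxt => ?_, hcases⟩
  · rcases le_or_gt t c with htc | hct
    · exact hneg t ⟨ht.1, htc⟩
    · exact (hmono ⟨hct.le, ht.2⟩ hxIcc htx).trans_le hφx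
  · rcases hcases with hφx0 | ⟨rfl, -⟩
    · exact hφx0 ▸ hmono hxIcc ⟨hx.1.le.trans hxt.le, ht.2⟩ hxt
    · exact absurd ht.2 hxt.not_ge

theorem CrossesFromAbove.of_forall {x : ℝ} (hbelow : ∀ t ∈ Icc a b, t < x → t < ψ t)
    (habove : ∀ t ∈ Icc a b, x < t → ψ t < t) : CrossesFromAbove ψ a b x :=
  ⟨1, one_pos, fun t ht => hbelow t ht.2 ht.1.2, fun t ht => habove t ht.2 ht.1.1⟩

theorem exists_unique_fixedPoint_crossesFromAbove (hac : a ≤ c) (hcb : c < b)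
    (hneg : ∀ t ∈ Icc a c, φ t < 0) (hmono : StrictMonoOn φ (Icc c b))
    (hcont : ContinuousOn φ (Icc c b))
    (hzero : ∀ t ∈ Icc a b, φ t = 0 → ψ t = t) (hright : φ b ≤ 0 → ψ b = b)
    (hup : ∀ t ∈ Icc a b, t < b → φ t < 0 → t < ψ t)
    (hdown : ∀ t ∈ Icc a b, 0 < φ t → ψ t < t) :
    ∃ x ∈ Icc a b, ψ x = x ∧ (∀ y ∈ Icc a b, ψ y = y → y = x) ∧ c < x ∧
      CrossesFromAbove ψ a b x := by
  obtain ⟨x, hx, hφbelow, hφabove, hcases⟩ := exists_sign_change hac hcb hneg hmono hcont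
  have hxIcc : x ∈ Icc a b := ⟨hac.trans hx.1.le, hx.2⟩
  have hbelow : ∀ t ∈ Icc a b, t < x → t < ψ t := fun t ht htx =>
    hup t ht (htx.trans_le hx.2) (hφbelow t ht htx)
  have habove : ∀ t ∈ Icc a b, x < t → ψ t < t := fun t ht hxt => hdown t ht (hφabove t ht hxt)
  have hfix : ψ x = x := by
    rcases hcases with hφx | ⟨rfl, hφb⟩
    · exact hzero x hxIcc hφx
    · exact hright hφb
  refine ⟨x, hxIcc, hfix, fun y hy hψy => ?_, hx.1, .of_forall hbelow habove⟩
  rcases lt_trichotomy y x with hyx | rfl | hxy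
  · exact absurd hψy (hbelow y hy hyx).ne'
  · rfl
  · exact absurd hψy (habove y hy hxy).ne

end FixedPoint

theorem stmt_1_general
    (βlo βstar βhi : ℝ)
    (hlo : 0 < βlo) (hls : βlo < βstar) (hsh : βstar < βhi)
    (R : ℝ → ℝ → ℝ)
    (hRcont : ContinuousOn (fun p : ℝ × ℝ => R p.1 p.2) (Icc (0:ℝ) 1 ×ˢ Ici (0:ℝ)))
    (hRβ : ∀ h ∈ Ioc (0:ℝ) 1, StrictMonoOn (fun β => R h β) (Ici 0))
    (hRid : ∀ h₁ h₂ β₁ β₂ : ℝ, 0 ≤ h₁ → h₁ < h₂ → h₂ ≤ 1 → 0 ≤ β₁ → β₁ < β₂ →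
      R h₂ β₁ - R h₁ β₁ < R h₂ β₂ - R h₁ β₂)
    (H : ℝ → ℝ)
    (hHcont : ContinuousOn H (Ici 0))
    (hHmono : StrictMonoOn H (Ici 0))
    (hHin : ∀ β > (0:ℝ), H β ∈ Ioo (0:ℝ) 1)
    (Δ : ℝ) (hΔ : Δ < 0)
    (ψ : ℝ → ℝ)
    (hψ : ∀ β ∈ Icc βlo βhi,
      ψ β ∈ Icc βlo βhi ∧
      ∀ x ∈ Icc βlo βhi, x ≠ ψ β →
        |Δ + R (H β) (ψ β) - R (H β) βstar| < |Δ + R (H β) x - R (H β) βstar|) :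
    ∃ bhat ∈ Icc βlo βhi, ψ bhat = bhat ∧
      (∀ β' ∈ Icc βlo βhi, ψ β' = β' → β' = bhat) ∧
      βstar < bhat ∧
      CrossesFromAbove ψ βlo βhi bhat := by
  have hβstar : 0 < βstar := hlo.trans hls
  have hpos : ∀ β ∈ Icc βlo βhi, 0 < β := fun β hβ => hlo.trans_le hβ.1
  have hIcc : Icc βlo βhi ⊆ Ici 0 := fun β hβ => (hpos β hβ).le
  have hhi : βhi ∈ Icc βlo βhi := right_mem_Icc.2 (hls.trans hsh).le
  have hRH : ∀ β > (0:ℝ), StrictMonoOn (R (H β)) (Ici 0) :=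
    fun β hβ => hRβ (H β) (Ioo_subset_Ioc_self (hHin β hβ))
  have hmin : ∀ β ∈ Icc βlo βhi,
      IsStrictMinOn (fun x => |discrepancy R H Δ βstar β x|) (Icc βlo βhi) (ψ β) := hψ
  have hmono : ∀ β ∈ Icc βlo βhi, StrictMonoOn (discrepancy R H Δ βstar β) (Icc βlo βhi) :=
    fun β hβ => discrepancy_strictMonoOn ((hRH β (hpos β hβ)).mono hIcc)
  have hcont : ∀ β ∈ Icc βlo βhi, ContinuousOn (discrepancy R H Δ βstar β) (Icc βlo βhi) :=
    fun β hβ => (discrepancy_continuousOn hRcont (hHin β (hpos β hβ))).mono hIcc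
  refine exists_unique_fixedPoint_crossesFromAbove (φ := fun β => discrepancy R H Δ βstar β β)
    hls.le hsh ?_ ((discrepancy_diag_strictMonoOn hβstar hRH hRid hHmono hHin).mono
      Icc_subset_Ici_self) ((discrepancy_diag_continuousOn hRcont hHcont hHin hβstar.le).mono
      fun t ht => hβstar.trans_le ht.1) ?_ ?_ ?_ ?_
  · exact fun t ht => discrepancy_neg_of_le (hRH t (hlo.trans_le ht.1)) hΔ
      (hlo.trans_le ht.1).le ht.2
  · exact fun t ht hφt => ((hmin t ht).eq_of_apply_eq_zero ht hφt).symm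
  · exact (hmin βhi hhi).eq_right_of_nonpos (hmono βhi hhi) hhi.1
  · exact fun t ht htb hφt => (hmin t ht).lt_of_neg (hmono t ht) (hcont t ht) ht htb hφt
  · exact fun t ht hφt => (hmin t ht).lt_of_pos (hmono t ht) (hcont t ht) ht
      (discrepancy_neg_of_le (hRH t (hpos t ht)) hΔ hlo.le hls.le) hφt

theorem stmt_1
    (βlo βstar βhi : ℝ)
    (hlo : 0 < βlo) (hls : βlo < βstar) (hsh : βstar < βhi)
    (R : ℝ → ℝ → ℝ)
    (hRcont : ContinuousOn (fun p : ℝ × ℝ => R p.1 p.2) (Icc (0:ℝ) 1 ×ˢ Ici (0:ℝ)))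
    (hR0 : ∀ h ∈ Icc (0:ℝ) 1, R h 0 = 0)
    (hR0' : ∀ β ∈ Ici (0:ℝ), R 0 β = 0)
    (hRβ : ∀ h ∈ Ioc (0:ℝ) 1, StrictMonoOn (fun β => R h β) (Ici 0))
    (hRh : ∀ β > (0:ℝ), StrictMonoOn (fun h => R h β) (Icc 0 1))
    (hRid : ∀ h₁ h₂ β₁ β₂ : ℝ, 0 ≤ h₁ → h₁ < h₂ → h₂ ≤ 1 → 0 ≤ β₁ → β₁ < β₂ →
      R h₂ β₁ - R h₁ β₁ < R h₂ β₂ - R h₁ β₂)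
    (H : ℝ → ℝ)
    (hHcont : ContinuousOn H (Ici 0))
    (hHmono : StrictMonoOn H (Ici 0))
    (hH0 : H 0 = 0)
    (hHin : ∀ β > (0:ℝ), H β ∈ Ioo (0:ℝ) 1)
    (Δ : ℝ) (hΔ : Δ < 0)
    (ψ : ℝ → ℝ)
    (hψ : ∀ β ∈ Icc βlo βhi,
      ψ β ∈ Icc βlo βhi ∧
      ∀ x ∈ Icc βlo βhi, x ≠ ψ β →
        |Δ + R (H β) (ψ β) - R (H β) βstar| < |Δ + R (H β) x - R (H β) βstar|) :
    ∃ bhat ∈ Icc βlo βhi, ψ bhat = bhat ∧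
      (∀ β' ∈ Icc βlo βhi, ψ β' = β' → β' = bhat) ∧
      βstar < bhat ∧
      CrossesFromAbove ψ βlo βhi bhat :=
  stmt_1_general βlo βstar βhi hlo hls hsh R hRcont hRβ hRid H hHcont hHmono hHin Δ hΔ ψ hψ
end

section
/- (Theorem 1, Part A (iii)) There exist δ > 0 and C > 0 such that for every Δ ∈ (−δ, 0): the unique fixed point β̂_Δ of ψ̃_Δ lies in the open interval (βlo, βhi), is self-confirming — that is, Δ + R(h(β̂_Δ), β̂_Δ) − R(h(β̂_Δ), β*) = 0 — and satisfies |β̂_Δ − β*| ≤ C·|Δ|. -/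
/-!
Let `m(β, x) = Δ + R(h(β), x) − R(h(β), β*)` be the misfit that `ψ̃_Δ(β)` minimizes in `x`. For
`−δ < Δ < 0` the increasing map `m(β, ·)` changes sign on `[βlo, βhi]`, so its minimizer is its zero
and the fixed points of `ψ̃_Δ` are exactly the zeros of the diagonal `β ↦ m(β, β)`. Increasing
differences make the diagonal strictly increasing on `[β*, ∞)`, while it is negative on `(0, β*]`;
hence its zero is unique, and it exists by the intermediate value theorem. Increasing differences
also give `R(h(β*), β̂) − R(h(β*), β*) ≤ |Δ|`, and the positive derivative of `R(h(β*), ·)` at `β*`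
turns this into `β̂ − β* ≤ C |Δ|`.
-/

open Set Filter Topology

theorem eq_of_abs_lt_abs_of_eq_zero {α : Type*} {f : α → ℝ} {s : Set α} {p x : α}
    (hp : ∀ y ∈ s, y ≠ p → |f p| < |f y|) (hx : x ∈ s) (hfx : f x = 0) : x = p := by
  by_contra hne
  have h := hp x hx hne
  rw [hfx, abs_zero] at h
  exact (abs_nonneg _).not_gt h

theorem eq_zero_of_abs_lt_abs {f : ℝ → ℝ} {a b p : ℝ} (hab : a ≤ b)
    (hf : ContinuousOn f (Icc a b)) (ha : f a ≤ 0) (hb : 0 ≤ f b)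
    (hp : ∀ y ∈ Icc a b, y ≠ p → |f p| < |f y|) : f p = 0 := by
  obtain ⟨x, hx, hfx⟩ := intermediate_value_Icc hab hf ⟨ha, hb⟩
  rw [← eq_of_abs_lt_abs_of_eq_zero hp hx hfx, hfx]

theorem exists_sub_le_mul_of_hasDerivAt {f : ℝ → ℝ} {a d : ℝ} (hf : HasDerivAt f d a)
    (hd : 0 < d) (hmono : MonotoneOn f (Ici a)) :
    ∃ η > 0, ∀ b, a ≤ b → f b - f a < η → b - a ≤ 2 / d * (f b - f a) := by
  have hslope : ∀ᶠ y in 𝓝[≠] a, d / 2 < slope f a y :=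
    (hasDerivAt_iff_tendsto_slope.mp hf).eventually (eventually_gt_nhds (half_lt_self hd))
  obtain ⟨ε, hε, hball⟩ := Metric.mem_nhdsWithin_iff.mp hslope
  have hnear : ∀ b, a < b → b < a + ε → d / 2 * (b - a) < f b - f a := by
    intro b hab hbε
    have hb : b ∈ Metric.ball a ε ∩ {a}ᶜ :=
      ⟨by rw [Metric.mem_ball, Real.dist_eq, abs_of_pos (sub_pos.mpr hab)]; linarith, hab.ne'⟩
    have h : d / 2 < slope f a b := hball hb
    rwa [slope_def_field, lt_div_iff₀ (sub_pos.mpr hab)] at h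
  refine ⟨f (a + ε / 2) - f a, ?_, fun b hab hfb => ?_⟩
  · have h := hnear (a + ε / 2) (by linarith) (by linarith)
    have : 0 < d / 2 * (a + ε / 2 - a) := by nlinarith
    linarith
  · -- beyond `a + ε / 2` the increment of `f` is already at least `η`
    have hbε : b < a + ε / 2 := by
      by_contra! h
      have := hmono (mem_Ici.2 (by linarith)) (mem_Ici.2 hab) h
      linarith
    rcases hab.eq_or_lt with rfl | hlt
    · simp
    · have h := hnear b hlt (by linarith)
      rw [div_mul_eq_mul_div, le_div_iff₀ hd]
      linarith

def StrictIncreasingDifferences (R : ℝ → ℝ → ℝ) : Prop :=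
  ∀ h₁ h₂ β₁ β₂ : ℝ, 0 ≤ h₁ → h₁ < h₂ → h₂ ≤ 1 → 0 ≤ β₁ → β₁ < β₂ →
    R h₂ β₁ - R h₁ β₁ < R h₂ β₂ - R h₁ β₂

theorem StrictIncreasingDifferences.sub_le_sub {R : ℝ → ℝ → ℝ}
    (hR : StrictIncreasingDifferences R) {h₁ h₂ a b : ℝ} (h₀ : 0 ≤ h₁) (h₁₂ : h₁ ≤ h₂)
    (h₂₁ : h₂ ≤ 1) (ha : 0 ≤ a) (hab : a ≤ b) : R h₁ b - R h₁ a ≤ R h₂ b - R h₂ a := by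
  rcases h₁₂.eq_or_lt with rfl | hh
  · rfl
  rcases hab.eq_or_lt with rfl | hab
  · simp
  linarith [hR h₁ h₂ a b h₀ hh h₂₁ ha hab]

def misfit (R : ℝ → ℝ → ℝ) (H : ℝ → ℝ) (βstar Δ β x : ℝ) : ℝ :=
  Δ + R (H β) x - R (H β) βstar

section Misfit

variable {R : ℝ → ℝ → ℝ} {H : ℝ → ℝ} {βstar Δ β : ℝ}

theorem misfit_self_right : misfit R H βstar Δ β βstar = Δ := by
  simp [misfit]

theorem strictMonoOn_misfit (hRβ : ∀ h ∈ Ioc (0:ℝ) 1, StrictMonoOn (fun β => R h β) (Ici 0))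
    (hH : H β ∈ Ioc 0 1) : StrictMonoOn (misfit R H βstar Δ β) (Ici 0) := by
  intro x hx y hy hxy
  have := hRβ _ hH hx hy hxy
  simp only [misfit]
  linarith

theorem misfit_le_misfit (hRid : StrictIncreasingDifferences R)
    (hHmono : StrictMonoOn H (Ici 0)) (hHin : ∀ β > (0:ℝ), H β ∈ Ioo (0:ℝ) 1)
    (hstar : 0 ≤ βstar) {β₁ β₂ x : ℝ} (hβ₁ : 0 < β₁) (hβ₁₂ : β₁ ≤ β₂) (hx : βstar ≤ x) :
    misfit R H βstar Δ β₁ x ≤ misfit R H βstar Δ β₂ x := by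
  have hβ₂ : 0 < β₂ := hβ₁.trans_le hβ₁₂
  have := hRid.sub_le_sub (hHin β₁ hβ₁).1.le (hHmono.monotoneOn hβ₁.le hβ₂.le hβ₁₂)
    (hHin β₂ hβ₂).2.le hstar hx
  simp only [misfit]
  linarith

theorem strictMonoOn_misfit_diag
    (hRβ : ∀ h ∈ Ioc (0:ℝ) 1, StrictMonoOn (fun β => R h β) (Ici 0))
    (hRid : StrictIncreasingDifferences R)
    (hHmono : StrictMonoOn H (Ici 0)) (hHin : ∀ β > (0:ℝ), H β ∈ Ioo (0:ℝ) 1)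
    (hstar : 0 < βstar) : StrictMonoOn (fun β => misfit R H βstar Δ β β) (Ici βstar) := by
  intro a ha b hb hab
  have ha0 : 0 < a := hstar.trans_le ha
  calc misfit R H βstar Δ a a
      < misfit R H βstar Δ a b :=
        strictMonoOn_misfit hRβ (Ioo_subset_Ioc_self (hHin a ha0)) ha0.le
          (ha0.trans hab).le hab
    _ ≤ misfit R H βstar Δ b b :=
        misfit_le_misfit hRid hHmono hHin hstar.le ha0 hab.le (le_trans ha hab.le)

theorem misfit_diag_neg (hRβ : ∀ h ∈ Ioc (0:ℝ) 1, StrictMonoOn (fun β => R h β) (Ici 0))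
    (hHin : ∀ β > (0:ℝ), H β ∈ Ioo (0:ℝ) 1) (hΔ : Δ < 0) (hβ0 : 0 < β)
    (hβ : β ≤ βstar) : misfit R H βstar Δ β β < 0 := by
  have := (strictMonoOn_misfit (Δ := Δ) (βstar := βstar) hRβ
    (Ioo_subset_Ioc_self (hHin β hβ0))).monotoneOn hβ0.le (hβ0.le.trans hβ) hβ
  rw [misfit_self_right] at this
  linarith

theorem lt_of_misfit_diag_eq_zero
    (hRβ : ∀ h ∈ Ioc (0:ℝ) 1, StrictMonoOn (fun β => R h β) (Ici 0))
    (hHin : ∀ β > (0:ℝ), H β ∈ Ioo (0:ℝ) 1) (hΔ : Δ < 0) (hβ0 : 0 < β)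
    (hβ : misfit R H βstar Δ β β = 0) : βstar < β := by
  by_contra! h
  exact (misfit_diag_neg hRβ hHin hΔ hβ0 h).ne hβ

theorem eq_of_misfit_diag_eq_zero
    (hRβ : ∀ h ∈ Ioc (0:ℝ) 1, StrictMonoOn (fun β => R h β) (Ici 0))
    (hRid : StrictIncreasingDifferences R)
    (hHmono : StrictMonoOn H (Ici 0)) (hHin : ∀ β > (0:ℝ), H β ∈ Ioo (0:ℝ) 1)
    (hstar : 0 < βstar) (hΔ : Δ < 0) {β₁ β₂ : ℝ} (hβ₁ : 0 < β₁) (hβ₂ : 0 < β₂)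
    (h₁ : misfit R H βstar Δ β₁ β₁ = 0) (h₂ : misfit R H βstar Δ β₂ β₂ = 0) : β₁ = β₂ :=
  (strictMonoOn_misfit_diag hRβ hRid hHmono hHin hstar).injOn
    (lt_of_misfit_diag_eq_zero hRβ hHin hΔ hβ₁ h₁).le
    (lt_of_misfit_diag_eq_zero hRβ hHin hΔ hβ₂ h₂).le (h₁.trans h₂.symm)

theorem sub_le_neg_of_misfit_diag_eq_zero (hRid : StrictIncreasingDifferences R)
    (hHmono : StrictMonoOn H (Ici 0)) (hHin : ∀ β > (0:ℝ), H β ∈ Ioo (0:ℝ) 1)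
    (hstar : 0 < βstar) (hβ : βstar ≤ β) (h : misfit R H βstar Δ β β = 0) :
    R (H βstar) β - R (H βstar) βstar ≤ -Δ := by
  have := h ▸ misfit_le_misfit (Δ := Δ) hRid hHmono hHin hstar.le hstar hβ hβ
  simp only [misfit] at this
  linarith

theorem continuousOn_misfit_diag
    (hRcont : ContinuousOn (fun p : ℝ × ℝ => R p.1 p.2) (Icc (0:ℝ) 1 ×ˢ Ici (0:ℝ)))
    (hHcont : ContinuousOn H (Ici 0)) (hHin : ∀ β > (0:ℝ), H β ∈ Ioo (0:ℝ) 1)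
    (hstar : 0 ≤ βstar) : ContinuousOn (fun β => misfit R H βstar Δ β β) (Ioi 0) := by
  have hcomp : ∀ u : ℝ → ℝ, ContinuousOn u (Ioi 0) → (∀ β ∈ Ioi (0:ℝ), 0 ≤ u β) →
      ContinuousOn (fun β => R (H β) (u β)) (Ioi 0) := fun u hu hu0 =>
    hRcont.comp ((hHcont.mono Ioi_subset_Ici_self).prodMk hu)
      fun β hβ => ⟨Ioo_subset_Icc_self (hHin β hβ), hu0 β hβ⟩
  exact (continuousOn_const.add (hcomp id continuousOn_id fun β hβ => le_of_lt hβ)).sub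
    (hcomp (fun _ => βstar) continuousOn_const fun _ _ => hstar)

theorem continuousOn_misfit
    (hRcont : ContinuousOn (fun p : ℝ × ℝ => R p.1 p.2) (Icc (0:ℝ) 1 ×ˢ Ici (0:ℝ)))
    (hH : H β ∈ Icc 0 1) : ContinuousOn (misfit R H βstar Δ β) (Ici 0) := by
  have hR : ContinuousOn (fun x => R (H β) x) (Ici 0) :=
    hRcont.comp (continuousOn_const.prodMk continuousOn_id) fun x hx => ⟨hH, hx⟩
  exact (continuousOn_const.add hR).sub continuousOn_const

theorem eq_iff_misfit_diag_eq_zero {βlo βhi : ℝ} (hlo : 0 < βlo) (hls : βlo < βstar)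
    (hsh : βstar < βhi)
    (hRcont : ContinuousOn (fun p : ℝ × ℝ => R p.1 p.2) (Icc (0:ℝ) 1 ×ˢ Ici (0:ℝ)))
    (hRβ : ∀ h ∈ Ioc (0:ℝ) 1, StrictMonoOn (fun β => R h β) (Ici 0))
    (hRid : StrictIncreasingDifferences R)
    (hHmono : StrictMonoOn H (Ici 0)) (hHin : ∀ β > (0:ℝ), H β ∈ Ioo (0:ℝ) 1)
    (hΔ : Δ < 0) (hΔlo : 0 ≤ misfit R H βstar Δ βlo βhi) {p : ℝ} (hβ : β ∈ Icc βlo βhi)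
    (hp : ∀ x ∈ Icc βlo βhi, x ≠ p →
      |misfit R H βstar Δ β p| < |misfit R H βstar Δ β x|) :
    p = β ↔ misfit R H βstar Δ β β = 0 := by
  refine ⟨?_, fun h => (eq_of_abs_lt_abs_of_eq_zero hp hβ h).symm⟩
  rintro rfl
  have hβ0 : 0 < p := hlo.trans_le hβ.1
  have hstar : 0 < βstar := hlo.trans hls
  have hH := hHin p hβ0
  refine eq_zero_of_abs_lt_abs (hls.trans hsh).le
    ((continuousOn_misfit hRcont (Ioo_subset_Icc_self hH)).mono fun x hx => hlo.le.trans hx.1)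
    ?_ ?_ hp
  · have := strictMonoOn_misfit (Δ := Δ) (βstar := βstar) hRβ (Ioo_subset_Ioc_self hH)
      hlo.le hstar.le hls
    rw [misfit_self_right] at this
    linarith
  · exact hΔlo.trans (misfit_le_misfit hRid hHmono hHin hstar.le hlo hβ.1 hsh.le)

theorem exists_misfit_diag_eq_zero {βhi : ℝ} (hsh : βstar < βhi)
    (hcont : ContinuousOn (fun β => misfit R H βstar Δ β β) (Icc βstar βhi))
    (hΔ : Δ < 0) (hhi : 0 < misfit R H βstar Δ βhi βhi) :
    ∃ b ∈ Ioo βstar βhi, misfit R H βstar Δ b b = 0 :=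
  intermediate_value_Ioo hsh.le hcont ⟨by rwa [misfit_self_right], hhi⟩

end Misfit

theorem stmt_2_general
    (βlo βstar βhi : ℝ)
    (hlo : 0 < βlo) (hls : βlo < βstar) (hsh : βstar < βhi)
    (R : ℝ → ℝ → ℝ)
    (hRcont : ContinuousOn (fun p : ℝ × ℝ => R p.1 p.2) (Icc (0:ℝ) 1 ×ˢ Ici (0:ℝ)))
    (hRβ : ∀ h ∈ Ioc (0:ℝ) 1, StrictMonoOn (fun β => R h β) (Ici 0))
    (hRid : ∀ h₁ h₂ β₁ β₂ : ℝ, 0 ≤ h₁ → h₁ < h₂ → h₂ ≤ 1 → 0 ≤ β₁ → β₁ < β₂ →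
      R h₂ β₁ - R h₁ β₁ < R h₂ β₂ - R h₁ β₂)
    (hRβderiv : ∀ h ∈ Ioc (0:ℝ) 1, ∀ β > (0:ℝ), ∃ d > (0:ℝ),
      HasDerivAt (fun β' => R h β') d β)
    (H : ℝ → ℝ)
    (hHcont : ContinuousOn H (Ici 0))
    (hHmono : StrictMonoOn H (Ici 0))
    (hHin : ∀ β > (0:ℝ), H β ∈ Ioo (0:ℝ) 1)
    (ψ : ℝ → ℝ → ℝ)
    (hψ : ∀ Δ : ℝ, ∀ β ∈ Icc βlo βhi,
      ψ Δ β ∈ Icc βlo βhi ∧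
      ∀ x ∈ Icc βlo βhi, x ≠ ψ Δ β →
        |Δ + R (H β) (ψ Δ β) - R (H β) βstar| < |Δ + R (H β) x - R (H β) βstar|) :
    ∃ δ > (0:ℝ), ∃ C > (0:ℝ), ∀ Δ ∈ Ioo (-δ) (0:ℝ),
      ∃ bhat ∈ Ioo βlo βhi, ψ Δ bhat = bhat ∧
        (∀ β' ∈ Icc βlo βhi, ψ Δ β' = β' → β' = bhat) ∧
        Δ + R (H bhat) bhat - R (H bhat) βstar = 0 ∧
        |bhat - βstar| ≤ C * |Δ| := by
  have hstar : 0 < βstar := hlo.trans hls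
  have hHstar : H βstar ∈ Ioc 0 1 := Ioo_subset_Ioc_self (hHin βstar hstar)
  obtain ⟨d, hd, hder⟩ := hRβderiv _ hHstar βstar hstar
  obtain ⟨η, hη, hlin⟩ := exists_sub_le_mul_of_hasDerivAt hder hd
    ((hRβ _ hHstar).monotoneOn.mono (Ici_subset_Ici.2 hstar.le))
  set δ₁ := R (H βlo) βhi - R (H βlo) βstar
  have hδ₁ : 0 < δ₁ :=
    sub_pos.2 (hRβ _ (Ioo_subset_Ioc_self (hHin βlo hlo)) hstar.le (hstar.trans hsh).le hsh)
  refine ⟨min δ₁ η, lt_min hδ₁ hη, 2 / d, by positivity, fun Δ ⟨hΔlo, hΔ⟩ => ?_⟩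
  have hΔδ₁ : 0 < misfit R H βstar Δ βlo βhi := by
    have := min_le_left δ₁ η
    simp only [misfit]
    linarith
  have hfix : ∀ β ∈ Icc βlo βhi, ψ Δ β = β ↔ misfit R H βstar Δ β β = 0 := fun β hβ =>
    eq_iff_misfit_diag_eq_zero hlo hls hsh hRcont hRβ hRid hHmono hHin hΔ hΔδ₁.le hβ
      (hψ Δ β hβ).2
  obtain ⟨b, hb, hb0⟩ := exists_misfit_diag_eq_zero hsh
    ((continuousOn_misfit_diag hRcont hHcont hHin hstar.le).mono fun x hx => hstar.trans_le hx.1)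
    hΔ (hΔδ₁.trans_le (misfit_le_misfit hRid hHmono hHin hstar.le hlo (hls.trans hsh).le hsh.le))
  have hbIcc : b ∈ Icc βlo βhi := ⟨(hls.trans hb.1).le, hb.2.le⟩
  refine ⟨b, ⟨hls.trans hb.1, hb.2⟩, (hfix b hbIcc).2 hb0, fun β hβ hψβ =>
    eq_of_misfit_diag_eq_zero hRβ hRid hHmono hHin hstar hΔ (hlo.trans_le hβ.1)
      (hstar.trans hb.1) ((hfix β hβ).1 hψβ) hb0, hb0, ?_⟩
  have hgain := sub_le_neg_of_misfit_diag_eq_zero hRid hHmono hHin hstar hb.1.le hb0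
  rw [abs_of_pos (sub_pos.2 hb.1), abs_of_neg hΔ]
  calc b - βstar ≤ 2 / d * (R (H βstar) b - R (H βstar) βstar) :=
        hlin b hb.1.le (by linarith [min_le_right δ₁ η])
    _ ≤ 2 / d * -Δ := by gcongr

theorem stmt_2
    (βlo βstar βhi : ℝ)
    (hlo : 0 < βlo) (hls : βlo < βstar) (hsh : βstar < βhi)
    (R : ℝ → ℝ → ℝ)
    (hRcont : ContinuousOn (fun p : ℝ × ℝ => R p.1 p.2) (Icc (0:ℝ) 1 ×ˢ Ici (0:ℝ)))
    (hR0 : ∀ h ∈ Icc (0:ℝ) 1, R h 0 = 0)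
    (hR0' : ∀ β ∈ Ici (0:ℝ), R 0 β = 0)
    (hRβ : ∀ h ∈ Ioc (0:ℝ) 1, StrictMonoOn (fun β => R h β) (Ici 0))
    (hRh : ∀ β > (0:ℝ), StrictMonoOn (fun h => R h β) (Icc 0 1))
    (hRid : ∀ h₁ h₂ β₁ β₂ : ℝ, 0 ≤ h₁ → h₁ < h₂ → h₂ ≤ 1 → 0 ≤ β₁ → β₁ < β₂ →
      R h₂ β₁ - R h₁ β₁ < R h₂ β₂ - R h₁ β₂)
    -- R is continuously differentiable, with ∂R/∂β > 0 for h ∈ (0,1], β > 0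
    (hRdiff : ContDiffOn ℝ 1 (fun p : ℝ × ℝ => R p.1 p.2) (Icc (0:ℝ) 1 ×ˢ Ici (0:ℝ)))
    (hRβderiv : ∀ h ∈ Ioc (0:ℝ) 1, ∀ β > (0:ℝ), ∃ d > (0:ℝ),
      HasDerivAt (fun β' => R h β') d β)
    (H : ℝ → ℝ)
    (hHcont : ContinuousOn H (Ici 0))
    (hHmono : StrictMonoOn H (Ici 0))
    (hH0 : H 0 = 0)
    (hHin : ∀ β > (0:ℝ), H β ∈ Ioo (0:ℝ) 1)
    (ψ : ℝ → ℝ → ℝ)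
    (hψ : ∀ Δ : ℝ, ∀ β ∈ Icc βlo βhi,
      ψ Δ β ∈ Icc βlo βhi ∧
      ∀ x ∈ Icc βlo βhi, x ≠ ψ Δ β →
        |Δ + R (H β) (ψ Δ β) - R (H β) βstar| < |Δ + R (H β) x - R (H β) βstar|) :
    ∃ δ > (0:ℝ), ∃ C > (0:ℝ), ∀ Δ ∈ Ioo (-δ) (0:ℝ),
      ∃ bhat ∈ Ioo βlo βhi, ψ Δ bhat = bhat ∧
        (∀ β' ∈ Icc βlo βhi, ψ Δ β' = β' → β' = bhat) ∧
        Δ + R (H bhat) bhat - R (H bhat) βstar = 0 ∧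
        |bhat - βstar| ≤ C * |Δ| :=
  stmt_2_general βlo βstar βhi hlo hls hsh R hRcont hRβ hRid hRβderiv H hHcont hHmono hHin ψ hψ
end

section
/- Suppose Δ > 0 (society overestimates the agent's ability). Then ψ̃_Δ(β) < β* for every β ∈ [βlo, βhi]; ψ̃_Δ is monotone nondecreasing on [βlo, βhi], and ψ̃_Δ(β₁) < ψ̃_Δ(β₂) whenever βlo ≤ β₁ < β₂ ≤ βhi and ψ̃_Δ(β₁) > βlo. Consequently (Theorem 1, Part B (ii)) every Berk–Nash equilibrium belief β̂ satisfies β̂ < β*. -/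
open Set

theorem stmt_3
    (βlo βstar βhi : ℝ)
    (hlo : 0 < βlo) (hls : βlo < βstar) (hsh : βstar < βhi)
    (R : ℝ → ℝ → ℝ)
    (hRcont : ContinuousOn (fun p : ℝ × ℝ => R p.1 p.2) (Icc (0:ℝ) 1 ×ˢ Ici (0:ℝ)))
    (hR0 : ∀ h ∈ Icc (0:ℝ) 1, R h 0 = 0)
    (hR0' : ∀ β ∈ Ici (0:ℝ), R 0 β = 0)
    (hRβ : ∀ h ∈ Ioc (0:ℝ) 1, StrictMonoOn (fun β => R h β) (Ici 0))
    (hRh : ∀ β > (0:ℝ), StrictMonoOn (fun h => R h β) (Icc 0 1))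
    (hRid : ∀ h₁ h₂ β₁ β₂ : ℝ, 0 ≤ h₁ → h₁ < h₂ → h₂ ≤ 1 → 0 ≤ β₁ → β₁ < β₂ →
      R h₂ β₁ - R h₁ β₁ < R h₂ β₂ - R h₁ β₂)
    (H : ℝ → ℝ)
    (hHcont : ContinuousOn H (Ici 0))
    (hHmono : StrictMonoOn H (Ici 0))
    (hH0 : H 0 = 0)
    (hHin : ∀ β > (0:ℝ), H β ∈ Ioo (0:ℝ) 1)
    (Δ : ℝ) (hΔ : 0 < Δ)
    (ψ : ℝ → ℝ)
    (hψ : ∀ β ∈ Icc βlo βhi,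
      ψ β ∈ Icc βlo βhi ∧
      ∀ x ∈ Icc βlo βhi, x ≠ ψ β →
        |Δ + R (H β) (ψ β) - R (H β) βstar| < |Δ + R (H β) x - R (H β) βstar|) :
    (∀ β ∈ Icc βlo βhi, ψ β < βstar) ∧
    MonotoneOn ψ (Icc βlo βhi) ∧
    (∀ β₁ β₂ : ℝ, βlo ≤ β₁ → β₁ < β₂ → β₂ ≤ βhi → βlo < ψ β₁ → ψ β₁ < ψ β₂) ∧
    (∀ bhat ∈ Icc βlo βhi, ψ bhat = bhat → bhat < βstar) := by
  have hβstar_pos : (0:ℝ) < βstar := hlo.trans hls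
  have hIci : ∀ x : ℝ, βlo ≤ x → x ∈ Ici (0:ℝ) := fun x hx => le_trans hlo.le hx
  have hHmem : ∀ β ∈ Icc βlo βhi, H β ∈ Ioo (0:ℝ) 1 := fun β hβ => hHin β (hlo.trans_le hβ.1)
  have hmono : ∀ β ∈ Icc βlo βhi, StrictMonoOn (fun x => R (H β) x) (Ici 0) := by
    intro β hβ
    exact hRβ (H β) ⟨(hHmem β hβ).1, (hHmem β hβ).2.le⟩
  have hcont : ∀ β ∈ Icc βlo βhi,
      ContinuousOn (fun x : ℝ => Δ + R (H β) x - R (H β) βstar) (Ici 0) := by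
    intro β hβ
    have hc : Continuous (fun x : ℝ => (H β, x)) := continuous_const.prodMk continuous_id
    have h1 : ContinuousOn (fun x : ℝ => R (H β) x) (Ici 0) := by
      have := hRcont.comp hc.continuousOn
        (fun x hx => ⟨⟨(hHmem β hβ).1.le, (hHmem β hβ).2.le⟩, hx⟩)
      exact this
    exact (continuousOn_const.add h1).sub continuousOn_const
  have hmin : ∀ β ∈ Icc βlo βhi, ∀ x ∈ Icc βlo βhi,
      |Δ + R (H β) (ψ β) - R (H β) βstar| ≤ |Δ + R (H β) x - R (H β) βstar| := by
    intro β hβ x hx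
    rcases eq_or_ne x (ψ β) with rfl | hne
    · exact le_rfl
    · exact ((hψ β hβ).2 x hx hne).le
  have hkey1 : ∀ β ∈ Icc βlo βhi, βlo < ψ β → Δ + R (H β) (ψ β) - R (H β) βstar ≤ 0 := by
    intro β hβ hgt
    by_contra hpos
    push_neg at hpos
    have hψm := (hψ β hβ).1
    rcases le_or_gt 0 (Δ + R (H β) βlo - R (H β) βstar) with h0 | h0
    · have hlt : R (H β) βlo < R (H β) (ψ β) :=
        hmono β hβ (hIci βlo le_rfl) (hIci _ hψm.1) hgt
      have hm := hmin β hβ βlo ⟨le_rfl, (hls.trans hsh).le⟩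
      rw [abs_of_nonneg h0, abs_of_pos hpos] at hm
      linarith
    · have hsub : Icc βlo (ψ β) ⊆ Ici (0:ℝ) := fun x hx => hIci x hx.1
      have hconc := (hcont β hβ).mono hsub
      have hmem0 : (0:ℝ) ∈ Icc (Δ + R (H β) βlo - R (H β) βstar)
          (Δ + R (H β) (ψ β) - R (H β) βstar) := ⟨h0.le, hpos.le⟩
      obtain ⟨c, hc, hc0⟩ := intermediate_value_Icc hgt.le hconc hmem0
      have hcmem : c ∈ Icc βlo βhi := ⟨hc.1, hc.2.trans hψm.2⟩
      have hm := hmin β hβ c hcmem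
      have hc0' : Δ + R (H β) c - R (H β) βstar = 0 := hc0
      rw [hc0', abs_zero] at hm
      have habs : |Δ + R (H β) (ψ β) - R (H β) βstar|
          = Δ + R (H β) (ψ β) - R (H β) βstar := abs_of_pos hpos
      linarith
  have hkey2 : ∀ β ∈ Icc βlo βhi, ψ β < βhi → 0 ≤ Δ + R (H β) (ψ β) - R (H β) βstar := by
    intro β hβ hlt
    by_contra hneg
    push_neg at hneg
    have hψm := (hψ β hβ).1
    rcases le_or_gt (Δ + R (H β) βhi - R (H β) βstar) 0 with h0 | h0
    · have hlt2 : R (H β) (ψ β) < R (H β) βhi :=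
        hmono β hβ (hIci _ hψm.1) (hIci βhi (by linarith)) hlt
      have hm := hmin β hβ βhi ⟨by linarith, le_rfl⟩
      rw [abs_of_nonpos h0, abs_of_neg hneg] at hm
      linarith
    · have hsub : Icc (ψ β) βhi ⊆ Ici (0:ℝ) := fun x hx => hIci x (hψm.1.trans hx.1)
      have hconc := (hcont β hβ).mono hsub
      have hmem0 : (0:ℝ) ∈ Icc (Δ + R (H β) (ψ β) - R (H β) βstar)
          (Δ + R (H β) βhi - R (H β) βstar) := ⟨hneg.le, h0.le⟩
      obtain ⟨c, hc, hc0⟩ := intermediate_value_Icc hlt.le hconc hmem0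
      have hcmem : c ∈ Icc βlo βhi := ⟨hψm.1.trans hc.1, hc.2⟩
      have hm := hmin β hβ c hcmem
      have hc0' : Δ + R (H β) c - R (H β) βstar = 0 := hc0
      rw [hc0', abs_zero] at hm
      have habs : |Δ + R (H β) (ψ β) - R (H β) βstar|
          = -(Δ + R (H β) (ψ β) - R (H β) βstar) := abs_of_neg hneg
      linarith
  have part1 : ∀ β ∈ Icc βlo βhi, ψ β < βstar := by
    intro β hβ
    by_contra h
    push_neg at h
    have hψm := (hψ β hβ).1
    have hRle : R (H β) βstar ≤ R (H β) (ψ β) :=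
      (hmono β hβ).monotoneOn (hIci _ hls.le) (hIci _ hψm.1) h
    have hk := hkey1 β hβ (lt_of_lt_of_le hls h)
    linarith
  have hdiff : ∀ β₁ ∈ Icc βlo βhi, ∀ β₂ ∈ Icc βlo βhi, β₁ < β₂ → ∀ x : ℝ, 0 ≤ x → x < βstar →
      Δ + R (H β₂) x - R (H β₂) βstar < Δ + R (H β₁) x - R (H β₁) βstar := by
    intro β₁ h₁ β₂ h₂ h12 x hx hxs
    have hH12 : H β₁ < H β₂ := hHmono (hIci _ h₁.1) (hIci _ h₂.1) h12
    have := hRid (H β₁) (H β₂) x βstar (hHmem β₁ h₁).1.le hH12 (hHmem β₂ h₂).2.le hx hxs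
    linarith
  have mono : MonotoneOn ψ (Icc βlo βhi) := by
    intro β₁ h₁ β₂ h₂ h12
    rcases eq_or_lt_of_le h12 with rfl | hlt
    · exact le_rfl
    by_contra hcon
    push_neg at hcon
    have hψ1 := (hψ β₁ h₁).1
    have hψ2 := (hψ β₂ h₂).1
    have hgt : βlo < ψ β₁ := lt_of_le_of_lt hψ2.1 hcon
    have h1le := hkey1 β₁ h₁ hgt
    have h1ge := hkey2 β₁ h₁ (lt_trans (part1 β₁ h₁) hsh)
    have hmlt : R (H β₁) (ψ β₂) < R (H β₁) (ψ β₁) :=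
      hmono β₁ h₁ (hIci _ hψ2.1) (hIci _ hψ1.1) hcon
    have hd := hdiff β₁ h₁ β₂ h₂ hlt (ψ β₂) (hIci _ hψ2.1) (part1 β₂ h₂)
    have h2ge := hkey2 β₂ h₂ (lt_trans (part1 β₂ h₂) hsh)
    linarith
  have strict : ∀ β₁ β₂ : ℝ, βlo ≤ β₁ → β₁ < β₂ → β₂ ≤ βhi → βlo < ψ β₁ → ψ β₁ < ψ β₂ := by
    intro β₁ β₂ hb1 h12 hb2 hgt
    have h₁ : β₁ ∈ Icc βlo βhi := ⟨hb1, h12.le.trans hb2⟩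
    have h₂ : β₂ ∈ Icc βlo βhi := ⟨hb1.trans h12.le, hb2⟩
    by_contra hcon
    push_neg at hcon
    have hψ1 := (hψ β₁ h₁).1
    have hψ2 := (hψ β₂ h₂).1
    have h1le := hkey1 β₁ h₁ hgt
    have h1ge := hkey2 β₁ h₁ (lt_trans (part1 β₁ h₁) hsh)
    have hmle : R (H β₁) (ψ β₂) ≤ R (H β₁) (ψ β₁) :=
      (hmono β₁ h₁).monotoneOn (hIci _ hψ2.1) (hIci _ hψ1.1) hcon
    have hd := hdiff β₁ h₁ β₂ h₂ h12 (ψ β₂) (hIci _ hψ2.1) (part1 β₂ h₂)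
    have h2ge := hkey2 β₂ h₂ (lt_trans (part1 β₂ h₂) hsh)
    linarith
  exact ⟨part1, mono, strict, fun bhat h hfix => hfix ▸ part1 bhat h⟩
end

section
/- (Theorem 1, Part B (i)) Suppose Δ > 0, every fixed point of ψ̃_Δ is a strict crossing of the diagonal, and, in case βlo is a fixed point, ψ̃_Δ crosses strictly from above at βlo. Then the set of fixed points of ψ̃_Δ in [βlo, βhi] is nonempty and finite and has odd cardinality 2k+1 for some k ≥ 0, and when its elements are listed in decreasing order β̂₁ > β̂₂ > ⋯ > β̂_{2k+1}, ψ̃_Δ crosses the diagonal strictly from above at β̂_j for every odd j and strictly from below at β̂_j for every even j; in particular the largest Berk–Nash equilibrium belief is stable. -/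
open Set

/-- `F` crosses the diagonal strictly from below at `x` (within the interval `[a,b]`). -/
def CrossesFromBelow (F : ℝ → ℝ) (a b x : ℝ) : Prop :=
  ∃ ε > 0, (∀ t ∈ Ioo (x - ε) x ∩ Icc a b, F t < t) ∧
    (∀ t ∈ Ioo x (x + ε) ∩ Icc a b, t < F t)

open Filter Function Topology

/-!
The belief map `ψ` is the unique minimiser of a jointly continuous objective on a compact
square, hence continuous. Since `Δ > 0`, at `βhi` the candidate `β*` beats `βhi` itself, so
`ψ βhi < βhi`, while `βlo ≤ ψ βlo`. Strict crossings make the fixed points isolated, hence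
finitely many in `[βlo, βhi]`. By the intermediate value theorem `ψ - id` has constant sign
between consecutive fixed points, so crossing directions alternate; the largest fixed point
crosses from above because `ψ < id` near `βhi`, and so does the smallest one (by hypothesis
at `βlo`, and otherwise because `ψ ≥ id` at `βlo`). Hence their number is odd.
-/

theorem continuousOn_of_isUniqueMin {α β : Type*} [PseudoMetricSpace α] [PseudoMetricSpace β]
    {s : Set α} {K : Set β} (hs : IsCompact s) (hK : IsCompact K) {Φ : α × β → ℝ}
    (hΦ : ContinuousOn Φ (s ×ˢ K)) {ψ : α → β} (hψK : MapsTo ψ s K)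
    (hmin : ∀ x ∈ s, ∀ y ∈ K, y ≠ ψ x → Φ (x, ψ x) < Φ (x, y)) :
    ContinuousOn ψ s := by
  have hmin_le : ∀ x ∈ s, ∀ y ∈ K, Φ (x, ψ x) ≤ Φ (x, y) := fun x hx y hy =>
    (eq_or_ne y (ψ x)).elim (fun h => h ▸ le_rfl) fun h => (hmin x hx y hy h).le
  have hΦu := Metric.uniformContinuousOn_iff.1 ((hs.prod hK).uniformContinuousOn_of_continuous hΦ)
  intro x₀ hx₀
  refine Metric.tendsto_nhds.2 fun ε hε => ?_
  set C := K \ Metric.ball (ψ x₀) ε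
  rcases C.eq_empty_or_nonempty with hC | hC
  · filter_upwards [self_mem_nhdsWithin] with x hx
    by_contra hfar
    exact hC.subset ⟨hψK hx, hfar⟩
  have hΦC : ContinuousOn (fun y => Φ (x₀, y)) C :=
    hΦ.comp (Continuous.prodMk_right x₀).continuousOn fun y hy => ⟨hx₀, hy.1⟩
  obtain ⟨y₀, hy₀, hy₀min⟩ := (hK.diff Metric.isOpen_ball).exists_isMinOn hC hΦC
  -- Points of `K` outside the ball lose against `ψ x₀` by at least `d` at `x₀`,
  -- so by uniform continuity they still lose against it at every `x` near `x₀`.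
  set d := Φ (x₀, y₀) - Φ (x₀, ψ x₀)
  have hd : 0 < d :=
    sub_pos.2 (hmin x₀ hx₀ y₀ hy₀.1 fun h => hy₀.2 (h ▸ Metric.mem_ball_self hε))
  obtain ⟨δ, hδ, hclose⟩ := hΦu (d / 2) (half_pos hd)
  have hnear : ∀ x ∈ s, dist x x₀ < δ → ∀ y ∈ K, |Φ (x, y) - Φ (x₀, y)| < d / 2 :=
    fun x hx hxδ y hy => by
      rw [← Real.dist_eq]
      exact hclose (x, y) ⟨hx, hy⟩ (x₀, y) ⟨hx₀, hy⟩ (by simpa [Prod.dist_eq] using hxδ)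
  filter_upwards [self_mem_nhdsWithin, nhdsWithin_le_nhds (Metric.ball_mem_nhds x₀ hδ)]
    with x hx hxδ
  by_contra hfar
  have h₁ : Φ (x₀, y₀) ≤ Φ (x₀, ψ x) := hy₀min ⟨hψK hx, hfar⟩
  have h₂ := abs_lt.1 (hnear x hx hxδ (ψ x) (hψK hx))
  have h₃ := abs_lt.1 (hnear x hx hxδ (ψ x₀) (hψK hx₀))
  have h₄ := hmin_le x hx (ψ x₀) (hψK hx₀)
  linarith [h₂.1, h₃.2]

theorem continuousOn_abs_effortGap {R : ℝ → ℝ → ℝ} {H : ℝ → ℝ} {lo hi βstar : ℝ} (Δ : ℝ)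
    (hR : ContinuousOn (fun p : ℝ × ℝ => R p.1 p.2) (Icc (0:ℝ) 1 ×ˢ Ici (0:ℝ)))
    (hH : ContinuousOn H (Ici 0)) (hHmaps : MapsTo H (Icc lo hi) (Icc 0 1))
    (hlo : 0 ≤ lo) (hstar : 0 ≤ βstar) :
    ContinuousOn (fun p : ℝ × ℝ => |Δ + R (H p.1) p.2 - R (H p.1) βstar|)
      (Icc lo hi ×ˢ Icc lo hi) := by
  have hHfst : ContinuousOn (fun p : ℝ × ℝ => H p.1) (Icc lo hi ×ˢ Icc lo hi) :=
    hH.comp continuous_fst.continuousOn fun p hp => hlo.trans hp.1.1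
  have hRβ : ContinuousOn (fun p : ℝ × ℝ => R (H p.1) p.2) (Icc lo hi ×ˢ Icc lo hi) :=
    hR.comp (hHfst.prodMk continuous_snd.continuousOn) fun p hp =>
      ⟨hHmaps hp.1, hlo.trans hp.2.1⟩
  have hRstar : ContinuousOn (fun p : ℝ × ℝ => R (H p.1) βstar) (Icc lo hi ×ˢ Icc lo hi) :=
    hR.comp (hHfst.prodMk continuousOn_const) fun p hp => ⟨hHmaps hp.1, hstar⟩
  exact ((continuousOn_const.add hRβ).sub hRstar).abs

theorem ne_of_isUniqueMin_abs {f : ℝ → ℝ} {s : Set ℝ} {Δ c y z : ℝ} (hΔ : 0 < Δ)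
    (hf : StrictMonoOn f s) (hc : c ∈ s) (hz : z ∈ s) (hcz : c < z)
    (hmin : ∀ x ∈ s, x ≠ y → |Δ + f y - f c| < |Δ + f x - f c|) : y ≠ z := by
  rintro rfl
  have hlt := hmin c hc hcz.ne
  have hfy := hf hc hz hcz
  rw [add_sub_cancel_right, abs_of_pos hΔ, abs_of_pos (by linarith)] at hlt
  linarith

section FixedPointCrossings

variable {F : ℝ → ℝ} {a b x y : ℝ}

theorem exists_fixedPoint_mem_Icc_of_le_of_le (hxy : x ≤ y) (hF : ContinuousOn F (Icc x y))
    (hx : F x ≤ x) (hy : y ≤ F y) : ∃ z ∈ Icc x y, F z = z := by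
  obtain ⟨z, hz, hz0⟩ := intermediate_value_Icc hxy (hF.sub continuousOn_id)
    ⟨sub_nonpos.2 hx, sub_nonneg.2 hy⟩
  exact ⟨z, hz, sub_eq_zero.1 hz0⟩

theorem exists_fixedPoint_mem_Icc_of_le_of_le' (hxy : x ≤ y) (hF : ContinuousOn F (Icc x y))
    (hx : x ≤ F x) (hy : F y ≤ y) : ∃ z ∈ Icc x y, F z = z := by
  obtain ⟨z, hz, hz0⟩ := intermediate_value_Icc' hxy (hF.sub continuousOn_id)
    ⟨sub_nonpos.2 hy, sub_nonneg.2 hx⟩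
  exact ⟨z, hz, sub_eq_zero.1 hz0⟩

namespace CrossesFromAbove

theorem eventually_nhdsGT (h : CrossesFromAbove F a b x) (hax : a ≤ x) (hxb : x < b) :
    ∀ᶠ t in 𝓝[>] x, F t < t := by
  obtain ⟨ε, hε, -, hright⟩ := h
  filter_upwards [Ioo_mem_nhdsGT (lt_add_of_pos_right x hε), Ioc_mem_nhdsGT hxb] with t ht ht'
  exact hright t ⟨ht, hax.trans ht'.1.le, ht'.2⟩

theorem eventually_nhdsLT (h : CrossesFromAbove F a b x) (hax : a < x) (hxb : x ≤ b) :
    ∀ᶠ t in 𝓝[<] x, t < F t := by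
  obtain ⟨ε, hε, hleft, -⟩ := h
  filter_upwards [Ioo_mem_nhdsLT (sub_lt_self x hε), Ico_mem_nhdsLT hax] with t ht ht'
  exact hleft t ⟨ht, ht'.1, ht'.2.le.trans hxb⟩

theorem eventually_nhdsNE (h : CrossesFromAbove F a b x) :
    ∀ᶠ t in 𝓝[≠] x, t ∈ Icc a b → F t ≠ t := by
  obtain ⟨ε, hε, hleft, hright⟩ := h
  rw [← nhdsLT_sup_nhdsGT, eventually_sup]
  constructor
  · filter_upwards [Ioo_mem_nhdsLT (sub_lt_self x hε)] with t ht hab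
    exact (hleft t ⟨ht, hab⟩).ne'
  · filter_upwards [Ioo_mem_nhdsGT (lt_add_of_pos_right x hε)] with t ht hab
    exact (hright t ⟨ht, hab⟩).ne

end CrossesFromAbove

namespace CrossesFromBelow

theorem eventually_nhdsGT (h : CrossesFromBelow F a b x) (hax : a ≤ x) (hxb : x < b) :
    ∀ᶠ t in 𝓝[>] x, t < F t := by
  obtain ⟨ε, hε, -, hright⟩ := h
  filter_upwards [Ioo_mem_nhdsGT (lt_add_of_pos_right x hε), Ioc_mem_nhdsGT hxb] with t ht ht'
  exact hright t ⟨ht, hax.trans ht'.1.le, ht'.2⟩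

theorem eventually_nhdsLT (h : CrossesFromBelow F a b x) (hax : a < x) (hxb : x ≤ b) :
    ∀ᶠ t in 𝓝[<] x, F t < t := by
  obtain ⟨ε, hε, hleft, -⟩ := h
  filter_upwards [Ioo_mem_nhdsLT (sub_lt_self x hε), Ico_mem_nhdsLT hax] with t ht ht'
  exact hleft t ⟨ht, ht'.1, ht'.2.le.trans hxb⟩

theorem eventually_nhdsNE (h : CrossesFromBelow F a b x) :
    ∀ᶠ t in 𝓝[≠] x, t ∈ Icc a b → F t ≠ t := by
  obtain ⟨ε, hε, hleft, hright⟩ := h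
  rw [← nhdsLT_sup_nhdsGT, eventually_sup]
  constructor
  · filter_upwards [Ioo_mem_nhdsLT (sub_lt_self x hε)] with t ht hab
    exact (hleft t ⟨ht, hab⟩).ne
  · filter_upwards [Ioo_mem_nhdsGT (lt_add_of_pos_right x hε)] with t ht hab
    exact (hright t ⟨ht, hab⟩).ne'

theorem exists_fixedPoint_gt (h : CrossesFromBelow F a b x) (hF : ContinuousOn F (Icc a b))
    (hax : a ≤ x) (hxb : x < b) (hb : F b ≤ b) : ∃ z ∈ Ioc x b, F z = z := by
  obtain ⟨u, hFu, hu⟩ := ((h.eventually_nhdsGT hax hxb).and (Ioc_mem_nhdsGT hxb)).exists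
  obtain ⟨z, hz, hFz⟩ := exists_fixedPoint_mem_Icc_of_le_of_le' hu.2
    (hF.mono (Icc_subset_Icc (hax.trans hu.1.le) le_rfl)) hFu.le hb
  exact ⟨z, ⟨hu.1.trans_le hz.1, hz.2⟩, hFz⟩

theorem exists_fixedPoint_lt (h : CrossesFromBelow F a b x) (hF : ContinuousOn F (Icc a b))
    (hax : a < x) (hxb : x ≤ b) (ha : a ≤ F a) : ∃ z ∈ Ico a x, F z = z := by
  obtain ⟨u, hFu, hu⟩ := ((h.eventually_nhdsLT hax hxb).and (Ico_mem_nhdsLT hax)).exists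
  obtain ⟨z, hz, hFz⟩ := exists_fixedPoint_mem_Icc_of_le_of_le' hu.1
    (hF.mono (Icc_subset_Icc le_rfl (hu.2.le.trans hxb))) ha hFu.le
  exact ⟨z, ⟨hz.1, hz.2.trans_lt hu.2⟩, hFz⟩

end CrossesFromBelow

theorem CrossesFromAbove.not_crossesFromBelow (h : CrossesFromAbove F a b x) (hax : a ≤ x)
    (hxb : x < b) : ¬CrossesFromBelow F a b x := fun h' =>
  let ⟨_, ht, ht'⟩ := ((h.eventually_nhdsGT hax hxb).and (h'.eventually_nhdsGT hax hxb)).exists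
  ht.not_gt ht'

theorem exists_fixedPoint_mem_Ioo_of_crossesFromAbove (hF : ContinuousOn F (Icc a b))
    (hay : a ≤ y) (hyx : y < x) (hxb : x ≤ b)
    (hy : CrossesFromAbove F a b y) (hx : CrossesFromAbove F a b x) :
    ∃ z ∈ Ioo y x, F z = z := by
  obtain ⟨u, hFu, hu⟩ :=
    ((hy.eventually_nhdsGT hay (hyx.trans_le hxb)).and (Ioo_mem_nhdsGT hyx)).exists
  obtain ⟨v, hFv, hv⟩ :=
    ((hx.eventually_nhdsLT (hay.trans_lt hyx) hxb).and (Ioo_mem_nhdsLT hu.2)).exists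
  obtain ⟨z, hz, hFz⟩ := exists_fixedPoint_mem_Icc_of_le_of_le hv.1.le
    (hF.mono (Icc_subset_Icc (hay.trans hu.1.le) (hv.2.le.trans hxb))) hFu.le hFv.le
  exact ⟨z, ⟨hu.1.trans_le hz.1, hz.2.trans_lt hv.2⟩, hFz⟩

theorem exists_fixedPoint_mem_Ioo_of_crossesFromBelow (hF : ContinuousOn F (Icc a b))
    (hay : a ≤ y) (hyx : y < x) (hxb : x ≤ b)
    (hy : CrossesFromBelow F a b y) (hx : CrossesFromBelow F a b x) :
    ∃ z ∈ Ioo y x, F z = z := by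
  obtain ⟨u, hFu, hu⟩ :=
    ((hy.eventually_nhdsGT hay (hyx.trans_le hxb)).and (Ioo_mem_nhdsGT hyx)).exists
  obtain ⟨v, hFv, hv⟩ :=
    ((hx.eventually_nhdsLT (hay.trans_lt hyx) hxb).and (Ioo_mem_nhdsLT hu.2)).exists
  obtain ⟨z, hz, hFz⟩ := exists_fixedPoint_mem_Icc_of_le_of_le' hv.1.le
    (hF.mono (Icc_subset_Icc (hay.trans hu.1.le) (hv.2.le.trans hxb))) hFu.le hFv.le
  exact ⟨z, ⟨hu.1.trans_le hz.1, hz.2.trans_lt hv.2⟩, hFz⟩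

theorem CrossesFromAbove.crossesFromBelow_of_consecutive (hx : CrossesFromAbove F a b x)
    (hy : CrossesFromAbove F a b y ∨ CrossesFromBelow F a b y) (hF : ContinuousOn F (Icc a b))
    (hay : a ≤ y) (hyx : y < x) (hxb : x ≤ b) (hgap : ∀ z ∈ Ioo y x, F z ≠ z) :
    CrossesFromBelow F a b y :=
  hy.resolve_left fun hy =>
    let ⟨z, hz, hFz⟩ := exists_fixedPoint_mem_Ioo_of_crossesFromAbove hF hay hyx hxb hy hx
    hgap z hz hFz

theorem CrossesFromBelow.crossesFromAbove_of_consecutive (hx : CrossesFromBelow F a b x)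
    (hy : CrossesFromAbove F a b y ∨ CrossesFromBelow F a b y) (hF : ContinuousOn F (Icc a b))
    (hay : a ≤ y) (hyx : y < x) (hxb : x ≤ b) (hgap : ∀ z ∈ Ioo y x, F z ≠ z) :
    CrossesFromAbove F a b y :=
  hy.resolve_right fun hy =>
    let ⟨z, hz, hFz⟩ := exists_fixedPoint_mem_Ioo_of_crossesFromBelow hF hay hyx hxb hy hx
    hgap z hz hFz

theorem crossesFromAbove_of_isGreatest (hF : ContinuousOn F (Icc a b)) (hb : F b < b)
    (hcross : ∀ x ∈ Icc a b ∩ fixedPoints F, CrossesFromAbove F a b x ∨ CrossesFromBelow F a b x)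
    (hx : IsGreatest (Icc a b ∩ fixedPoints F) x) : CrossesFromAbove F a b x := by
  have hxb : x < b := hx.1.1.2.lt_of_ne fun h => hb.ne (h ▸ hx.1.2)
  refine (hcross x hx.1).resolve_right fun hbelow => ?_
  obtain ⟨z, hz, hFz⟩ := hbelow.exists_fixedPoint_gt hF hx.1.1.1 hxb hb.le
  exact (hx.2 ⟨⟨hx.1.1.1.trans hz.1.le, hz.2⟩, hFz⟩).not_gt hz.1

theorem crossesFromAbove_of_isLeast (hF : ContinuousOn F (Icc a b)) (ha : a ≤ F a)
    (hcross : ∀ x ∈ Icc a b ∩ fixedPoints F, CrossesFromAbove F a b x ∨ CrossesFromBelow F a b x)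
    (hlo : F a = a → CrossesFromAbove F a b a)
    (hx : IsLeast (Icc a b ∩ fixedPoints F) x) : CrossesFromAbove F a b x := by
  rcases hx.1.1.1.eq_or_lt with rfl | hax
  · exact hlo hx.1.2
  refine (hcross x hx.1).resolve_right fun hbelow => ?_
  obtain ⟨z, hz, hFz⟩ := hbelow.exists_fixedPoint_lt hF hax hx.1.1.2 ha
  exact (hx.2 ⟨⟨hz.1, hz.2.le.trans hx.1.1.2⟩, hFz⟩).not_gt hz.2

theorem finite_fixedPoints_of_crossing (hF : ContinuousOn F (Icc a b))
    (hcross : ∀ x ∈ Icc a b ∩ fixedPoints F, CrossesFromAbove F a b x ∨ CrossesFromBelow F a b x) :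
    (Icc a b ∩ fixedPoints F).Finite := by
  have hclosed : IsClosed (Icc a b ∩ fixedPoints F) := isClosed_Icc.isClosed_eq hF continuousOn_id
  refine (isCompact_Icc.of_isClosed_subset hclosed inter_subset_left).finite
    (isDiscrete_iff_nhdsNE.2 fun x hx => inf_principal_eq_bot.2 ?_)
  have hisolated : ∀ᶠ t in 𝓝[≠] x, t ∈ Icc a b → F t ≠ t :=
    (hcross x hx).elim (·.eventually_nhdsNE) (·.eventually_nhdsNE)
  filter_upwards [hisolated] with t ht hts
  exact ht hts.1 hts.2

theorem Set.Finite.exists_strictAnti_range_eq {α : Type*} [LinearOrder α] {s : Set α}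
    (hs : s.Finite) : ∃ n, ∃ l : Fin n → α, StrictAnti l ∧ range l = s :=
  ⟨_, hs.toFinset.orderEmbOfFin rfl ∘ Fin.rev,
    (OrderEmbedding.strictMono _).comp_strictAnti Fin.rev_strictAnti, by
      rw [Fin.rev_surjective.range_comp, Finset.range_orderEmbOfFin, hs.coe_toFinset]⟩

theorem StrictAnti.apply_notMem_Ioo_succ {α : Type*} [Preorder α] {m : ℕ} {l : Fin (m + 1) → α}
    (hl : StrictAnti l) (i : Fin m) (k : Fin (m + 1)) : l k ∉ Ioo (l i.succ) (l i.castSucc) :=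
  fun ⟨h₁, h₂⟩ => by
    rw [hl.lt_iff_gt] at h₁ h₂
    exact (Fin.castSucc_lt_iff_succ_le.1 h₂).not_gt h₁

theorem crosses_of_strictAnti_range_eq {m : ℕ} {l : Fin (m + 1) → ℝ} (hl : StrictAnti l)
    (hrange : range l = Icc a b ∩ fixedPoints F) (hF : ContinuousOn F (Icc a b)) (hb : F b < b)
    (hcross : ∀ x ∈ Icc a b ∩ fixedPoints F, CrossesFromAbove F a b x ∨ CrossesFromBelow F a b x)
    (j : Fin (m + 1)) :
    (Even (j : ℕ) → CrossesFromAbove F a b (l j)) ∧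
      (¬Even (j : ℕ) → CrossesFromBelow F a b (l j)) := by
  have hmem : ∀ i, l i ∈ Icc a b ∩ fixedPoints F := fun i => hrange ▸ mem_range_self i
  have hgap : ∀ i : Fin m, ∀ z ∈ Ioo (l i.succ) (l i.castSucc), F z ≠ z := fun i z hz hFz => by
    obtain ⟨k, rfl⟩ : z ∈ range l := hrange ▸
      ⟨⟨(hmem i.succ).1.1.trans hz.1.le, hz.2.le.trans (hmem i.castSucc).1.2⟩, hFz⟩
    exact hl.apply_notMem_Ioo_succ i k hz
  induction j using Fin.induction with
  | zero =>
    refine ⟨fun _ => crossesFromAbove_of_isGreatest hF hb hcross ?_, fun h => absurd Even.zero h⟩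
    rw [← hrange]
    exact ⟨mem_range_self 0, forall_mem_range.2 fun i => hl.antitone (Fin.zero_le i)⟩
  | succ i ih =>
    rw [Fin.val_castSucc] at ih
    rw [Fin.val_succ, Nat.even_add_one, not_not]
    have hyx : l i.succ < l i.castSucc := hl i.castSucc_lt_succ
    exact ⟨fun hodd => (ih.2 hodd).crossesFromAbove_of_consecutive (hcross _ (hmem _)) hF
        (hmem _).1.1 hyx (hmem _).1.2 (hgap i),
      fun heven => (ih.1 heven).crossesFromBelow_of_consecutive (hcross _ (hmem _)) hF
        (hmem _).1.1 hyx (hmem _).1.2 (hgap i)⟩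

theorem exists_strictAnti_fixedPoints_alternating (hab : a ≤ b) (hF : ContinuousOn F (Icc a b))
    (ha : a ≤ F a) (hb : F b < b)
    (hcross : ∀ x ∈ Icc a b ∩ fixedPoints F, CrossesFromAbove F a b x ∨ CrossesFromBelow F a b x)
    (hlo : F a = a → CrossesFromAbove F a b a) :
    ∃ k : ℕ, ∃ l : Fin (2 * k + 1) → ℝ, StrictAnti l ∧ Icc a b ∩ fixedPoints F = range l ∧
      ∀ j : Fin (2 * k + 1),
        (Even (j : ℕ) → CrossesFromAbove F a b (l j)) ∧
        (¬Even (j : ℕ) → CrossesFromBelow F a b (l j)) := by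
  obtain ⟨n, l, hl, hrange⟩ := (finite_fixedPoints_of_crossing hF hcross).exists_strictAnti_range_eq
  obtain ⟨z, hz, hFz⟩ := exists_fixedPoint_mem_Icc_of_le_of_le' hab hF ha hb.le
  obtain ⟨i, -⟩ : z ∈ range l := hrange ▸ ⟨hz, hFz⟩
  obtain ⟨m, rfl⟩ := Nat.exists_eq_add_one.2 i.pos
  have halt := crosses_of_strictAnti_range_eq hl hrange hF hb hcross
  have hlast : CrossesFromAbove F a b (l (Fin.last m)) := by
    refine crossesFromAbove_of_isLeast hF ha hcross hlo ?_
    rw [← hrange]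
    exact ⟨mem_range_self _, forall_mem_range.2 fun i => hl.antitone (Fin.le_last i)⟩
  have heven : Even m := by
    by_contra hodd
    have hmem : l (Fin.last m) ∈ Icc a b ∩ fixedPoints F := hrange ▸ mem_range_self _
    have hlt : l (Fin.last m) < b := hmem.1.2.lt_of_ne fun h => hb.ne (h ▸ hmem.2)
    exact hlast.not_crossesFromBelow hmem.1.1 hlt ((halt _).2 (by simpa using hodd))
  obtain ⟨k, rfl⟩ := heven.two_dvd
  exact ⟨k, l, hl, hrange.symm, halt⟩

end FixedPointCrossings

theorem stmt_4_general
    (βlo βstar βhi : ℝ)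
    (hlo : 0 < βlo) (hls : βlo < βstar) (hsh : βstar < βhi)
    (R : ℝ → ℝ → ℝ)
    (hRcont : ContinuousOn (fun p : ℝ × ℝ => R p.1 p.2) (Icc (0:ℝ) 1 ×ˢ Ici (0:ℝ)))
    (hRβ : ∀ h ∈ Ioc (0:ℝ) 1, StrictMonoOn (fun β => R h β) (Ici 0))
    (H : ℝ → ℝ)
    (hHcont : ContinuousOn H (Ici 0))
    (hHin : ∀ β > (0:ℝ), H β ∈ Ioo (0:ℝ) 1)
    (Δ : ℝ) (hΔ : 0 < Δ)
    (ψ : ℝ → ℝ)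
    (hψ : ∀ β ∈ Icc βlo βhi,
      ψ β ∈ Icc βlo βhi ∧
      ∀ x ∈ Icc βlo βhi, x ≠ ψ β →
        |Δ + R (H β) (ψ β) - R (H β) βstar| < |Δ + R (H β) x - R (H β) βstar|)
    -- every fixed point of ψ is a strict crossing of the diagonal
    (hcross : ∀ bhat ∈ Icc βlo βhi, ψ bhat = bhat →
      CrossesFromAbove ψ βlo βhi bhat ∨ CrossesFromBelow ψ βlo βhi bhat)
    -- if βlo is a fixed point, ψ crosses strictly from above there
    (hlofix : ψ βlo = βlo → CrossesFromAbove ψ βlo βhi βlo) :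
    ∃ k : ℕ, ∃ l : Fin (2 * k + 1) → ℝ,
      StrictAnti l ∧
      {β : ℝ | β ∈ Icc βlo βhi ∧ ψ β = β} = Set.range l ∧
      ∀ j : Fin (2 * k + 1),
        (Even (j : ℕ) → CrossesFromAbove ψ βlo βhi (l j)) ∧
        (¬ Even (j : ℕ) → CrossesFromBelow ψ βlo βhi (l j)) := by
  have hle : βlo ≤ βhi := hls.le.trans hsh.le
  have hhi : βhi ∈ Icc βlo βhi := ⟨hle, le_rfl⟩
  have hHmaps : MapsTo H (Icc βlo βhi) (Icc 0 1) := fun β hβ =>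
    Ioo_subset_Icc_self (hHin β (hlo.trans_le hβ.1))
  have hψc : ContinuousOn ψ (Icc βlo βhi) :=
    continuousOn_of_isUniqueMin isCompact_Icc isCompact_Icc
      (continuousOn_abs_effortGap Δ hRcont hHcont hHmaps hlo.le (hlo.trans hls).le)
      (fun β hβ => (hψ β hβ).1) fun β hβ => (hψ β hβ).2
  have hRhi : StrictMonoOn (fun β => R (H βhi) β) (Icc βlo βhi) :=
    (hRβ (H βhi) (Ioo_subset_Ioc_self (hHin βhi (hlo.trans_le hle)))).mono
      fun _ hx => hlo.le.trans hx.1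
  have hψhi : ψ βhi < βhi := (hψ βhi hhi).1.2.lt_of_ne <|
    ne_of_isUniqueMin_abs hΔ hRhi ⟨hls.le, hsh.le⟩ hhi hsh (hψ βhi hhi).2
  exact exists_strictAnti_fixedPoints_alternating hle hψc (hψ βlo ⟨le_rfl, hle⟩).1.1 hψhi
    (fun x hx => hcross x hx.1 hx.2) hlofix

theorem stmt_4
    (βlo βstar βhi : ℝ)
    (hlo : 0 < βlo) (hls : βlo < βstar) (hsh : βstar < βhi)
    (R : ℝ → ℝ → ℝ)
    (hRcont : ContinuousOn (fun p : ℝ × ℝ => R p.1 p.2) (Icc (0:ℝ) 1 ×ˢ Ici (0:ℝ)))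
    (hR0 : ∀ h ∈ Icc (0:ℝ) 1, R h 0 = 0)
    (hR0' : ∀ β ∈ Ici (0:ℝ), R 0 β = 0)
    (hRβ : ∀ h ∈ Ioc (0:ℝ) 1, StrictMonoOn (fun β => R h β) (Ici 0))
    (hRh : ∀ β > (0:ℝ), StrictMonoOn (fun h => R h β) (Icc 0 1))
    (hRid : ∀ h₁ h₂ β₁ β₂ : ℝ, 0 ≤ h₁ → h₁ < h₂ → h₂ ≤ 1 → 0 ≤ β₁ → β₁ < β₂ →
      R h₂ β₁ - R h₁ β₁ < R h₂ β₂ - R h₁ β₂)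
    (H : ℝ → ℝ)
    (hHcont : ContinuousOn H (Ici 0))
    (hHmono : StrictMonoOn H (Ici 0))
    (hH0 : H 0 = 0)
    (hHin : ∀ β > (0:ℝ), H β ∈ Ioo (0:ℝ) 1)
    (Δ : ℝ) (hΔ : 0 < Δ)
    (ψ : ℝ → ℝ)
    (hψ : ∀ β ∈ Icc βlo βhi,
      ψ β ∈ Icc βlo βhi ∧
      ∀ x ∈ Icc βlo βhi, x ≠ ψ β →
        |Δ + R (H β) (ψ β) - R (H β) βstar| < |Δ + R (H β) x - R (H β) βstar|)
    -- every fixed point of ψ is a strict crossing of the diagonal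
    (hcross : ∀ bhat ∈ Icc βlo βhi, ψ bhat = bhat →
      CrossesFromAbove ψ βlo βhi bhat ∨ CrossesFromBelow ψ βlo βhi bhat)
    -- if βlo is a fixed point, ψ crosses strictly from above there
    (hlofix : ψ βlo = βlo → CrossesFromAbove ψ βlo βhi βlo) :
    ∃ k : ℕ, ∃ l : Fin (2 * k + 1) → ℝ,
      StrictAnti l ∧
      {β : ℝ | β ∈ Icc βlo βhi ∧ ψ β = β} = Set.range l ∧
      ∀ j : Fin (2 * k + 1),
        (Even (j : ℕ) → CrossesFromAbove ψ βlo βhi (l j)) ∧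
        (¬ Even (j : ℕ) → CrossesFromBelow ψ βlo βhi (l j)) :=
  stmt_4_general βlo βstar βhi hlo hls hsh R hRcont hRβ H hHcont hHin Δ hΔ ψ hψ hcross hlofix
end

section
/- (Theorem 1, Part B (iii): belief cascade) For every Δ > 0 there exists β₀ ∈ (0, β*) such that for every lower bound b ∈ (0, β₀): b is a fixed point of ψ̃_Δ^{[b,βhi]} (so b is a Berk–Nash equilibrium belief when the belief space is [b, βhi]), and Δ + R(h(b), b) − R(h(b), β*) > 0, so this equilibrium is not self-confirming. -/
/-! As `b → 0⁺`, `R (H b) β* → R 0 β* = 0`, so for small `b` the gap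
`Δ + R (H b) x - R (H b) β*` is already positive at `x = b`. Being increasing in `x`, its
absolute value is minimized over `[b, βhi]` exactly at the left endpoint `b`, which is therefore
a fixed point of the belief map, with nonzero gap. -/

open Set Filter Topology

theorem Filter.Eventually.exists_mem_Ioo_forall_mem_Ioo {α : Type*} [LinearOrder α]
    [TopologicalSpace α] [OrderTopology α] [DenselyOrdered α] {a c : α} {P : α → Prop}
    (hP : ∀ᶠ x in 𝓝[>] a, P x) (hac : a < c) : ∃ u ∈ Ioo a c, ∀ x ∈ Ioo a u, P x := by
  obtain ⟨c', hac', hc'c⟩ := exists_between hac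
  obtain ⟨u, hu, hsub⟩ := (mem_nhdsGT_iff_exists_mem_Ioc_Ioo_subset hac').1 hP
  exact ⟨u, ⟨hu.1, hu.2.trans_lt hc'c⟩, hsub⟩

theorem eq_of_isLeast_of_forall_abs_lt {s : Set ℝ} {f : ℝ → ℝ} {a p : ℝ}
    (hf : MonotoneOn f s) (ha : IsLeast s a) (hfa : 0 < f a) (hp : p ∈ s)
    (hmin : ∀ x ∈ s, x ≠ p → |f p| < |f x|) : p = a := by
  by_contra hne
  have hfap : f a ≤ f p := hf ha.1 hp (ha.2 hp)
  have hlt := hmin a ha.1 (Ne.symm hne)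
  rw [abs_of_pos (hfa.trans_le hfap), abs_of_pos hfa] at hlt
  linarith

theorem tendsto_apply_comp_nhdsGT_zero {R : ℝ → ℝ → ℝ} {H : ℝ → ℝ} {c : ℝ} (hc : 0 ≤ c)
    (hRcont : ContinuousOn (fun p : ℝ × ℝ => R p.1 p.2) (Icc (0:ℝ) 1 ×ˢ Ici (0:ℝ)))
    (hR0' : ∀ β ∈ Ici (0:ℝ), R 0 β = 0)
    (hHcont : ContinuousOn H (Ici 0)) (hH0 : H 0 = 0)
    (hHin : ∀ β > (0:ℝ), H β ∈ Ioo (0:ℝ) 1) :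
    Tendsto (fun b => R (H b) c) (𝓝[>] 0) (𝓝 0) := by
  have hmaps : MapsTo (fun b => (H b, c)) (Ici (0:ℝ)) (Icc (0:ℝ) 1 ×ˢ Ici (0:ℝ)) := by
    intro b hb
    rcases (mem_Ici.1 hb).eq_or_lt with rfl | hb
    · simp [hH0, hc]
    · exact ⟨Ioo_subset_Icc_self (hHin b hb), hc⟩
  have hcont : ContinuousWithinAt (fun b => R (H b) c) (Ici 0) 0 :=
    (hRcont.comp (hHcont.prodMk continuousOn_const) hmaps) 0 self_mem_Ici
  rw [ContinuousWithinAt, hH0, hR0' c hc] at hcont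
  exact hcont.mono_left (nhdsWithin_mono _ Ioi_subset_Ici_self)

theorem stmt_5_general
    (βstar βhi : ℝ)
    (hs : 0 < βstar) (hsh : βstar < βhi)
    (R : ℝ → ℝ → ℝ)
    (hRcont : ContinuousOn (fun p : ℝ × ℝ => R p.1 p.2) (Icc (0:ℝ) 1 ×ˢ Ici (0:ℝ)))
    (hR0 : ∀ h ∈ Icc (0:ℝ) 1, R h 0 = 0)
    (hR0' : ∀ β ∈ Ici (0:ℝ), R 0 β = 0)
    (hRβ : ∀ h ∈ Ioc (0:ℝ) 1, StrictMonoOn (fun β => R h β) (Ici 0))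
    (H : ℝ → ℝ)
    (hHcont : ContinuousOn H (Ici 0))
    (hH0 : H 0 = 0)
    (hHin : ∀ β > (0:ℝ), H β ∈ Ioo (0:ℝ) 1)
    -- ψ Δ b is the Berk--Nash belief map when the belief space is [b, βhi]
    (ψ : ℝ → ℝ → ℝ → ℝ)
    (hψ : ∀ Δ : ℝ, ∀ b ∈ Ioo (0:ℝ) βstar, ∀ β ∈ Icc b βhi,
      ψ Δ b β ∈ Icc b βhi ∧
      ∀ x ∈ Icc b βhi, x ≠ ψ Δ b β →
        |Δ + R (H β) (ψ Δ b β) - R (H β) βstar| < |Δ + R (H β) x - R (H β) βstar|) :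
    ∀ Δ > (0:ℝ), ∃ β₀ ∈ Ioo (0:ℝ) βstar, ∀ b ∈ Ioo (0:ℝ) β₀,
      ψ Δ b b = b ∧ 0 < Δ + R (H b) b - R (H b) βstar := by
  intro Δ hΔ
  have hsmall : ∀ᶠ b in 𝓝[>] 0, R (H b) βstar < Δ :=
    (tendsto_apply_comp_nhdsGT_zero hs.le hRcont hR0' hHcont hH0 hHin).eventually
      (eventually_lt_nhds hΔ)
  obtain ⟨β₀, hβ₀, hsmall_on⟩ := hsmall.exists_mem_Ioo_forall_mem_Ioo hs
  refine ⟨β₀, hβ₀, fun b hb => ?_⟩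
  have hHb : H b ∈ Icc 0 1 := Ioo_subset_Icc_self (hHin b hb.1)
  have hmono : StrictMonoOn (fun x => R (H b) x) (Ici 0) := hRβ (H b) ⟨(hHin b hb.1).1, hHb.2⟩
  have hRbb : 0 ≤ R (H b) b := hR0 (H b) hHb ▸ hmono.monotoneOn self_mem_Ici hb.1.le hb.1.le
  have hgap : 0 < Δ + R (H b) b - R (H b) βstar := by linarith [hsmall_on b hb]
  have hgap_mono : MonotoneOn (fun x => Δ + R (H b) x - R (H b) βstar) (Icc b βhi) :=
    fun x hx y hy hxy => by
      linarith [hmono.monotoneOn (hb.1.le.trans hx.1) (hb.1.le.trans hy.1) hxy]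
  have hbIcc : b ∈ Icc b βhi := left_mem_Icc.2 (by linarith [hb.2, hβ₀.2])
  obtain ⟨hmem, hmin⟩ := hψ Δ b ⟨hb.1, hb.2.trans hβ₀.2⟩ b hbIcc
  exact ⟨eq_of_isLeast_of_forall_abs_lt hgap_mono ⟨hbIcc, fun x hx => hx.1⟩ hgap hmem hmin, hgap⟩

theorem stmt_5
    (βstar βhi : ℝ)
    (hs : 0 < βstar) (hsh : βstar < βhi)
    (R : ℝ → ℝ → ℝ)
    (hRcont : ContinuousOn (fun p : ℝ × ℝ => R p.1 p.2) (Icc (0:ℝ) 1 ×ˢ Ici (0:ℝ)))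
    (hR0 : ∀ h ∈ Icc (0:ℝ) 1, R h 0 = 0)
    (hR0' : ∀ β ∈ Ici (0:ℝ), R 0 β = 0)
    (hRβ : ∀ h ∈ Ioc (0:ℝ) 1, StrictMonoOn (fun β => R h β) (Ici 0))
    (hRh : ∀ β > (0:ℝ), StrictMonoOn (fun h => R h β) (Icc 0 1))
    (hRid : ∀ h₁ h₂ β₁ β₂ : ℝ, 0 ≤ h₁ → h₁ < h₂ → h₂ ≤ 1 → 0 ≤ β₁ → β₁ < β₂ →
      R h₂ β₁ - R h₁ β₁ < R h₂ β₂ - R h₁ β₂)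
    (H : ℝ → ℝ)
    (hHcont : ContinuousOn H (Ici 0))
    (hHmono : StrictMonoOn H (Ici 0))
    (hH0 : H 0 = 0)
    (hHin : ∀ β > (0:ℝ), H β ∈ Ioo (0:ℝ) 1)
    -- ψ Δ b is the Berk--Nash belief map when the belief space is [b, βhi]
    (ψ : ℝ → ℝ → ℝ → ℝ)
    (hψ : ∀ Δ : ℝ, ∀ b ∈ Ioo (0:ℝ) βstar, ∀ β ∈ Icc b βhi,
      ψ Δ b β ∈ Icc b βhi ∧
      ∀ x ∈ Icc b βhi, x ≠ ψ Δ b β →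
        |Δ + R (H β) (ψ Δ b β) - R (H β) βstar| < |Δ + R (H β) x - R (H β) βstar|) :
    ∀ Δ > (0:ℝ), ∃ β₀ ∈ Ioo (0:ℝ) βstar, ∀ b ∈ Ioo (0:ℝ) β₀,
      ψ Δ b b = b ∧ 0 < Δ + R (H b) b - R (H b) βstar :=
  stmt_5_general βstar βhi hs hsh R hRcont hR0 hR0' hRβ H hHcont hH0 hHin ψ hψ
end

section
/- For every β ∈ [βlo, βhi], the map Δ ↦ ψ̃_Δ(β) is antitone: if Δ < Δ′ then ψ̃_{Δ′}(β) ≤ ψ̃_Δ(β), with strict inequality whenever ψ̃_Δ(β) ∈ (βlo, βhi). (Increasing the overestimation of ability lowers the best-fitting belief about effort productivity pointwise; this is the pointwise mechanism behind Theorem 2 (i).) -/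
open Set Filter Topology

lemma key_interior_zero (f : ℝ → ℝ) (βlo βhi a c Δ : ℝ) (hlo : 0 < βlo)
    (hcont : ContinuousAt f a) (hmono : StrictMonoOn f (Ici 0))
    (ha : a ∈ Ioo βlo βhi)
    (hmin : ∀ x ∈ Icc βlo βhi, x ≠ a → |Δ + f a - c| < |Δ + f x - c|) :
    Δ + f a - c = 0 := by
  by_contra hu
  have hga : ContinuousAt (fun x => Δ + f x - c) a :=
    (continuousAt_const.add hcont).sub continuousAt_const
  rcases lt_or_gt_of_ne hu with hneg | hpos
  · -- g a < 0, find x > a with g x < 0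
    have h1 : ∀ᶠ x in 𝓝 a, Δ + f x - c < 0 := hga.eventually (eventually_lt_nhds hneg)
    have h2 : ∀ᶠ x in 𝓝[>] a, x ∈ Ioo a βhi := Ioo_mem_nhdsGT_of_mem ⟨le_refl a, ha.2⟩
    obtain ⟨x, hx1, hx2⟩ := ((h1.filter_mono nhdsWithin_le_nhds).and h2).exists
    have hax : a < x := hx2.1
    have hfx : f a < f x := hmono (hlo.trans ha.1).le (hlo.trans (ha.1.trans hax)).le hax
    have := hmin x ⟨(ha.1.trans hax).le, hx2.2.le⟩ (ne_of_gt hax)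
    rw [abs_of_neg hneg, abs_of_neg hx1] at this
    linarith
  · -- g a > 0, find x < a with g x > 0
    have h1 : ∀ᶠ x in 𝓝 a, 0 < Δ + f x - c := hga.eventually (eventually_gt_nhds hpos)
    have h2 : ∀ᶠ x in 𝓝[<] a, x ∈ Ioo βlo a := Ioo_mem_nhdsLT_of_mem ⟨ha.1, le_refl a⟩
    obtain ⟨x, hx1, hx2⟩ := ((h1.filter_mono nhdsWithin_le_nhds).and h2).exists
    have hxa : x < a := hx2.2
    have hfx : f x < f a := hmono (hlo.trans hx2.1).le (hlo.trans ha.1).le hxa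
    have := hmin x ⟨hx2.1.le, (hxa.trans ha.2).le⟩ (ne_of_lt hxa)
    rw [abs_of_pos hpos, abs_of_pos hx1] at this
    linarith

theorem stmt_6
    (βlo βstar βhi : ℝ)
    (hlo : 0 < βlo) (hls : βlo < βstar) (hsh : βstar < βhi)
    (R : ℝ → ℝ → ℝ)
    (hRcont : ContinuousOn (fun p : ℝ × ℝ => R p.1 p.2) (Icc (0:ℝ) 1 ×ˢ Ici (0:ℝ)))
    (hR0 : ∀ h ∈ Icc (0:ℝ) 1, R h 0 = 0)
    (hR0' : ∀ β ∈ Ici (0:ℝ), R 0 β = 0)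
    (hRβ : ∀ h ∈ Ioc (0:ℝ) 1, StrictMonoOn (fun β => R h β) (Ici 0))
    (hRh : ∀ β > (0:ℝ), StrictMonoOn (fun h => R h β) (Icc 0 1))
    (hRid : ∀ h₁ h₂ β₁ β₂ : ℝ, 0 ≤ h₁ → h₁ < h₂ → h₂ ≤ 1 → 0 ≤ β₁ → β₁ < β₂ →
      R h₂ β₁ - R h₁ β₁ < R h₂ β₂ - R h₁ β₂)
    (H : ℝ → ℝ)
    (hHcont : ContinuousOn H (Ici 0))
    (hHmono : StrictMonoOn H (Ici 0))
    (hH0 : H 0 = 0)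
    (hHin : ∀ β > (0:ℝ), H β ∈ Ioo (0:ℝ) 1)
    (ψ : ℝ → ℝ → ℝ)
    (hψ : ∀ Δ : ℝ, ∀ β ∈ Icc βlo βhi,
      ψ Δ β ∈ Icc βlo βhi ∧
      ∀ x ∈ Icc βlo βhi, x ≠ ψ Δ β →
        |Δ + R (H β) (ψ Δ β) - R (H β) βstar| < |Δ + R (H β) x - R (H β) βstar|) :
    ∀ β ∈ Icc βlo βhi, ∀ Δ Δ' : ℝ, Δ < Δ' →
      ψ Δ' β ≤ ψ Δ β ∧ (ψ Δ β ∈ Ioo βlo βhi → ψ Δ' β < ψ Δ β) := by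
  intro β hβ Δ Δ' hΔ
  have hβpos : 0 < β := hlo.trans_le hβ.1
  have hH := hHin β hβpos
  obtain ⟨ha, hamin⟩ := hψ Δ β hβ
  obtain ⟨hb, hbmin⟩ := hψ Δ' β hβ
  set a := ψ Δ β with hadef
  set b := ψ Δ' β with hbdef
  set f : ℝ → ℝ := fun x => R (H β) x with hfdef
  set c := R (H β) βstar with hcdef
  have hfmono : StrictMonoOn f (Ici 0) := hRβ (H β) ⟨hH.1, hH.2.le⟩
  have hle : b ≤ a := by
    by_contra hcon
    push_neg at hcon
    have h1 : |Δ + f a - c| < |Δ + f b - c| := hamin b hb (ne_of_gt hcon)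
    have h2 : |Δ' + f b - c| < |Δ' + f a - c| := hbmin a ha (ne_of_lt hcon)
    have hfab : f a < f b :=
      hfmono (hlo.trans_le ha.1).le (hlo.trans_le hb.1).le hcon
    have q1 : (Δ + f a - c) * (Δ + f a - c) < (Δ + f b - c) * (Δ + f b - c) := by
      have := mul_self_lt_mul_self (abs_nonneg _) h1
      rwa [abs_mul_abs_self, abs_mul_abs_self] at this
    have q2 : (Δ' + f b - c) * (Δ' + f b - c) < (Δ' + f a - c) * (Δ' + f a - c) := by
      have := mul_self_lt_mul_self (abs_nonneg _) h2
      rwa [abs_mul_abs_self, abs_mul_abs_self] at this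
    nlinarith
  refine ⟨hle, fun haio => ?_⟩
  rcases lt_or_eq_of_le hle with h | h
  · exact h
  · exfalso
    -- b = a, both interior minimizers, so both give zero
    have hfcont : ContinuousAt f a := by
      have hcomp : ContinuousOn f (Icc βlo βhi) := by
        have hmap : MapsTo (fun x : ℝ => (H β, x)) (Icc βlo βhi) (Icc (0:ℝ) 1 ×ˢ Ici (0:ℝ)) := by
          intro x hx
          exact ⟨⟨hH.1.le, hH.2.le⟩, (hlo.trans_le hx.1).le⟩
        exact hRcont.comp (Continuous.continuousOn (by continuity)) hmap
      exact hcomp.continuousAt (Icc_mem_nhds haio.1 haio.2)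
    have z1 : Δ + f a - c = 0 :=
      key_interior_zero f βlo βhi a c Δ hlo hfcont hfmono haio hamin
    have z2 : Δ' + f a - c = 0 := by
      apply key_interior_zero f βlo βhi a c Δ' hlo hfcont hfmono haio
      intro x hx hxa
      rw [← h] at hxa ⊢
      exact hbmin x hx hxa
    linarith
end

section
/- (Pointwise mechanism behind Theorem 2 (ii)) For every Δ ≠ 0 and every β ∈ [βlo, βhi]: if Δ > 0 then ψ̃_Δ^{h₁}(β) ≤ ψ̃_Δ^{h₂}(β) < β*, and if Δ < 0 then ψ̃_Δ^{h₁}(β) ≥ ψ̃_Δ^{h₂}(β) > β*; in both cases the distortion under the pointwise lower assessment function is larger: |ψ̃_Δ^{h₁}(β) − β*| ≥ |ψ̃_Δ^{h₂}(β) − β*|. -/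
open Set

lemma stmt7_key (u1 v1 u2 v2 : ℝ) (h1 : |v1| < |u1|) (h2 : |u2| < |v2|)
    (hm1 : u1 < v1) (hm2 : u2 < v2) (hd1 : u2 < u1) (hd2 : v2 < v1) : False := by
  have s1 : v1 * v1 < u1 * u1 := by
    have := mul_self_lt_mul_self (abs_nonneg v1) h1
    rwa [abs_mul_abs_self, abs_mul_abs_self] at this
  have s2 : u2 * u2 < v2 * v2 := by
    have := mul_self_lt_mul_self (abs_nonneg u2) h2
    rwa [abs_mul_abs_self, abs_mul_abs_self] at this
  have A : u1 + v1 < 0 := by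
    by_contra hA
    push_neg at hA
    nlinarith [mul_nonneg (sub_pos.mpr hm1).le hA]
  have B : 0 < u2 + v2 := by
    by_contra hB
    push_neg at hB
    nlinarith [mul_nonneg (sub_pos.mpr hm2).le (neg_nonneg.mpr hB)]
  linarith

lemma stmt7_min_lt (βlo βstar βhi Δ : ℝ) (hls : βlo < βstar) (hsh : βstar < βhi)
    (hΔ : 0 < Δ) (f : ℝ → ℝ)
    (hfc : ContinuousWithinAt f (Icc βlo βhi) βstar)
    (hfm : StrictMonoOn f (Icc βlo βhi))
    (hfβ : f βstar = Δ)
    (ψ : ℝ) (hψ : ψ ∈ Icc βlo βhi)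
    (hmin : ∀ x ∈ Icc βlo βhi, x ≠ ψ → |f ψ| < |f x|) :
    ψ < βstar := by
  have hstar_mem : βstar ∈ Icc βlo βhi := ⟨hls.le, hsh.le⟩
  by_contra hcon
  push_neg at hcon
  rcases eq_or_lt_of_le hcon with heq | hltψ
  · -- ψ = βstar
    obtain ⟨δ, hδpos, hδ⟩ := Metric.continuousWithinAt_iff.mp hfc Δ hΔ
    set x := max βlo (βstar - δ/2) with hxdef
    have hx1 : βlo ≤ x := le_max_left _ _
    have hx2 : βstar - δ/2 ≤ x := le_max_right _ _
    have hxlt : x < βstar := max_lt hls (by linarith)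
    have hxmem : x ∈ Icc βlo βhi := ⟨hx1, by linarith⟩
    have hdist : dist x βstar < δ := by
      rw [Real.dist_eq, abs_lt]
      constructor <;> linarith
    have hnear := hδ hxmem hdist
    rw [Real.dist_eq, hfβ] at hnear
    have hfx_lt : f x < f βstar := hfm hxmem hstar_mem hxlt
    have habs : |f x| < Δ := by
      rw [abs_lt] at hnear ⊢
      constructor <;> linarith
    have hm := hmin x hxmem (by rw [← heq]; exact ne_of_lt hxlt)
    rw [← heq, hfβ, abs_of_pos hΔ] at hm
    linarith
  · have hm := hmin βstar hstar_mem (ne_of_lt hltψ)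
    have h2 : f βstar < f ψ := hfm hstar_mem hψ hltψ
    rw [hfβ, abs_of_pos hΔ] at hm
    have := le_abs_self (f ψ)
    linarith

lemma stmt7_min_gt (βlo βstar βhi Δ : ℝ) (hls : βlo < βstar) (hsh : βstar < βhi)
    (hΔ : Δ < 0) (f : ℝ → ℝ)
    (hfc : ContinuousWithinAt f (Icc βlo βhi) βstar)
    (hfm : StrictMonoOn f (Icc βlo βhi))
    (hfβ : f βstar = Δ)
    (ψ : ℝ) (hψ : ψ ∈ Icc βlo βhi)
    (hmin : ∀ x ∈ Icc βlo βhi, x ≠ ψ → |f ψ| < |f x|) :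
    βstar < ψ := by
  have hstar_mem : βstar ∈ Icc βlo βhi := ⟨hls.le, hsh.le⟩
  by_contra hcon
  push_neg at hcon
  rcases eq_or_lt_of_le hcon with heq | hltψ
  · -- ψ = βstar
    obtain ⟨δ, hδpos, hδ⟩ := Metric.continuousWithinAt_iff.mp hfc (-Δ) (by linarith)
    set x := min βhi (βstar + δ/2) with hxdef
    have hx1 : x ≤ βhi := min_le_left _ _
    have hx2 : x ≤ βstar + δ/2 := min_le_right _ _
    have hxgt : βstar < x := lt_min hsh (by linarith)
    have hxmem : x ∈ Icc βlo βhi := ⟨by linarith, hx1⟩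
    have hdist : dist x βstar < δ := by
      rw [Real.dist_eq, abs_lt]
      constructor <;> linarith
    have hnear := hδ hxmem hdist
    rw [Real.dist_eq, hfβ] at hnear
    have hfx_gt : f βstar < f x := hfm hstar_mem hxmem hxgt
    have habs : |f x| < -Δ := by
      rw [abs_lt] at hnear ⊢
      constructor <;> linarith
    have hm := hmin x hxmem (by rw [heq]; exact ne_of_gt hxgt)
    rw [heq, hfβ, abs_of_neg hΔ] at hm
    linarith
  · have hm := hmin βstar hstar_mem (ne_of_gt hltψ)
    have h2 : f ψ < f βstar := hfm hψ hstar_mem hltψ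
    rw [hfβ, abs_of_neg hΔ] at hm
    have := neg_le_abs (f ψ)
    linarith

theorem stmt_7
    (βlo βstar βhi : ℝ)
    (hlo : 0 < βlo) (hls : βlo < βstar) (hsh : βstar < βhi)
    (R : ℝ → ℝ → ℝ)
    (hRcont : ContinuousOn (fun p : ℝ × ℝ => R p.1 p.2) (Icc (0:ℝ) 1 ×ˢ Ici (0:ℝ)))
    (hR0 : ∀ h ∈ Icc (0:ℝ) 1, R h 0 = 0)
    (hR0' : ∀ β ∈ Ici (0:ℝ), R 0 β = 0)
    (hRβ : ∀ h ∈ Ioc (0:ℝ) 1, StrictMonoOn (fun β => R h β) (Ici 0))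
    (hRh : ∀ β > (0:ℝ), StrictMonoOn (fun h => R h β) (Icc 0 1))
    (hRid : ∀ h₁ h₂ β₁ β₂ : ℝ, 0 ≤ h₁ → h₁ < h₂ → h₂ ≤ 1 → 0 ≤ β₁ → β₁ < β₂ →
      R h₂ β₁ - R h₁ β₁ < R h₂ β₂ - R h₁ β₂)
    (H₁ H₂ : ℝ → ℝ)
    (hH₁cont : ContinuousOn H₁ (Ici 0)) (hH₂cont : ContinuousOn H₂ (Ici 0))
    (hH₁mono : StrictMonoOn H₁ (Ici 0)) (hH₂mono : StrictMonoOn H₂ (Ici 0))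
    (hH₁0 : H₁ 0 = 0) (hH₂0 : H₂ 0 = 0)
    (hH₁in : ∀ β > (0:ℝ), H₁ β ∈ Ioo (0:ℝ) 1)
    (hH₂in : ∀ β > (0:ℝ), H₂ β ∈ Ioo (0:ℝ) 1)
    -- the assessment is pointwise lower under H₁
    (hlt : ∀ β > (0:ℝ), H₁ β < H₂ β)
    (ψ₁ ψ₂ : ℝ → ℝ → ℝ)
    (hψ₁ : ∀ Δ : ℝ, ∀ β ∈ Icc βlo βhi,
      ψ₁ Δ β ∈ Icc βlo βhi ∧
      ∀ x ∈ Icc βlo βhi, x ≠ ψ₁ Δ β →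
        |Δ + R (H₁ β) (ψ₁ Δ β) - R (H₁ β) βstar| < |Δ + R (H₁ β) x - R (H₁ β) βstar|)
    (hψ₂ : ∀ Δ : ℝ, ∀ β ∈ Icc βlo βhi,
      ψ₂ Δ β ∈ Icc βlo βhi ∧
      ∀ x ∈ Icc βlo βhi, x ≠ ψ₂ Δ β →
        |Δ + R (H₂ β) (ψ₂ Δ β) - R (H₂ β) βstar| < |Δ + R (H₂ β) x - R (H₂ β) βstar|) :
    ∀ Δ : ℝ, Δ ≠ 0 → ∀ β ∈ Icc βlo βhi,
      (0 < Δ → ψ₁ Δ β ≤ ψ₂ Δ β ∧ ψ₂ Δ β < βstar) ∧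
      (Δ < 0 → ψ₂ Δ β ≤ ψ₁ Δ β ∧ βstar < ψ₂ Δ β) ∧
      |ψ₂ Δ β - βstar| ≤ |ψ₁ Δ β - βstar| := by
  intro Δ hΔ β hβ
  have hβpos : 0 < β := lt_of_lt_of_le hlo hβ.1
  have h1in : H₁ β ∈ Ioo (0:ℝ) 1 := hH₁in β hβpos
  have h2in : H₂ β ∈ Ioo (0:ℝ) 1 := hH₂in β hβpos
  have h12 : H₁ β < H₂ β := hlt β hβpos
  -- continuity of f h := fun x => Δ + R h x - R h βstar within Icc at βstar
  have hcont : ∀ h : ℝ, h ∈ Ioo (0:ℝ) 1 →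
      ContinuousWithinAt (fun x => Δ + R h x - R h βstar) (Icc βlo βhi) βstar := by
    intro h hh
    have hmem : ((h, βstar) : ℝ × ℝ) ∈ Icc (0:ℝ) 1 ×ˢ Ici (0:ℝ) :=
      ⟨⟨hh.1.le, hh.2.le⟩, by simp; linarith⟩
    have hc1 : ContinuousWithinAt (fun p : ℝ × ℝ => R p.1 p.2)
        (Icc (0:ℝ) 1 ×ˢ Ici (0:ℝ)) (h, βstar) := hRcont _ hmem
    have hc2 : ContinuousWithinAt (fun x : ℝ => ((h, x) : ℝ × ℝ)) (Icc βlo βhi) βstar :=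
      (continuous_const.prodMk continuous_id).continuousWithinAt
    have hcomp : ContinuousWithinAt (fun x : ℝ => R h x) (Icc βlo βhi) βstar := by
      refine hc1.comp hc2 ?_
      intro x hx
      exact ⟨⟨hh.1.le, hh.2.le⟩, by simp; linarith [hx.1]⟩
    exact (continuousWithinAt_const.add hcomp).sub continuousWithinAt_const
  -- strict monotonicity
  have hmono : ∀ h : ℝ, h ∈ Ioo (0:ℝ) 1 →
      StrictMonoOn (fun x => Δ + R h x - R h βstar) (Icc βlo βhi) := by
    intro h hh a ha b hb hab
    have := hRβ h ⟨hh.1, hh.2.le⟩ (show a ∈ Ici (0:ℝ) by exact le_trans hlo.le ha.1)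
      (show b ∈ Ici (0:ℝ) by exact le_trans hlo.le hb.1) hab
    simp only at this ⊢
    linarith
  have hval : ∀ h : ℝ, (fun x => Δ + R h x - R h βstar) βstar = Δ := by
    intro h; simp
  obtain ⟨hψ₁mem, hψ₁min⟩ := hψ₁ Δ β hβ
  obtain ⟨hψ₂mem, hψ₂min⟩ := hψ₂ Δ β hβ
  -- dominance from increasing differences
  have hdomlt : ∀ x, βlo ≤ x → x < βstar →
      Δ + R (H₂ β) x - R (H₂ β) βstar < Δ + R (H₁ β) x - R (H₁ β) βstar := by
    intro x hx1 hx2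
    have := hRid (H₁ β) (H₂ β) x βstar h1in.1.le h12 h2in.2.le (by linarith) hx2
    linarith
  have hdomgt : ∀ x, βstar < x →
      Δ + R (H₁ β) x - R (H₁ β) βstar < Δ + R (H₂ β) x - R (H₂ β) βstar := by
    intro x hx
    have := hRid (H₁ β) (H₂ β) βstar x h1in.1.le h12 h2in.2.le (by linarith) hx
    linarith
  rcases hΔ.lt_or_gt with hneg | hpos
  · -- Δ < 0
    have hg1 : βstar < ψ₁ Δ β :=
      stmt7_min_gt βlo βstar βhi Δ hls hsh hneg _ (hcont _ h1in) (hmono _ h1in)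
        (hval _) _ hψ₁mem (fun x hx hne => hψ₁min x hx hne)
    have hg2 : βstar < ψ₂ Δ β :=
      stmt7_min_gt βlo βstar βhi Δ hls hsh hneg _ (hcont _ h2in) (hmono _ h2in)
        (hval _) _ hψ₂mem (fun x hx hne => hψ₂min x hx hne)
    have hord : ψ₂ Δ β ≤ ψ₁ Δ β := by
      by_contra hc
      push_neg at hc
      set a := ψ₁ Δ β
      set b := ψ₂ Δ β
      have hmin1 : |Δ + R (H₁ β) a - R (H₁ β) βstar| < |Δ + R (H₁ β) b - R (H₁ β) βstar| :=
        hψ₁min b hψ₂mem (ne_of_gt hc)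
      have hmin2 : |Δ + R (H₂ β) b - R (H₂ β) βstar| < |Δ + R (H₂ β) a - R (H₂ β) βstar| :=
        hψ₂min a hψ₁mem (ne_of_lt hc)
      have hm1 : Δ + R (H₂ β) a - R (H₂ β) βstar < Δ + R (H₂ β) b - R (H₂ β) βstar :=
        hmono _ h2in hψ₁mem hψ₂mem hc
      have hm2 : Δ + R (H₁ β) a - R (H₁ β) βstar < Δ + R (H₁ β) b - R (H₁ β) βstar :=
        hmono _ h1in hψ₁mem hψ₂mem hc
      exact stmt7_key _ _ _ _ hmin2 hmin1 hm1 hm2 (hdomgt a hg1) (hdomgt b hg2)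
    refine ⟨fun h => absurd h (by linarith), fun _ => ⟨hord, hg2⟩, ?_⟩
    rw [abs_of_pos (by linarith : (0:ℝ) < ψ₂ Δ β - βstar),
      abs_of_pos (by linarith : (0:ℝ) < ψ₁ Δ β - βstar)]
    linarith
  · -- 0 < Δ
    have hg1 : ψ₁ Δ β < βstar :=
      stmt7_min_lt βlo βstar βhi Δ hls hsh hpos _ (hcont _ h1in) (hmono _ h1in)
        (hval _) _ hψ₁mem (fun x hx hne => hψ₁min x hx hne)
    have hg2 : ψ₂ Δ β < βstar :=
      stmt7_min_lt βlo βstar βhi Δ hls hsh hpos _ (hcont _ h2in) (hmono _ h2in)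
        (hval _) _ hψ₂mem (fun x hx hne => hψ₂min x hx hne)
    have hord : ψ₁ Δ β ≤ ψ₂ Δ β := by
      by_contra hc
      push_neg at hc
      set a := ψ₂ Δ β
      set b := ψ₁ Δ β
      have hmin1 : |Δ + R (H₁ β) b - R (H₁ β) βstar| < |Δ + R (H₁ β) a - R (H₁ β) βstar| :=
        hψ₁min a hψ₂mem (ne_of_lt hc)
      have hmin2 : |Δ + R (H₂ β) a - R (H₂ β) βstar| < |Δ + R (H₂ β) b - R (H₂ β) βstar| :=
        hψ₂min b hψ₁mem (ne_of_gt hc)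
      have hm1 : Δ + R (H₁ β) a - R (H₁ β) βstar < Δ + R (H₁ β) b - R (H₁ β) βstar :=
        hmono _ h1in hψ₂mem hψ₁mem hc
      have hm2 : Δ + R (H₂ β) a - R (H₂ β) βstar < Δ + R (H₂ β) b - R (H₂ β) βstar :=
        hmono _ h2in hψ₂mem hψ₁mem hc
      exact stmt7_key _ _ _ _ hmin1 hmin2 hm1 hm2
        (hdomlt a hψ₂mem.1 hg2) (hdomlt b hψ₁mem.1 hg1)
    refine ⟨fun _ => ⟨hord, hg2⟩, fun h => absurd h (by linarith), ?_⟩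
    rw [abs_of_neg (by linarith : ψ₂ Δ β - βstar < 0),
      abs_of_neg (by linarith : ψ₁ Δ β - βstar < 0)]
    linarith
end

section
/- (Correspondence-principle lemma underlying Theorem 2) Suppose g(x) ≤ f(x) for all x ∈ [a,b], and every fixed point of f and every fixed point of g is a strict crossing. Then the set S_f of stable fixed points of f and the set S_g of stable fixed points of g are nonempty, and S_g lies below S_f in the weak set order: for every x* ∈ S_f there exists y* ∈ S_g with y* ≤ x*, and for every y* ∈ S_g there exists x* ∈ S_f with y* ≤ x*. -/
open Set

lemma aux_lt (F : ℝ → ℝ) {a b x : ℝ} (hc : ContinuousOn F (Icc a b)) (hx : x ∈ Icc a b)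
    (h : F x < x) : ∃ δ > 0, ∀ t ∈ Icc a b, |t - x| < δ → F t < t := by
  have h1 : ContinuousWithinAt (fun t => F t - t) (Icc a b) x :=
    (hc x hx).sub continuousWithinAt_id
  have h2 : (fun t => F t - t) ⁻¹' Iio 0 ∈ nhdsWithin x (Icc a b) :=
    h1 (Iio_mem_nhds (by simpa using h))
  rw [Metric.mem_nhdsWithin_iff] at h2
  obtain ⟨δ, hδ, hsub⟩ := h2
  refine ⟨δ, hδ, fun t ht hlt => ?_⟩
  have : t ∈ Metric.ball x δ ∩ Icc a b := ⟨by simpa [Real.dist_eq] using hlt, ht⟩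
  have := hsub this
  simp only [mem_preimage, mem_Iio] at this
  linarith

lemma aux_gt (F : ℝ → ℝ) {a b x : ℝ} (hc : ContinuousOn F (Icc a b)) (hx : x ∈ Icc a b)
    (h : x < F x) : ∃ δ > 0, ∀ t ∈ Icc a b, |t - x| < δ → t < F t := by
  have h1 : ContinuousWithinAt (fun t => F t - t) (Icc a b) x :=
    (hc x hx).sub continuousWithinAt_id
  have h2 : (fun t => F t - t) ⁻¹' Ioi 0 ∈ nhdsWithin x (Icc a b) :=
    h1 (Ioi_mem_nhds (by simpa using h))
  rw [Metric.mem_nhdsWithin_iff] at h2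
  obtain ⟨δ, hδ, hsub⟩ := h2
  refine ⟨δ, hδ, fun t ht hlt => ?_⟩
  have : t ∈ Metric.ball x δ ∩ Icc a b := ⟨by simpa [Real.dist_eq] using hlt, ht⟩
  have := hsub this
  simp only [mem_preimage, mem_Ioi] at this
  linarith

lemma lemA (a b : ℝ) (hab : a < b) (F : ℝ → ℝ)
    (hc : ContinuousOn F (Icc a b)) (hm : MapsTo F (Icc a b) (Icc a b))
    (hcross : ∀ x ∈ Icc a b, F x = x → CrossesFromAbove F a b x ∨ CrossesFromBelow F a b x)
    (c : ℝ) (hcab : c ∈ Icc a b) (hFc : c ≤ F c)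
    (hleft : ∃ ε > 0, ∀ t ∈ Ioo (c - ε) c ∩ Icc a b, t < F t) :
    ∃ x, (x ∈ Icc a b ∧ F x = x ∧ CrossesFromAbove F a b x) ∧ c ≤ x := by
  obtain ⟨ε₀, hε₀, hl⟩ := hleft
  by_cases hA : ∃ x, x ∈ Icc c b ∧ F x < x
  · set A : Set ℝ := {x | x ∈ Icc c b ∧ F x < x} with hAdef
    obtain ⟨x₀, hx₀, hFx₀⟩ := hA
    have hAne : A.Nonempty := ⟨x₀, hx₀, hFx₀⟩
    have hAbdd : BddBelow A := ⟨c, fun y hy => hy.1.1⟩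
    set s := sInf A with hs
    have hcs : c ≤ s := le_csInf hAne (fun y hy => hy.1.1)
    have hsb : s ≤ b := (csInf_le hAbdd ⟨hx₀, hFx₀⟩).trans hx₀.2
    have hsab : s ∈ Icc a b := ⟨hcab.1.trans hcs, hsb⟩
    have hbelow : ∀ x, c ≤ x → x < s → x ≤ F x := by
      intro x h1 h2
      by_contra h
      push_neg at h
      have hxA : x ∈ A := ⟨⟨h1, (h2.trans_le hsb).le⟩, h⟩
      exact absurd (csInf_le hAbdd hxA) (not_le.mpr h2)
    have hFs_le : F s ≤ s := by
      by_contra h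
      push_neg at h
      obtain ⟨δ, hδ, hball⟩ := aux_gt F hc hsab h
      obtain ⟨a', ha'A, ha'lt⟩ := exists_lt_of_csInf_lt hAne (lt_add_of_pos_right s hδ)
      have h1 : s ≤ a' := csInf_le hAbdd ha'A
      have h2 : a' < F a' := hball a' ⟨hcab.1.trans ha'A.1.1, ha'A.1.2⟩
        (by rw [abs_sub_lt_iff]; constructor <;> linarith)
      exact absurd ha'A.2 (not_lt.mpr h2.le)
    have hFs_ge : s ≤ F s := by
      rcases eq_or_lt_of_le hcs with he | hlt
      · rw [← he]; exact hFc
      · by_contra h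
        push_neg at h
        obtain ⟨δ, hδ, hball⟩ := aux_lt F hc hsab h
        obtain ⟨t, ht1, ht2⟩ := exists_between (show max c (s - δ) < s from max_lt hlt (by linarith))
        have htc : c ≤ t := ((le_max_left _ _).trans_lt ht1).le
        have hFt := hbelow t htc ht2
        have h2 : F t < t := hball t ⟨hcab.1.trans htc, ht2.le.trans hsb⟩
          (by rw [abs_sub_lt_iff]
              have := le_max_right c (s - δ)
              constructor <;> linarith)
        linarith
    have hfix : F s = s := le_antisymm hFs_le hFs_ge
    rcases hcross s hsab hfix with hc1 | hc2
    · exact ⟨s, ⟨hsab, hfix, hc1⟩, hcs⟩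
    · exfalso
      obtain ⟨ε, hε, _, hr⟩ := hc2
      obtain ⟨a', ha'A, ha'lt⟩ := exists_lt_of_csInf_lt hAne (lt_add_of_pos_right s hε)
      have h1 : s ≤ a' := csInf_le hAbdd ha'A
      have hne : s ≠ a' := by
        intro he
        have h3 := ha'A.2
        rw [← he, hfix] at h3
        exact lt_irrefl s h3
      have h2 := hr a' ⟨⟨lt_of_le_of_ne h1 hne, ha'lt⟩, hcab.1.trans ha'A.1.1, ha'A.1.2⟩
      exact absurd ha'A.2 (not_lt.mpr h2.le)
  · push_neg at hA
    have hbb : b ∈ Icc a b := ⟨hab.le, le_refl b⟩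
    have hfix : F b = b := le_antisymm (hm hbb).2 (hA b ⟨hcab.2, le_refl b⟩)
    rcases hcross b hbb hfix with hc1 | hc2
    · exact ⟨b, ⟨hbb, hfix, hc1⟩, hcab.2⟩
    · exfalso
      obtain ⟨ε, hε, hlft, _⟩ := hc2
      rcases eq_or_lt_of_le hcab.2 with he | hcb
      · obtain ⟨t, ht1, ht2⟩ := exists_between
          (show max a (max (b - ε) (b - ε₀)) < b from max_lt hab (max_lt (by linarith) (by linarith)))
        have hta : a < t := (le_max_left _ _).trans_lt ht1
        have htε : b - ε < t := ((le_max_left _ _).trans (le_max_right _ _)).trans_lt ht1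
        have htε₀ : b - ε₀ < t := ((le_max_right _ _).trans (le_max_right _ _)).trans_lt ht1
        have h1 := hl t ⟨⟨by rw [he]; linarith, by rw [he]; exact ht2⟩, hta.le, ht2.le⟩
        have h2 := hlft t ⟨⟨htε, ht2⟩, hta.le, ht2.le⟩
        linarith
      · obtain ⟨t, ht1, ht2⟩ := exists_between (show max c (b - ε) < b from max_lt hcb (by linarith))
        have htc : c ≤ t := ((le_max_left _ _).trans_lt ht1).le
        have h1 := hA t ⟨htc, ht2.le⟩
        have h2 := hlft t ⟨⟨(le_max_right _ _).trans_lt ht1, ht2⟩, hcab.1.trans htc, ht2.le⟩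
        linarith

lemma lemB (a b : ℝ) (hab : a < b) (F : ℝ → ℝ)
    (hc : ContinuousOn F (Icc a b)) (hm : MapsTo F (Icc a b) (Icc a b))
    (hcross : ∀ x ∈ Icc a b, F x = x → CrossesFromAbove F a b x ∨ CrossesFromBelow F a b x)
    (c : ℝ) (hcab : c ∈ Icc a b) (hFc : F c ≤ c)
    (hright : ∃ ε > 0, ∀ t ∈ Ioo c (c + ε) ∩ Icc a b, F t < t) :
    ∃ x, (x ∈ Icc a b ∧ F x = x ∧ CrossesFromAbove F a b x) ∧ x ≤ c := by
  obtain ⟨ε₀, hε₀, hr₀⟩ := hright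
  by_cases hA : ∃ x, x ∈ Icc a c ∧ x < F x
  · set A : Set ℝ := {x | x ∈ Icc a c ∧ x < F x} with hAdef
    obtain ⟨x₀, hx₀, hFx₀⟩ := hA
    have hAne : A.Nonempty := ⟨x₀, hx₀, hFx₀⟩
    have hAbdd : BddAbove A := ⟨c, fun y hy => hy.1.2⟩
    set s := sSup A with hs
    have hsc : s ≤ c := csSup_le hAne (fun y hy => hy.1.2)
    have has : a ≤ s := hx₀.1.trans (le_csSup hAbdd ⟨hx₀, hFx₀⟩)
    have hsab : s ∈ Icc a b := ⟨has, hsc.trans hcab.2⟩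
    have habove : ∀ x, s < x → x ≤ c → F x ≤ x := by
      intro x h1 h2
      by_contra h
      push_neg at h
      have hxA : x ∈ A := ⟨⟨has.trans h1.le, h2⟩, h⟩
      exact absurd (le_csSup hAbdd hxA) (not_le.mpr h1)
    have hFs_ge : s ≤ F s := by
      by_contra h
      push_neg at h
      obtain ⟨δ, hδ, hball⟩ := aux_lt F hc hsab h
      obtain ⟨a', ha'A, ha'lt⟩ := exists_lt_of_lt_csSup hAne (sub_lt_self s hδ)
      have h1 : a' ≤ s := le_csSup hAbdd ha'A
      have h2 : F a' < a' := hball a' ⟨ha'A.1.1, ha'A.1.2.trans hcab.2⟩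
        (by rw [abs_sub_lt_iff]; constructor <;> linarith)
      exact absurd ha'A.2 (not_lt.mpr h2.le)
    have hFs_le : F s ≤ s := by
      rcases eq_or_lt_of_le hsc with he | hlt
      · rw [he]; exact hFc
      · by_contra h
        push_neg at h
        obtain ⟨δ, hδ, hball⟩ := aux_gt F hc hsab h
        obtain ⟨t, ht1, ht2⟩ := exists_between (show s < min c (s + δ) from lt_min hlt (by linarith))
        have htc : t ≤ c := (ht2.trans_le (min_le_left _ _)).le
        have hFt := habove t ht1 htc
        have h2 : t < F t := hball t ⟨has.trans ht1.le, htc.trans hcab.2⟩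
          (by rw [abs_sub_lt_iff]
              have := min_le_right c (s + δ)
              constructor <;> linarith)
        linarith
    have hfix : F s = s := le_antisymm hFs_le hFs_ge
    rcases hcross s hsab hfix with hc1 | hc2
    · exact ⟨s, ⟨hsab, hfix, hc1⟩, hsc⟩
    · exfalso
      obtain ⟨ε, hε, hlft, _⟩ := hc2
      obtain ⟨a', ha'A, ha'lt⟩ := exists_lt_of_lt_csSup hAne (sub_lt_self s hε)
      have h1 : a' ≤ s := le_csSup hAbdd ha'A
      have hne : a' ≠ s := by
        intro he
        have h3 := ha'A.2
        rw [he, hfix] at h3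
        exact lt_irrefl s h3
      have h2 := hlft a' ⟨⟨ha'lt, lt_of_le_of_ne h1 hne⟩, ha'A.1.1, ha'A.1.2.trans hcab.2⟩
      exact absurd ha'A.2 (not_lt.mpr h2.le)
  · push_neg at hA
    have haa : a ∈ Icc a b := ⟨le_refl a, hab.le⟩
    have hfix : F a = a := le_antisymm (hA a ⟨le_refl a, hcab.1⟩) (hm haa).1
    rcases hcross a haa hfix with hc1 | hc2
    · exact ⟨a, ⟨haa, hfix, hc1⟩, hcab.1⟩
    · exfalso
      obtain ⟨ε, hε, _, hrgt⟩ := hc2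
      rcases eq_or_lt_of_le hcab.1 with he | hac
      · obtain ⟨t, ht1, ht2⟩ := exists_between
          (show a < min b (min (a + ε) (a + ε₀)) from lt_min hab (lt_min (by linarith) (by linarith)))
        have htb : t < b := ht2.trans_le (min_le_left _ _)
        have htε : t < a + ε := ht2.trans_le ((min_le_right _ _).trans (min_le_left _ _))
        have htε₀ : t < a + ε₀ := ht2.trans_le ((min_le_right _ _).trans (min_le_right _ _))
        have h1 := hr₀ t ⟨⟨by rw [← he]; exact ht1, by rw [← he]; linarith⟩, ht1.le, htb.le⟩
        have h2 := hrgt t ⟨⟨ht1, htε⟩, ht1.le, htb.le⟩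
        linarith
      · obtain ⟨t, ht1, ht2⟩ := exists_between (show a < min c (a + ε) from lt_min hac (by linarith))
        have htc : t ≤ c := (ht2.trans_le (min_le_left _ _)).le
        have h1 := hA t ⟨ht1.le, htc⟩
        have h2 := hrgt t ⟨⟨ht1, ht2.trans_le (min_le_right _ _)⟩, ht1.le, htc.trans hcab.2⟩
        linarith

theorem stmt_8
    (a b : ℝ) (hab : a < b)
    (f g : ℝ → ℝ)
    (hfc : ContinuousOn f (Icc a b)) (hgc : ContinuousOn g (Icc a b))
    (hfm : MapsTo f (Icc a b) (Icc a b)) (hgm : MapsTo g (Icc a b) (Icc a b))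
    (hle : ∀ x ∈ Icc a b, g x ≤ f x)
    (hfcross : ∀ x ∈ Icc a b, f x = x →
      CrossesFromAbove f a b x ∨ CrossesFromBelow f a b x)
    (hgcross : ∀ x ∈ Icc a b, g x = x →
      CrossesFromAbove g a b x ∨ CrossesFromBelow g a b x) :
    {x : ℝ | x ∈ Icc a b ∧ f x = x ∧ CrossesFromAbove f a b x}.Nonempty ∧
    {x : ℝ | x ∈ Icc a b ∧ g x = x ∧ CrossesFromAbove g a b x}.Nonempty ∧
    (∀ x ∈ {x : ℝ | x ∈ Icc a b ∧ f x = x ∧ CrossesFromAbove f a b x},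
      ∃ y ∈ {y : ℝ | y ∈ Icc a b ∧ g y = y ∧ CrossesFromAbove g a b y}, y ≤ x) ∧
    (∀ y ∈ {y : ℝ | y ∈ Icc a b ∧ g y = y ∧ CrossesFromAbove g a b y},
      ∃ x ∈ {x : ℝ | x ∈ Icc a b ∧ f x = x ∧ CrossesFromAbove f a b x}, y ≤ x) := by
  have haab : a ∈ Icc a b := ⟨le_refl a, hab.le⟩
  have hvac : ∀ F : ℝ → ℝ, ∃ ε > (0:ℝ), ∀ t ∈ Ioo (a - ε) a ∩ Icc a b, t < F t :=
    fun F => ⟨1, one_pos, fun t ht => absurd ht.1.2 (not_lt.mpr ht.2.1)⟩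
  obtain ⟨xf, hxf, -⟩ := lemA a b hab f hfc hfm hfcross a haab (hfm haab).1 (hvac f)
  obtain ⟨xg, hxg, -⟩ := lemA a b hab g hgc hgm hgcross a haab (hgm haab).1 (hvac g)
  refine ⟨⟨xf, hxf⟩, ⟨xg, hxg⟩, ?_, ?_⟩
  · rintro x ⟨hxab, hxfix, hxcross⟩
    obtain ⟨ε, hε, -, hr⟩ := hxcross
    obtain ⟨y, hy, hyx⟩ := lemB a b hab g hgc hgm hgcross x hxab
      ((hle x hxab).trans (le_of_eq hxfix))
      ⟨ε, hε, fun t ht => lt_of_le_of_lt (hle t ht.2) (hr t ht)⟩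
    exact ⟨y, hy, hyx⟩
  · rintro y ⟨hyab, hyfix, hycross⟩
    obtain ⟨ε, hε, hlft, -⟩ := hycross
    obtain ⟨x, hx, hxy⟩ := lemA a b hab f hfc hfm hfcross y hyab
      ((le_of_eq hyfix.symm).trans (hle y hyab))
      ⟨ε, hε, fun t ht => (hlft t ht).trans_le (hle t ht.2)⟩
    exact ⟨x, hx, hxy⟩
end

section
/- (Theorem 2 (i), overestimation case) Suppose 0 < Δ < Δ′, every fixed point of ψ̃_Δ is a strict crossing, and every fixed point of ψ̃_{Δ′} is a strict crossing. Then the set S(Δ) of stable fixed points of ψ̃_Δ and the set S(Δ′) of stable fixed points of ψ̃_{Δ′} are nonempty, and S(Δ′) lies below S(Δ) in the weak set order: for every x ∈ S(Δ) there exists y ∈ S(Δ′) with y ≤ x, and for every y ∈ S(Δ′) there exists x ∈ S(Δ) with y ≤ x. Equivalently, since all equilibrium beliefs lie below β*, the set of distortions {β* − β̂ : β̂ a stable equilibrium belief} increases in the weak set order when the overestimation Δ increases. -/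
open Set

/-- Knaster–Tarski on a real interval: a monotone self-map of `[a,b]` has a greatest
fixed point, which dominates every point `t` with `t ≤ F t`. -/
lemma tarski_aux (F : ℝ → ℝ) (a b : ℝ) (hab : a ≤ b)
    (hmap : ∀ t ∈ Icc a b, F t ∈ Icc a b)
    (hmono : ∀ s ∈ Icc a b, ∀ t ∈ Icc a b, s ≤ t → F s ≤ F t) :
    ∃ c ∈ Icc a b, F c = c ∧ ∀ t ∈ Icc a b, t ≤ F t → t ≤ c := by
  set S : Set ℝ := {t | t ∈ Icc a b ∧ t ≤ F t} with hS
  have haS : a ∈ S := ⟨⟨le_refl a, hab⟩, (hmap a ⟨le_refl a, hab⟩).1⟩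
  have hSne : S.Nonempty := ⟨a, haS⟩
  have hbdd : BddAbove S := ⟨b, fun t ht => ht.1.2⟩
  set c := sSup S with hc
  have hac : a ≤ c := le_csSup hbdd haS
  have hcb : c ≤ b := csSup_le hSne fun t ht => ht.1.2
  have hcI : c ∈ Icc a b := ⟨hac, hcb⟩
  have hub : ∀ t ∈ S, t ≤ F c := fun t ht =>
    le_trans ht.2 (hmono t ht.1 c hcI (le_csSup hbdd ht))
  have hcF : c ≤ F c := csSup_le hSne hub
  have hFS : F c ∈ S := ⟨hmap c hcI, hmono c hcI (F c) (hmap c hcI) hcF⟩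
  exact ⟨c, hcI, le_antisymm (le_csSup hbdd hFS) hcF, fun t ht h => le_csSup hbdd ⟨ht, h⟩⟩

/-- Any minimizer belief lies strictly below the true productivity when `Δ > 0`. -/
lemma psi_lt_star_aux (βlo βstar βhi : ℝ)
    (hlo : 0 < βlo) (hls : βlo < βstar) (hsh : βstar < βhi)
    (R : ℝ → ℝ → ℝ)
    (hRcont : ContinuousOn (fun p : ℝ × ℝ => R p.1 p.2) (Icc (0:ℝ) 1 ×ˢ Ici (0:ℝ)))
    (hRβ : ∀ h ∈ Ioc (0:ℝ) 1, StrictMonoOn (fun β => R h β) (Ici 0))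
    (H : ℝ → ℝ)
    (hHin : ∀ β > (0:ℝ), H β ∈ Ioo (0:ℝ) 1)
    (ψ : ℝ → ℝ → ℝ)
    (hψ : ∀ Δ : ℝ, ∀ β ∈ Icc βlo βhi,
      ψ Δ β ∈ Icc βlo βhi ∧
      ∀ x ∈ Icc βlo βhi, x ≠ ψ Δ β →
        |Δ + R (H β) (ψ Δ β) - R (H β) βstar| < |Δ + R (H β) x - R (H β) βstar|)
    (Δ : ℝ) (hΔ : 0 < Δ) (β : ℝ) (hβ : β ∈ Icc βlo βhi) : ψ Δ β < βstar := by
  by_contra hcon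
  push_neg at hcon
  have hβpos : 0 < β := lt_of_lt_of_le hlo hβ.1
  have hh := hHin β hβpos
  have hhIoc : H β ∈ Ioc (0:ℝ) 1 := ⟨hh.1, hh.2.le⟩
  have hc : ContinuousOn (fun x : ℝ => R (H β) x) (Ici 0) := by
    have hmaps : MapsTo (fun x : ℝ => ((H β, x) : ℝ × ℝ)) (Ici 0) (Icc (0:ℝ) 1 ×ˢ Ici 0) :=
      fun x hx => ⟨⟨hh.1.le, hh.2.le⟩, hx⟩
    exact hRcont.comp ((continuous_const.prodMk continuous_id).continuousOn) hmaps
  have hstar0 : (βstar : ℝ) ∈ Ici (0:ℝ) := le_of_lt (lt_trans hlo hls)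
  have hcw := hc βstar hstar0
  rw [Metric.continuousWithinAt_iff] at hcw
  obtain ⟨δ, hδ, hδ'⟩ := hcw Δ hΔ
  set x := max βlo (βstar - δ/2) with hxdef
  have hx1 : βlo ≤ x := le_max_left _ _
  have hx2 : βstar - δ/2 ≤ x := le_max_right _ _
  have hxlt : x < βstar := max_lt hls (by linarith)
  have hxIcc : x ∈ Icc βlo βhi := ⟨hx1, by linarith⟩
  have hx0 : x ∈ Ici (0:ℝ) := le_of_lt (lt_of_lt_of_le hlo hx1)
  have hdist : dist x βstar < δ := by
    rw [Real.dist_eq, abs_lt]; constructor <;> linarith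
  have h2 : |R (H β) x - R (H β) βstar| < Δ := by
    have := hδ' hx0 hdist
    rwa [Real.dist_eq] at this
  obtain ⟨h2l, h2r⟩ := abs_lt.mp h2
  have hmx : R (H β) x < R (H β) βstar := hRβ (H β) hhIoc hx0 hstar0 hxlt
  have hm0 : ψ Δ β ∈ Ici (0:ℝ) := le_of_lt (lt_of_lt_of_le hlo ((hψ Δ β hβ).1.1))
  have hge : R (H β) βstar ≤ R (H β) (ψ Δ β) :=
    (hRβ (H β) hhIoc).monotoneOn hstar0 hm0 hcon
  have hne : x ≠ ψ Δ β := by intro h; rw [h] at hxlt; linarith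
  have hmin := (hψ Δ β hβ).2 x hxIcc hne
  have e1 : |Δ + R (H β) (ψ Δ β) - R (H β) βstar| = Δ + R (H β) (ψ Δ β) - R (H β) βstar :=
    abs_of_nonneg (by linarith)
  have e2 : |Δ + R (H β) x - R (H β) βstar| < Δ := abs_lt.mpr ⟨by linarith, by linarith⟩
  rw [e1] at hmin
  linarith

/-- The minimizer belief is antitone in the overestimation `Δ`. -/
lemma psi_anti_aux (βlo βstar βhi : ℝ)
    (hlo : 0 < βlo)
    (R : ℝ → ℝ → ℝ)
    (hRβ : ∀ h ∈ Ioc (0:ℝ) 1, StrictMonoOn (fun β => R h β) (Ici 0))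
    (H : ℝ → ℝ)
    (hHin : ∀ β > (0:ℝ), H β ∈ Ioo (0:ℝ) 1)
    (ψ : ℝ → ℝ → ℝ)
    (hψ : ∀ Δ : ℝ, ∀ β ∈ Icc βlo βhi,
      ψ Δ β ∈ Icc βlo βhi ∧
      ∀ x ∈ Icc βlo βhi, x ≠ ψ Δ β →
        |Δ + R (H β) (ψ Δ β) - R (H β) βstar| < |Δ + R (H β) x - R (H β) βstar|)
    (Δ Δ' : ℝ) (hΔΔ' : Δ < Δ') (β : ℝ) (hβ : β ∈ Icc βlo βhi) :
    ψ Δ' β ≤ ψ Δ β := by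
  by_contra hcon
  push_neg at hcon
  have hβpos : 0 < β := lt_of_lt_of_le hlo hβ.1
  have hh := hHin β hβpos
  have hhIoc : H β ∈ Ioc (0:ℝ) 1 := ⟨hh.1, hh.2.le⟩
  have hm0 : ψ Δ β ∈ Ici (0:ℝ) := le_of_lt (lt_of_lt_of_le hlo ((hψ Δ β hβ).1.1))
  have hm'0 : ψ Δ' β ∈ Ici (0:ℝ) := le_of_lt (lt_of_lt_of_le hlo ((hψ Δ' β hβ).1.1))
  have huv : R (H β) (ψ Δ β) < R (H β) (ψ Δ' β) := hRβ (H β) hhIoc hm0 hm'0 hcon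
  have h₁ := (hψ Δ β hβ).2 (ψ Δ' β) ((hψ Δ' β hβ).1) (ne_of_gt hcon)
  have h₂ := (hψ Δ' β hβ).2 (ψ Δ β) ((hψ Δ β hβ).1) (ne_of_lt hcon)
  rcases abs_cases (Δ + R (H β) (ψ Δ β) - R (H β) βstar) with ⟨e1, f1⟩ | ⟨e1, f1⟩ <;>
  rcases abs_cases (Δ + R (H β) (ψ Δ' β) - R (H β) βstar) with ⟨e2, f2⟩ | ⟨e2, f2⟩ <;>
  rcases abs_cases (Δ' + R (H β) (ψ Δ' β) - R (H β) βstar) with ⟨e3, f3⟩ | ⟨e3, f3⟩ <;>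
  rcases abs_cases (Δ' + R (H β) (ψ Δ β) - R (H β) βstar) with ⟨e4, f4⟩ | ⟨e4, f4⟩ <;>
  rw [e1, e2] at h₁ <;> rw [e3, e4] at h₂ <;> linarith

/-- The minimizer belief is monotone in the prior belief `β` (via increasing differences). -/
lemma psi_mono_aux (βlo βstar βhi : ℝ)
    (hlo : 0 < βlo) (hls : βlo < βstar) (hsh : βstar < βhi)
    (R : ℝ → ℝ → ℝ)
    (hRcont : ContinuousOn (fun p : ℝ × ℝ => R p.1 p.2) (Icc (0:ℝ) 1 ×ˢ Ici (0:ℝ)))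
    (hRβ : ∀ h ∈ Ioc (0:ℝ) 1, StrictMonoOn (fun β => R h β) (Ici 0))
    (hRid : ∀ h₁ h₂ β₁ β₂ : ℝ, 0 ≤ h₁ → h₁ < h₂ → h₂ ≤ 1 → 0 ≤ β₁ → β₁ < β₂ →
      R h₂ β₁ - R h₁ β₁ < R h₂ β₂ - R h₁ β₂)
    (H : ℝ → ℝ)
    (hHmono : StrictMonoOn H (Ici 0))
    (hHin : ∀ β > (0:ℝ), H β ∈ Ioo (0:ℝ) 1)
    (ψ : ℝ → ℝ → ℝ)
    (hψ : ∀ Δ : ℝ, ∀ β ∈ Icc βlo βhi,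
      ψ Δ β ∈ Icc βlo βhi ∧
      ∀ x ∈ Icc βlo βhi, x ≠ ψ Δ β →
        |Δ + R (H β) (ψ Δ β) - R (H β) βstar| < |Δ + R (H β) x - R (H β) βstar|)
    (Δ : ℝ) (hΔ : 0 < Δ) (β₁ β₂ : ℝ) (hβ₁ : β₁ ∈ Icc βlo βhi) (hβ₂ : β₂ ∈ Icc βlo βhi)
    (h12 : β₁ ≤ β₂) : ψ Δ β₁ ≤ ψ Δ β₂ := by
  rcases eq_or_lt_of_le h12 with rfl | h12
  · exact le_refl _
  by_contra hcon
  push_neg at hcon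
  have hβ₁pos : 0 < β₁ := lt_of_lt_of_le hlo hβ₁.1
  have hβ₂pos : 0 < β₂ := lt_of_lt_of_le hlo hβ₂.1
  have hh₁ := hHin β₁ hβ₁pos
  have hh₂ := hHin β₂ hβ₂pos
  have hHlt : H β₁ < H β₂ := hHmono hβ₁pos.le hβ₂pos.le h12
  have hh₁Ioc : H β₁ ∈ Ioc (0:ℝ) 1 := ⟨hh₁.1, hh₁.2.le⟩
  have hh₂Ioc : H β₂ ∈ Ioc (0:ℝ) 1 := ⟨hh₂.1, hh₂.2.le⟩
  have hm₁0 : ψ Δ β₁ ∈ Ici (0:ℝ) := le_of_lt (lt_of_lt_of_le hlo ((hψ Δ β₁ hβ₁).1.1))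
  have hm₂0 : ψ Δ β₂ ∈ Ici (0:ℝ) := le_of_lt (lt_of_lt_of_le hlo ((hψ Δ β₂ hβ₂).1.1))
  have hm₁s : ψ Δ β₁ < βstar :=
    psi_lt_star_aux βlo βstar βhi hlo hls hsh R hRcont hRβ H hHin ψ hψ Δ hΔ β₁ hβ₁
  have hm₂s : ψ Δ β₂ < βstar := lt_trans hcon hm₁s
  have hab₁ : R (H β₁) (ψ Δ β₂) < R (H β₁) (ψ Δ β₁) := hRβ (H β₁) hh₁Ioc hm₂0 hm₁0 hcon
  have hab₂ : R (H β₂) (ψ Δ β₂) < R (H β₂) (ψ Δ β₁) := hRβ (H β₂) hh₂Ioc hm₂0 hm₁0 hcon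
  have hida : R (H β₂) (ψ Δ β₂) - R (H β₁) (ψ Δ β₂) < R (H β₂) βstar - R (H β₁) βstar :=
    hRid (H β₁) (H β₂) (ψ Δ β₂) βstar hh₁.1.le hHlt hh₂.2.le hm₂0 hm₂s
  have hidb : R (H β₂) (ψ Δ β₁) - R (H β₁) (ψ Δ β₁) < R (H β₂) βstar - R (H β₁) βstar :=
    hRid (H β₁) (H β₂) (ψ Δ β₁) βstar hh₁.1.le hHlt hh₂.2.le hm₁0 hm₁s
  have h₁ := (hψ Δ β₁ hβ₁).2 (ψ Δ β₂) ((hψ Δ β₂ hβ₂).1) (ne_of_lt hcon)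
  have h₂ := (hψ Δ β₂ hβ₂).2 (ψ Δ β₁) ((hψ Δ β₁ hβ₁).1) (ne_of_gt hcon)
  rcases abs_cases (Δ + R (H β₁) (ψ Δ β₁) - R (H β₁) βstar) with ⟨e1, f1⟩ | ⟨e1, f1⟩ <;>
  rcases abs_cases (Δ + R (H β₁) (ψ Δ β₂) - R (H β₁) βstar) with ⟨e2, f2⟩ | ⟨e2, f2⟩ <;>
  rcases abs_cases (Δ + R (H β₂) (ψ Δ β₂) - R (H β₂) βstar) with ⟨e3, f3⟩ | ⟨e3, f3⟩ <;>
  rcases abs_cases (Δ + R (H β₂) (ψ Δ β₁) - R (H β₂) βstar) with ⟨e4, f4⟩ | ⟨e4, f4⟩ <;>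
  rw [e1, e2] at h₁ <;> rw [e3, e4] at h₂ <;> linarith

/-- Above any point `y ≤ F y` there is a stable fixed point (greatest fixed point of the
monotone map `F` on `[y, βhi]` must cross from above). -/
lemma exists_stable_above_aux (βlo βstar βhi : ℝ) (hsh : βstar < βhi)
    (F : ℝ → ℝ)
    (hmap : ∀ t ∈ Icc βlo βhi, F t ∈ Icc βlo βhi)
    (hmono : ∀ s ∈ Icc βlo βhi, ∀ t ∈ Icc βlo βhi, s ≤ t → F s ≤ F t)
    (hlt : ∀ t ∈ Icc βlo βhi, F t < βstar)
    (hcross : ∀ bhat ∈ Icc βlo βhi, F bhat = bhat →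
      CrossesFromAbove F βlo βhi bhat ∨ CrossesFromBelow F βlo βhi bhat)
    (y : ℝ) (hy : y ∈ Icc βlo βhi) (hyF : y ≤ F y) :
    ∃ c ∈ Icc βlo βhi, F c = c ∧ CrossesFromAbove F βlo βhi c ∧ y ≤ c := by
  have hsub : ∀ t ∈ Icc y βhi, t ∈ Icc βlo βhi := fun t ht => ⟨le_trans hy.1 ht.1, ht.2⟩
  obtain ⟨c, hcI, hcfix, hcmax⟩ :=
    tarski_aux F y βhi hy.2
      (fun t ht => ⟨le_trans hyF (hmono y hy t (hsub t ht) ht.1), (hmap t (hsub t ht)).2⟩)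
      (fun s hs t ht h => hmono s (hsub s hs) t (hsub t ht) h)
  have hcIcc : c ∈ Icc βlo βhi := hsub c hcI
  have hcs : c < βstar := hcfix ▸ hlt c hcIcc
  have hch : c < βhi := lt_trans hcs hsh
  have hnb : ¬ CrossesFromBelow F βlo βhi c := by
    rintro ⟨ε, hε, -, hr⟩
    set t := min (c + ε/2) ((c + βhi)/2) with htdef
    have ht1 : c < t := lt_min (by linarith) (by linarith)
    have ht2 : t < c + ε := lt_of_le_of_lt (min_le_left _ _) (by linarith)
    have ht3 : t ≤ βhi := le_trans (min_le_right _ _) (by linarith)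
    have htI : t ∈ Icc βlo βhi := ⟨le_trans hcIcc.1 ht1.le, ht3⟩
    have h1 := hr t ⟨⟨ht1, ht2⟩, htI⟩
    have h2 := hcmax t ⟨le_trans hcI.1 ht1.le, ht3⟩ h1.le
    linarith
  rcases hcross c hcIcc hcfix with h | h
  · exact ⟨c, hcIcc, hcfix, h, hcI.1⟩
  · exact absurd h hnb

/-- Below any stable fixed point of `F` there is a stable fixed point of `G ≤ F`. -/
lemma exists_stable_below_aux (βlo βstar βhi : ℝ) (hsh : βstar < βhi)
    (F G : ℝ → ℝ)
    (hmapG : ∀ t ∈ Icc βlo βhi, G t ∈ Icc βlo βhi)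
    (hmonoG : ∀ s ∈ Icc βlo βhi, ∀ t ∈ Icc βlo βhi, s ≤ t → G s ≤ G t)
    (hltF : ∀ t ∈ Icc βlo βhi, F t < βstar)
    (hGF : ∀ t ∈ Icc βlo βhi, G t ≤ F t)
    (hcross' : ∀ bhat ∈ Icc βlo βhi, G bhat = bhat →
      CrossesFromAbove G βlo βhi bhat ∨ CrossesFromBelow G βlo βhi bhat)
    (x : ℝ) (hx : x ∈ Icc βlo βhi) (hxfix : F x = x)
    (hxstab : CrossesFromAbove F βlo βhi x) :
    ∃ c ∈ Icc βlo βhi, G c = c ∧ CrossesFromAbove G βlo βhi c ∧ c ≤ x := by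
  have hsub : ∀ t ∈ Icc βlo x, t ∈ Icc βlo βhi := fun t ht => ⟨ht.1, le_trans ht.2 hx.2⟩
  obtain ⟨c, hcI, hcfix, hcmax⟩ :=
    tarski_aux G βlo x hx.1
      (fun t ht => ⟨(hmapG t (hsub t ht)).1,
        le_trans (hmonoG t (hsub t ht) x hx ht.2) (le_trans (hGF x hx) (le_of_eq hxfix))⟩)
      (fun s hs t ht h => hmonoG s (hsub s hs) t (hsub t ht) h)
  have hcIcc : c ∈ Icc βlo βhi := hsub c hcI
  have hxh : x < βhi := lt_trans (hxfix ▸ hltF x hx) hsh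
  have hnb : ¬ CrossesFromBelow G βlo βhi c := by
    rintro ⟨ε, hε, -, hr⟩
    rcases eq_or_lt_of_le hcI.2 with rfl | hcx
    · obtain ⟨ε', hε', -, hr'⟩ := hxstab
      set t := min (c + min ε ε' / 2) ((c + βhi)/2) with htdef
      have hmm : 0 < min ε ε' := lt_min hε hε'
      have ht1 : c < t := lt_min (by linarith) (by linarith)
      have ht2 : t < c + ε :=
        lt_of_le_of_lt (min_le_left _ _) (by have := min_le_left ε ε'; linarith)
      have ht2' : t < c + ε' :=
        lt_of_le_of_lt (min_le_left _ _) (by have := min_le_right ε ε'; linarith)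
      have ht3 : t ≤ βhi := le_trans (min_le_right _ _) (by linarith)
      have htI : t ∈ Icc βlo βhi := ⟨le_trans hcIcc.1 ht1.le, ht3⟩
      have h1 := hr t ⟨⟨ht1, ht2⟩, htI⟩
      have h2 := hr' t ⟨⟨ht1, ht2'⟩, htI⟩
      have h3 := hGF t htI
      linarith
    · set t := min (c + ε/2) ((c + x)/2) with htdef
      have ht1 : c < t := lt_min (by linarith) (by linarith)
      have ht2 : t < c + ε := lt_of_le_of_lt (min_le_left _ _) (by linarith)
      have ht3 : t ≤ x := le_trans (min_le_right _ _) (by linarith)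
      have htI : t ∈ Icc βlo βhi := ⟨le_trans hcIcc.1 ht1.le, le_trans ht3 hx.2⟩
      have h1 := hr t ⟨⟨ht1, ht2⟩, htI⟩
      have h2 := hcmax t ⟨le_trans hcI.1 ht1.le, ht3⟩ h1.le
      linarith
  rcases hcross' c hcIcc hcfix with h | h
  · exact ⟨c, hcIcc, hcfix, h, hcI.2⟩
  · exact absurd h hnb

theorem stmt_9
    (βlo βstar βhi : ℝ)
    (hlo : 0 < βlo) (hls : βlo < βstar) (hsh : βstar < βhi)
    (R : ℝ → ℝ → ℝ)
    (hRcont : ContinuousOn (fun p : ℝ × ℝ => R p.1 p.2) (Icc (0:ℝ) 1 ×ˢ Ici (0:ℝ)))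
    (hR0 : ∀ h ∈ Icc (0:ℝ) 1, R h 0 = 0)
    (hR0' : ∀ β ∈ Ici (0:ℝ), R 0 β = 0)
    (hRβ : ∀ h ∈ Ioc (0:ℝ) 1, StrictMonoOn (fun β => R h β) (Ici 0))
    (hRh : ∀ β > (0:ℝ), StrictMonoOn (fun h => R h β) (Icc 0 1))
    (hRid : ∀ h₁ h₂ β₁ β₂ : ℝ, 0 ≤ h₁ → h₁ < h₂ → h₂ ≤ 1 → 0 ≤ β₁ → β₁ < β₂ →
      R h₂ β₁ - R h₁ β₁ < R h₂ β₂ - R h₁ β₂)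
    (H : ℝ → ℝ)
    (hHcont : ContinuousOn H (Ici 0))
    (hHmono : StrictMonoOn H (Ici 0))
    (hH0 : H 0 = 0)
    (hHin : ∀ β > (0:ℝ), H β ∈ Ioo (0:ℝ) 1)
    (ψ : ℝ → ℝ → ℝ)
    (hψ : ∀ Δ : ℝ, ∀ β ∈ Icc βlo βhi,
      ψ Δ β ∈ Icc βlo βhi ∧
      ∀ x ∈ Icc βlo βhi, x ≠ ψ Δ β →
        |Δ + R (H β) (ψ Δ β) - R (H β) βstar| < |Δ + R (H β) x - R (H β) βstar|)
    (Δ Δ' : ℝ) (hΔ : 0 < Δ) (hΔΔ' : Δ < Δ')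
    (hcross : ∀ bhat ∈ Icc βlo βhi, ψ Δ bhat = bhat →
      CrossesFromAbove (ψ Δ) βlo βhi bhat ∨ CrossesFromBelow (ψ Δ) βlo βhi bhat)
    (hcross' : ∀ bhat ∈ Icc βlo βhi, ψ Δ' bhat = bhat →
      CrossesFromAbove (ψ Δ') βlo βhi bhat ∨ CrossesFromBelow (ψ Δ') βlo βhi bhat) :
    {x : ℝ | x ∈ Icc βlo βhi ∧ ψ Δ x = x ∧ CrossesFromAbove (ψ Δ) βlo βhi x}.Nonempty ∧
    {y : ℝ | y ∈ Icc βlo βhi ∧ ψ Δ' y = y ∧ CrossesFromAbove (ψ Δ') βlo βhi y}.Nonempty ∧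
    (∀ x ∈ {x : ℝ | x ∈ Icc βlo βhi ∧ ψ Δ x = x ∧ CrossesFromAbove (ψ Δ) βlo βhi x},
      ∃ y ∈ {y : ℝ | y ∈ Icc βlo βhi ∧ ψ Δ' y = y ∧ CrossesFromAbove (ψ Δ') βlo βhi y},
        y ≤ x) ∧
    (∀ y ∈ {y : ℝ | y ∈ Icc βlo βhi ∧ ψ Δ' y = y ∧ CrossesFromAbove (ψ Δ') βlo βhi y},
      ∃ x ∈ {x : ℝ | x ∈ Icc βlo βhi ∧ ψ Δ x = x ∧ CrossesFromAbove (ψ Δ) βlo βhi x},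
        y ≤ x) := by
  have hΔ' : 0 < Δ' := lt_trans hΔ hΔΔ'
  have hmapΔ : ∀ t ∈ Icc βlo βhi, ψ Δ t ∈ Icc βlo βhi := fun t ht => (hψ Δ t ht).1
  have hmapΔ' : ∀ t ∈ Icc βlo βhi, ψ Δ' t ∈ Icc βlo βhi := fun t ht => (hψ Δ' t ht).1
  have hmonoΔ : ∀ s ∈ Icc βlo βhi, ∀ t ∈ Icc βlo βhi, s ≤ t → ψ Δ s ≤ ψ Δ t :=
    fun s hs t ht h =>
      psi_mono_aux βlo βstar βhi hlo hls hsh R hRcont hRβ hRid H hHmono hHin ψ hψ Δ hΔ s t hs ht h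
  have hmonoΔ' : ∀ s ∈ Icc βlo βhi, ∀ t ∈ Icc βlo βhi, s ≤ t → ψ Δ' s ≤ ψ Δ' t :=
    fun s hs t ht h =>
      psi_mono_aux βlo βstar βhi hlo hls hsh R hRcont hRβ hRid H hHmono hHin ψ hψ Δ' hΔ' s t hs ht h
  have hltΔ : ∀ t ∈ Icc βlo βhi, ψ Δ t < βstar := fun t ht =>
    psi_lt_star_aux βlo βstar βhi hlo hls hsh R hRcont hRβ H hHin ψ hψ Δ hΔ t ht
  have hltΔ' : ∀ t ∈ Icc βlo βhi, ψ Δ' t < βstar := fun t ht =>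
    psi_lt_star_aux βlo βstar βhi hlo hls hsh R hRcont hRβ H hHin ψ hψ Δ' hΔ' t ht
  have hGF : ∀ t ∈ Icc βlo βhi, ψ Δ' t ≤ ψ Δ t := fun t ht =>
    psi_anti_aux βlo βstar βhi hlo R hRβ H hHin ψ hψ Δ Δ' hΔΔ' t ht
  have hloI : βlo ∈ Icc βlo βhi := ⟨le_refl _, by linarith⟩
  -- a stable fixed point of ψ Δ exists
  obtain ⟨x₀, hx₀I, hx₀fix, hx₀cross, -⟩ :=
    exists_stable_above_aux βlo βstar βhi hsh (ψ Δ) hmapΔ hmonoΔ hltΔ hcross βlo hloI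
      (hmapΔ βlo hloI).1
  -- forward direction: below every stable fixed point of ψ Δ there is one of ψ Δ'
  have hfwd : ∀ x ∈ {x : ℝ | x ∈ Icc βlo βhi ∧ ψ Δ x = x ∧ CrossesFromAbove (ψ Δ) βlo βhi x},
      ∃ y ∈ {y : ℝ | y ∈ Icc βlo βhi ∧ ψ Δ' y = y ∧ CrossesFromAbove (ψ Δ') βlo βhi y},
        y ≤ x := by
    rintro x ⟨hxI, hxfix, hxcross⟩
    obtain ⟨c, hcI, hcfix, hccross, hcx⟩ :=
      exists_stable_below_aux βlo βstar βhi hsh (ψ Δ) (ψ Δ') hmapΔ' hmonoΔ' hltΔ hGF hcross'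
        x hxI hxfix hxcross
    exact ⟨c, ⟨hcI, hcfix, hccross⟩, hcx⟩
  refine ⟨⟨x₀, hx₀I, hx₀fix, hx₀cross⟩, ?_, hfwd, ?_⟩
  · obtain ⟨y, hy, -⟩ := hfwd x₀ ⟨hx₀I, hx₀fix, hx₀cross⟩
    exact ⟨y, hy⟩
  · rintro y ⟨hyI, hyfix, hycross⟩
    have hyF : y ≤ ψ Δ y := le_trans (le_of_eq hyfix.symm) (hGF y hyI)
    obtain ⟨c, hcI, hcfix, hccross, hyc⟩ :=
      exists_stable_above_aux βlo βstar βhi hsh (ψ Δ) hmapΔ hmonoΔ hltΔ hcross y hyI hyF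
    exact ⟨c, ⟨hcI, hcfix, hccross⟩, hyc⟩
end

section
/- (Theorem 2 (i), underestimation case) Suppose Δ′ < Δ < 0. Then ψ̃_Δ and ψ̃_{Δ′} each have a unique fixed point, β̂_Δ and β̂_{Δ′} respectively, and β* < β̂_Δ ≤ β̂_{Δ′}: the distortion β̂ − β* > 0 of the unique (stable) Berk–Nash equilibrium weakly increases when the underestimation |Δ| increases. -/
/-!
Write `g_β(x) = R(h(β), x) - R(h(β), β*)`, so that `ψ̃_Δ(β)` is the point of `[βlo, βhi]` closest
to a root of the strictly increasing continuous map `x ↦ Δ + g_β(x)`. Hence `β` is a fixed point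
exactly when `Δ + g_β(β) = 0`, or `β = βhi` and `Δ + g_β(β) ≤ 0`. Since `g_β(β) ≤ 0` for
`β ≤ β*`, every fixed point lies above `β*`, and there increasing differences make
`β ↦ g_β(β)` strictly increasing, vanishing at `β*`. The intermediate value theorem gives a fixed
point, and the same monotonicity gives both uniqueness and the comparison: lowering `Δ` moves the
root of `Δ + g_β(β)` to the right.
-/

open Set

theorem eq_right_of_isMinOn_abs_of_neg {f : ℝ → ℝ} {a b x : ℝ} (hf : ContinuousOn f (Icc a b))
    (hmono : StrictMonoOn f (Icc a b)) (hx : x ∈ Icc a b)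
    (hmin : IsMinOn (fun y => |f y|) (Icc a b) x) (hneg : f x < 0) : x = b := by
  by_contra hne
  have hxb : x < b := hx.2.lt_of_ne hne
  have hb : b ∈ Icc a b := ⟨hx.1.trans hx.2, le_rfl⟩
  rcases le_or_gt (f b) 0 with hfb | hfb
  · have hlt : f x < f b := hmono hx hb hxb
    have hle : |f x| ≤ |f b| := hmin hb
    rw [abs_of_neg hneg, abs_of_nonpos hfb] at hle
    linarith
  · obtain ⟨y, hy, hy0⟩ := intermediate_value_Icc hx.2 (hf.mono (Icc_subset_Icc_left hx.1))
      ⟨hneg.le, hfb.le⟩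
    have hle : |f x| ≤ |f y| := hmin ⟨hx.1.trans hy.1, hy.2⟩
    rw [hy0, abs_zero, abs_of_neg hneg] at hle
    linarith

theorem eq_left_of_isMinOn_abs_of_pos {f : ℝ → ℝ} {a b x : ℝ} (hf : ContinuousOn f (Icc a b))
    (hmono : StrictMonoOn f (Icc a b)) (hx : x ∈ Icc a b)
    (hmin : IsMinOn (fun y => |f y|) (Icc a b) x) (hpos : 0 < f x) : x = a := by
  by_contra hne
  have hax : a < x := hx.1.lt_of_ne' hne
  have ha : a ∈ Icc a b := ⟨le_rfl, hx.1.trans hx.2⟩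
  rcases le_or_gt 0 (f a) with hfa | hfa
  · have hlt : f a < f x := hmono ha hx hax
    have hle : |f x| ≤ |f a| := hmin ha
    rw [abs_of_pos hpos, abs_of_nonneg hfa] at hle
    linarith
  · obtain ⟨y, hy, hy0⟩ := intermediate_value_Icc hx.1 (hf.mono (Icc_subset_Icc_right hx.2))
      ⟨hfa.le, hpos.le⟩
    have hle : |f x| ≤ |f y| := hmin ⟨hy.1, hy.2.trans hx.2⟩
    rw [hy0, abs_zero, abs_of_pos hpos] at hle
    linarith

theorem isMinOn_iff_eq_of_forall_lt {α γ : Type*} [LinearOrder γ] {f : α → γ} {s : Set α}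
    {a b : α} (ha : a ∈ s) (hb : b ∈ s) (hlt : ∀ x ∈ s, x ≠ a → f a < f x) :
    IsMinOn f s b ↔ b = a := by
  refine ⟨fun hmin => ?_, ?_⟩
  · by_contra hne
    exact (hmin ha).not_gt (hlt b hb hne)
  · rintro rfl x hx
    rcases eq_or_ne x b with rfl | hne
    exacts [le_rfl, (hlt x hx hne).le]

structure IsEffortModel (R : ℝ → ℝ → ℝ) (H : ℝ → ℝ) : Prop where
  continuousOn : ContinuousOn (fun p : ℝ × ℝ => R p.1 p.2) (Icc 0 1 ×ˢ Ici 0)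
  strictMonoOn_right : ∀ h ∈ Ioc (0 : ℝ) 1, StrictMonoOn (R h) (Ici 0)
  increasingDifferences : ∀ h₁ h₂ β₁ β₂ : ℝ, 0 ≤ h₁ → h₁ < h₂ → h₂ ≤ 1 → 0 ≤ β₁ → β₁ < β₂ →
    R h₂ β₁ - R h₁ β₁ < R h₂ β₂ - R h₁ β₂
  continuousOn_assess : ContinuousOn H (Ici 0)
  strictMonoOn_assess : StrictMonoOn H (Ici 0)
  assess_mem_Ioo : ∀ β > (0 : ℝ), H β ∈ Ioo 0 1

def effortGap (R : ℝ → ℝ → ℝ) (H : ℝ → ℝ) (βstar β x : ℝ) : ℝ :=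
  R (H β) x - R (H β) βstar

/-- `ψ` is the map `ψ̃_Δ` of the paper. -/
def IsBestFit (R : ℝ → ℝ → ℝ) (H : ℝ → ℝ) (βlo βstar βhi Δ : ℝ) (ψ : ℝ → ℝ) : Prop :=
  ∀ β ∈ Icc βlo βhi, ψ β ∈ Icc βlo βhi ∧
    ∀ x ∈ Icc βlo βhi, x ≠ ψ β → |Δ + effortGap R H βstar β (ψ β)| < |Δ + effortGap R H βstar β x|

variable {R : ℝ → ℝ → ℝ} {H : ℝ → ℝ} {βlo βstar βhi Δ β : ℝ}

@[simp]
theorem effortGap_self_right : effortGap R H βstar β βstar = 0 :=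
  sub_self _

namespace IsEffortModel

theorem strictMonoOn_effortGap (hM : IsEffortModel R H) (hβ : 0 < β) :
    StrictMonoOn (effortGap R H βstar β) (Ici 0) := fun _ hx _ hy hxy =>
  sub_lt_sub_right
    (hM.strictMonoOn_right (H β) (Ioo_subset_Ioc_self (hM.assess_mem_Ioo β hβ)) hx hy hxy) _

theorem continuousOn_effortGap (hM : IsEffortModel R H) (hβ : 0 < β) :
    ContinuousOn (effortGap R H βstar β) (Ici 0) :=
  (hM.continuousOn.comp (continuous_const.prodMk continuous_id).continuousOn
    fun _ hx => ⟨Ioo_subset_Icc_self (hM.assess_mem_Ioo β hβ), hx⟩).sub continuousOn_const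

theorem continuousOn_effortGap_diag (hM : IsEffortModel R H) (hs : 0 ≤ βstar) :
    ContinuousOn (fun β => effortGap R H βstar β β) (Ioi 0) := by
  have hH : ∀ β ∈ Ioi (0 : ℝ), H β ∈ Icc 0 1 := fun β hβ =>
    Ioo_subset_Icc_self (hM.assess_mem_Ioo β hβ)
  have hHc : ContinuousOn H (Ioi 0) := hM.continuousOn_assess.mono Ioi_subset_Ici_self
  exact (hM.continuousOn.comp (hHc.prodMk continuousOn_id) fun β hβ => ⟨hH β hβ, Ioi_subset_Ici_self hβ⟩).sub
    (hM.continuousOn.comp (hHc.prodMk continuousOn_const) fun β hβ => ⟨hH β hβ, hs⟩)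

theorem effortGap_diag_nonpos (hM : IsEffortModel R H) (hβ : 0 < β) (hβs : β ≤ βstar) :
    effortGap R H βstar β β ≤ 0 :=
  ((hM.strictMonoOn_effortGap hβ).monotoneOn hβ.le (hβ.le.trans hβs) hβs).trans_eq
    effortGap_self_right

theorem strictMonoOn_effortGap_diag (hM : IsEffortModel R H) (hs : 0 < βstar) :
    StrictMonoOn (fun β => effortGap R H βstar β β) (Ici βstar) := by
  intro a ha b hb hab
  have hb0 : 0 < b := hs.trans_le hb
  have hgap : effortGap R H βstar b a < effortGap R H βstar b b :=
    hM.strictMonoOn_effortGap hb0 (hs.le.trans ha) hb0.le hab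
  suffices effortGap R H βstar a a ≤ effortGap R H βstar b a from this.trans_lt hgap
  rcases (mem_Ici.1 ha).eq_or_lt with rfl | has
  · simp
  · have hHa := hM.assess_mem_Ioo a (hs.trans has)
    have hdiff := hM.increasingDifferences (H a) (H b) βstar a hHa.1.le
      (hM.strictMonoOn_assess (hs.trans has).le hb0.le hab) (hM.assess_mem_Ioo b hb0).2.le hs.le has
    simp only [effortGap]
    linarith

variable {ψ ψ' : ℝ → ℝ} {Δ' b b' : ℝ}

theorem apply_eq_self_iff (hM : IsEffortModel R H) (hψ : IsBestFit R H βlo βstar βhi Δ ψ)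
    (hlo : 0 < βlo) (hls : βlo ≤ βstar) (hΔ : Δ < 0) (hβ : β ∈ Icc βlo βhi) :
    ψ β = β ↔ Δ + effortGap R H βstar β β ≤ 0 ∧ (Δ + effortGap R H βstar β β < 0 → β = βhi) := by
  have hβ0 : 0 < β := hlo.trans_le hβ.1
  set f := fun x => Δ + effortGap R H βstar β x
  have hIcc : Icc βlo βhi ⊆ Ici 0 := fun x hx => hlo.le.trans hx.1
  have hf : ContinuousOn f (Icc βlo βhi) :=
    (continuousOn_const.add (hM.continuousOn_effortGap hβ0)).mono hIcc
  have hmono : StrictMonoOn f (Icc βlo βhi) := fun x hx y hy hxy =>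
    add_lt_add_right (hM.strictMonoOn_effortGap hβ0 (hIcc hx) (hIcc hy) hxy) Δ
  rw [eq_comm, ← isMinOn_iff_eq_of_forall_lt (f := fun x => |f x|) (hψ β hβ).1 hβ (hψ β hβ).2]
  constructor
  · intro hmin
    refine ⟨not_lt.1 fun hpos => ?_, eq_right_of_isMinOn_abs_of_neg hf hmono hβ hmin⟩
    obtain rfl := eq_left_of_isMinOn_abs_of_pos hf hmono hβ hmin hpos
    have := hM.effortGap_diag_nonpos hlo hls
    linarith
  · rintro ⟨hle, hcorner⟩ x hx
    show |Δ + effortGap R H βstar β β| ≤ |Δ + effortGap R H βstar β x|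
    rcases hle.lt_or_eq with hneg | hzero
    · obtain rfl := hcorner hneg
      have hfx : Δ + effortGap R H βstar β x ≤ Δ + effortGap R H βstar β β :=
        hmono.monotoneOn hx hβ hx.2
      rw [abs_of_neg hneg, abs_of_neg (hfx.trans_lt hneg)]
      linarith
    · rw [hzero, abs_zero]
      exact abs_nonneg _

theorem lt_of_apply_eq_self (hM : IsEffortModel R H) (hψ : IsBestFit R H βlo βstar βhi Δ ψ)
    (hlo : 0 < βlo) (hls : βlo ≤ βstar) (hsh : βstar < βhi) (hΔ : Δ < 0)
    (hβ : β ∈ Icc βlo βhi) (hfix : ψ β = β) : βstar < β := by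
  by_contra! hle
  have hneg : Δ + effortGap R H βstar β β < 0 := by
    have := hM.effortGap_diag_nonpos (hlo.trans_le hβ.1) hle
    linarith
  have := ((hM.apply_eq_self_iff hψ hlo hls hΔ hβ).1 hfix).2 hneg
  linarith

theorem le_of_apply_eq_self (hM : IsEffortModel R H) (hψ : IsBestFit R H βlo βstar βhi Δ ψ)
    (hψ' : IsBestFit R H βlo βstar βhi Δ' ψ') (hlo : 0 < βlo) (hls : βlo ≤ βstar)
    (hsh : βstar < βhi) (hΔ' : Δ' ≤ Δ) (hΔ : Δ < 0) (hb : b ∈ Icc βlo βhi)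
    (hb' : b' ∈ Icc βlo βhi) (hfix : ψ b = b) (hfix' : ψ' b' = b') : b ≤ b' := by
  have hΔ'neg : Δ' < 0 := hΔ'.trans_lt hΔ
  obtain ⟨hnonpos, -⟩ := (hM.apply_eq_self_iff hψ hlo hls hΔ hb).1 hfix
  obtain ⟨-, hcorner'⟩ := (hM.apply_eq_self_iff hψ' hlo hls hΔ'neg hb').1 hfix'
  by_contra! hlt
  -- `b'` lies below `b ≤ βhi`, so it is an interior root for `Δ'`.
  have hroot' : 0 ≤ Δ' + effortGap R H βstar b' b' :=
    not_lt.1 fun hneg => (hcorner' hneg ▸ hlt).not_ge hb.2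
  have hs' : βstar < b' := hM.lt_of_apply_eq_self hψ' hlo hls hsh hΔ'neg hb' hfix'
  have := hM.strictMonoOn_effortGap_diag (hlo.trans_le hls) hs'.le (hs'.trans hlt).le hlt
  dsimp only at this
  linarith

theorem exists_apply_eq_self (hM : IsEffortModel R H) (hψ : IsBestFit R H βlo βstar βhi Δ ψ)
    (hlo : 0 < βlo) (hls : βlo ≤ βstar) (hsh : βstar ≤ βhi) (hΔ : Δ < 0) :
    ∃ b ∈ Icc βlo βhi, ψ b = b := by
  have hhi : βhi ∈ Icc βlo βhi := ⟨hls.trans hsh, le_rfl⟩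
  rcases le_or_gt (Δ + effortGap R H βstar βhi βhi) 0 with hcorner | hpos
  · exact ⟨βhi, hhi, (hM.apply_eq_self_iff hψ hlo hls hΔ hhi).2 ⟨hcorner, fun _ => rfl⟩⟩
  · have hcont : ContinuousOn (fun β => Δ + effortGap R H βstar β β) (Icc βstar βhi) :=
      (continuousOn_const.add (hM.continuousOn_effortGap_diag (hlo.trans_le hls).le)).mono
        fun x hx => (hlo.trans_le hls).trans_le hx.1
    obtain ⟨b, hb, hb0⟩ := intermediate_value_Icc hsh hcont
      ⟨by simpa using hΔ.le, hpos.le⟩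
    have hbmem : b ∈ Icc βlo βhi := ⟨hls.trans hb.1, hb.2⟩
    exact ⟨b, hbmem, (hM.apply_eq_self_iff hψ hlo hls hΔ hbmem).2
      ⟨hb0.le, fun hneg => absurd hb0 hneg.ne⟩⟩

end IsEffortModel

theorem stmt_10_general
    (βlo βstar βhi : ℝ)
    (hlo : 0 < βlo) (hls : βlo < βstar) (hsh : βstar < βhi)
    (R : ℝ → ℝ → ℝ)
    (hRcont : ContinuousOn (fun p : ℝ × ℝ => R p.1 p.2) (Icc (0:ℝ) 1 ×ˢ Ici (0:ℝ)))
    (hRβ : ∀ h ∈ Ioc (0:ℝ) 1, StrictMonoOn (fun β => R h β) (Ici 0))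
    (hRid : ∀ h₁ h₂ β₁ β₂ : ℝ, 0 ≤ h₁ → h₁ < h₂ → h₂ ≤ 1 → 0 ≤ β₁ → β₁ < β₂ →
      R h₂ β₁ - R h₁ β₁ < R h₂ β₂ - R h₁ β₂)
    (H : ℝ → ℝ)
    (hHcont : ContinuousOn H (Ici 0))
    (hHmono : StrictMonoOn H (Ici 0))
    (hHin : ∀ β > (0:ℝ), H β ∈ Ioo (0:ℝ) 1)
    (ψ : ℝ → ℝ → ℝ)
    (hψ : ∀ Δ : ℝ, ∀ β ∈ Icc βlo βhi,
      ψ Δ β ∈ Icc βlo βhi ∧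
      ∀ x ∈ Icc βlo βhi, x ≠ ψ Δ β →
        |Δ + R (H β) (ψ Δ β) - R (H β) βstar| < |Δ + R (H β) x - R (H β) βstar|)
    (Δ Δ' : ℝ) (hΔ' : Δ' < Δ) (hΔ : Δ < 0) :
    ∃ bΔ bΔ' : ℝ,
      (bΔ ∈ Icc βlo βhi ∧ ψ Δ bΔ = bΔ ∧ ∀ x ∈ Icc βlo βhi, ψ Δ x = x → x = bΔ) ∧
      (bΔ' ∈ Icc βlo βhi ∧ ψ Δ' bΔ' = bΔ' ∧ ∀ x ∈ Icc βlo βhi, ψ Δ' x = x → x = bΔ') ∧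
      βstar < bΔ ∧ bΔ ≤ bΔ' := by
  have hM : IsEffortModel R H := ⟨hRcont, hRβ, hRid, hHcont, hHmono, hHin⟩
  have hfit : ∀ D, IsBestFit R H βlo βstar βhi D (ψ D) := fun D β hβ => by
    simpa only [effortGap, add_sub_assoc] using hψ D β hβ
  have hΔ'neg : Δ' < 0 := hΔ'.trans hΔ
  have huniq : ∀ D < 0, ∀ b ∈ Icc βlo βhi, ψ D b = b → ∀ x ∈ Icc βlo βhi, ψ D x = x → x = b :=
    fun D hD b hb hfix x hx hfx => le_antisymm
      (hM.le_of_apply_eq_self (hfit D) (hfit D) hlo hls.le hsh le_rfl hD hx hb hfx hfix)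
      (hM.le_of_apply_eq_self (hfit D) (hfit D) hlo hls.le hsh le_rfl hD hb hx hfix hfx)
  obtain ⟨b, hb, hfix⟩ := hM.exists_apply_eq_self (hfit Δ) hlo hls.le hsh.le hΔ
  obtain ⟨b', hb', hfix'⟩ := hM.exists_apply_eq_self (hfit Δ') hlo hls.le hsh.le hΔ'neg
  exact ⟨b, b', ⟨hb, hfix, huniq Δ hΔ b hb hfix⟩, ⟨hb', hfix', huniq Δ' hΔ'neg b' hb' hfix'⟩,
    hM.lt_of_apply_eq_self (hfit Δ) hlo hls.le hsh hΔ hb hfix,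
    hM.le_of_apply_eq_self (hfit Δ) (hfit Δ') hlo hls.le hsh hΔ'.le hΔ hb hb' hfix hfix'⟩

theorem stmt_10
    (βlo βstar βhi : ℝ)
    (hlo : 0 < βlo) (hls : βlo < βstar) (hsh : βstar < βhi)
    (R : ℝ → ℝ → ℝ)
    (hRcont : ContinuousOn (fun p : ℝ × ℝ => R p.1 p.2) (Icc (0:ℝ) 1 ×ˢ Ici (0:ℝ)))
    (hR0 : ∀ h ∈ Icc (0:ℝ) 1, R h 0 = 0)
    (hR0' : ∀ β ∈ Ici (0:ℝ), R 0 β = 0)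
    (hRβ : ∀ h ∈ Ioc (0:ℝ) 1, StrictMonoOn (fun β => R h β) (Ici 0))
    (hRh : ∀ β > (0:ℝ), StrictMonoOn (fun h => R h β) (Icc 0 1))
    (hRid : ∀ h₁ h₂ β₁ β₂ : ℝ, 0 ≤ h₁ → h₁ < h₂ → h₂ ≤ 1 → 0 ≤ β₁ → β₁ < β₂ →
      R h₂ β₁ - R h₁ β₁ < R h₂ β₂ - R h₁ β₂)
    (H : ℝ → ℝ)
    (hHcont : ContinuousOn H (Ici 0))
    (hHmono : StrictMonoOn H (Ici 0))
    (hH0 : H 0 = 0)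
    (hHin : ∀ β > (0:ℝ), H β ∈ Ioo (0:ℝ) 1)
    (ψ : ℝ → ℝ → ℝ)
    (hψ : ∀ Δ : ℝ, ∀ β ∈ Icc βlo βhi,
      ψ Δ β ∈ Icc βlo βhi ∧
      ∀ x ∈ Icc βlo βhi, x ≠ ψ Δ β →
        |Δ + R (H β) (ψ Δ β) - R (H β) βstar| < |Δ + R (H β) x - R (H β) βstar|)
    (Δ Δ' : ℝ) (hΔ' : Δ' < Δ) (hΔ : Δ < 0) :
    ∃ bΔ bΔ' : ℝ,
      (bΔ ∈ Icc βlo βhi ∧ ψ Δ bΔ = bΔ ∧ ∀ x ∈ Icc βlo βhi, ψ Δ x = x → x = bΔ) ∧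
      (bΔ' ∈ Icc βlo βhi ∧ ψ Δ' bΔ' = bΔ' ∧ ∀ x ∈ Icc βlo βhi, ψ Δ' x = x → x = bΔ') ∧
      βstar < bΔ ∧ bΔ ≤ bΔ' :=
  stmt_10_general βlo βstar βhi hlo hls hsh R hRcont hRβ hRid H hHcont hHmono hHin ψ hψ Δ Δ' hΔ' hΔ
end

section
/- (Proposition 1 (i)–(iii), equilibrium disparities) Under the stated hypotheses: (i) β̂_w > β* > β̂_m; (ii) h(β̂_w) > h(β̂_m); (iii) a(h(β̂_w), β̂_w) > a(h(β̂_w), β*) > a(h(β̂_m), β*) > a(h(β̂_m), β̂_m) — agent w exerts strictly more true effort than agent m, and the perceived effort gap between them is even larger than the true effort gap. -/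
open Set

theorem stmt_11
    (βlo βstar βhi : ℝ)
    (hlo : 0 < βlo) (hls : βlo < βstar) (hsh : βstar < βhi)
    (R : ℝ → ℝ → ℝ)
    (hRcont : ContinuousOn (fun p : ℝ × ℝ => R p.1 p.2) (Icc (0:ℝ) 1 ×ˢ Ici (0:ℝ)))
    (hR0 : ∀ h ∈ Icc (0:ℝ) 1, R h 0 = 0)
    (hR0' : ∀ β ∈ Ici (0:ℝ), R 0 β = 0)
    (hRβ : ∀ h ∈ Ioc (0:ℝ) 1, StrictMonoOn (fun β => R h β) (Ici 0))
    (hRh : ∀ β > (0:ℝ), StrictMonoOn (fun h => R h β) (Icc 0 1))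
    (H : ℝ → ℝ)
    (hHcont : ContinuousOn H (Ici 0))
    (hHmono : StrictMonoOn H (Ici 0))
    (hH0 : H 0 = 0)
    (hHin : ∀ β > (0:ℝ), H β ∈ Ioo (0:ℝ) 1)
    -- the optimal effort map
    (A : ℝ → ℝ → ℝ)
    (hAnn : ∀ h β : ℝ, 0 ≤ A h β)
    (hAβ : ∀ h ∈ Ioc (0:ℝ) 1, StrictMonoOn (fun β => A h β) (Ici 0))
    (hAh : ∀ β > (0:ℝ), StrictMonoOn (fun h => A h β) (Icc 0 1))
    -- two identical agents whose abilities are misspecified by Δm > 0 > Δw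
    (Δm Δw : ℝ) (hΔm : 0 < Δm) (hΔw : Δw < 0)
    -- self-confirming equilibrium beliefs
    (bm bw : ℝ) (hbm : bm ∈ Icc βlo βhi) (hbw : bw ∈ Icc βlo βhi)
    (hscm : Δm + R (H bm) bm - R (H bm) βstar = 0)
    (hscw : Δw + R (H bw) bw - R (H bw) βstar = 0) :
    (βstar < bw ∧ bm < βstar) ∧
    H bm < H bw ∧
    (A (H bm) bm < A (H bm) βstar ∧
      A (H bm) βstar < A (H bw) βstar ∧
      A (H bw) βstar < A (H bw) bw) := by
  have hbm0 : 0 < bm := lt_of_lt_of_le hlo hbm.1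
  have hbw0 : 0 < bw := lt_of_lt_of_le hlo hbw.1
  have hbs0 : 0 < βstar := lt_trans hlo hls
  have hHm := hHin bm hbm0
  have hHw := hHin bw hbw0
  have hHmIoc : H bm ∈ Ioc (0:ℝ) 1 := ⟨hHm.1, le_of_lt hHm.2⟩
  have hHwIoc : H bw ∈ Ioc (0:ℝ) 1 := ⟨hHw.1, le_of_lt hHw.2⟩
  -- (i)
  have hRm : R (H bm) bm < R (H bm) βstar := by linarith
  have hRw : R (H bw) βstar < R (H bw) bw := by linarith
  have hi1 : bm < βstar := by
    by_contra hc
    push_neg at hc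
    rcases eq_or_lt_of_le hc with h | h
    · rw [h] at hRm; exact lt_irrefl _ hRm
    · exact absurd ((hRβ (H bm) hHmIoc) (le_of_lt hbs0) (le_of_lt hbm0) h)
        (not_lt.mpr (le_of_lt hRm))
  have hi2 : βstar < bw := by
    by_contra hc
    push_neg at hc
    rcases eq_or_lt_of_le hc with h | h
    · rw [h] at hRw; exact lt_irrefl _ hRw
    · exact absurd ((hRβ (H bw) hHwIoc) (le_of_lt hbw0) (le_of_lt hbs0) h)
        (not_lt.mpr (le_of_lt hRw))
  have hmw : bm < bw := lt_trans hi1 hi2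
  have hH : H bm < H bw := hHmono (le_of_lt hbm0) (le_of_lt hbw0) hmw
  refine ⟨⟨hi2, hi1⟩, hH, ?_, ?_, ?_⟩
  · exact (hAβ (H bm) hHmIoc) (le_of_lt hbm0) (le_of_lt hbs0) hi1
  · exact (hAh βstar hbs0) ⟨le_of_lt hHm.1, le_of_lt hHm.2⟩
      ⟨le_of_lt hHw.1, le_of_lt hHw.2⟩ hH
  · exact (hAβ (H bw) hHwIoc) (le_of_lt hbs0) (le_of_lt hbw0) hi2
end

section
/- (Proposition 1 (v), welfare gap when the market rewards only ability) Under the stated hypotheses, (Δ_m − Δ_w) − [c(a(h(β̂_m), β*)) − c(a(h(β̂_w), β*))] > 0; indeed Δ_m − Δ_w > 0 and c(a(h(β̂_m), β*)) < c(a(h(β̂_w), β*)). Hence when the market rewards only ability (v_M = 0), the objective welfare of agent m strictly exceeds that of agent w: m is over-rewarded by the ability misperception and also incurs a strictly lower true effort cost. -/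
open Set

theorem stmt_12
    (βlo βstar βhi : ℝ)
    (hlo : 0 < βlo) (hls : βlo < βstar) (hsh : βstar < βhi)
    (R : ℝ → ℝ → ℝ)
    (hRcont : ContinuousOn (fun p : ℝ × ℝ => R p.1 p.2) (Icc (0:ℝ) 1 ×ˢ Ici (0:ℝ)))
    (hR0 : ∀ h ∈ Icc (0:ℝ) 1, R h 0 = 0)
    (hR0' : ∀ β ∈ Ici (0:ℝ), R 0 β = 0)
    (hRβ : ∀ h ∈ Ioc (0:ℝ) 1, StrictMonoOn (fun β => R h β) (Ici 0))
    (hRh : ∀ β > (0:ℝ), StrictMonoOn (fun h => R h β) (Icc 0 1))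
    (H : ℝ → ℝ)
    (hHcont : ContinuousOn H (Ici 0))
    (hHmono : StrictMonoOn H (Ici 0))
    (hH0 : H 0 = 0)
    (hHin : ∀ β > (0:ℝ), H β ∈ Ioo (0:ℝ) 1)
    -- the optimal effort map
    (A : ℝ → ℝ → ℝ)
    (hAnn : ∀ h β : ℝ, 0 ≤ A h β)
    (hAβ : ∀ h ∈ Ioc (0:ℝ) 1, StrictMonoOn (fun β => A h β) (Ici 0))
    (hAh : ∀ β > (0:ℝ), StrictMonoOn (fun h => A h β) (Icc 0 1))
    -- the effort cost function
    (c : ℝ → ℝ) (hc : StrictMonoOn c (Ici 0))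
    -- two identical agents whose abilities are misspecified by Δm > 0 > Δw
    (Δm Δw : ℝ) (hΔm : 0 < Δm) (hΔw : Δw < 0)
    -- self-confirming equilibrium beliefs
    (bm bw : ℝ) (hbm : bm ∈ Icc βlo βhi) (hbw : bw ∈ Icc βlo βhi)
    (hscm : Δm + R (H bm) bm - R (H bm) βstar = 0)
    (hscw : Δw + R (H bw) bw - R (H bw) βstar = 0) :
    0 < Δm - Δw ∧
    c (A (H bm) βstar) < c (A (H bw) βstar) ∧
    0 < (Δm - Δw) - (c (A (H bm) βstar) - c (A (H bw) βstar)) := by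
  have hbm0 : (0:ℝ) < bm := lt_of_lt_of_le hlo hbm.1
  have hbw0 : (0:ℝ) < bw := lt_of_lt_of_le hlo hbw.1
  have hstar0 : (0:ℝ) < βstar := lt_trans hlo hls
  have hHm := hHin bm hbm0
  have hHw := hHin bw hbw0
  have hHmI : H bm ∈ Ioc (0:ℝ) 1 := ⟨hHm.1, le_of_lt hHm.2⟩
  have hHwI : H bw ∈ Ioc (0:ℝ) 1 := ⟨hHw.1, le_of_lt hHw.2⟩
  -- bm < βstar
  have h1 : R (H bm) bm < R (H bm) βstar := by linarith
  have hbmlt : bm < βstar :=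
    ((hRβ (H bm) hHmI).lt_iff_lt (le_of_lt hbm0) (le_of_lt hstar0)).1 h1
  -- βstar < bw
  have h2 : R (H bw) βstar < R (H bw) bw := by linarith
  have hbwgt : βstar < bw :=
    ((hRβ (H bw) hHwI).lt_iff_lt (le_of_lt hstar0) (le_of_lt hbw0)).1 h2
  have hblt : bm < bw := lt_trans hbmlt hbwgt
  have hHlt : H bm < H bw := hHmono (le_of_lt hbm0) (le_of_lt hbw0) hblt
  have hAlt : A (H bm) βstar < A (H bw) βstar :=
    hAh βstar hstar0 ⟨le_of_lt hHm.1, le_of_lt hHm.2⟩ ⟨le_of_lt hHw.1, le_of_lt hHw.2⟩ hHlt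
  have hclt : c (A (H bm) βstar) < c (A (H bw) βstar) :=
    hc (hAnn _ _) (hAnn _ _) hAlt
  exact ⟨by linarith, hclt, by linarith⟩
end
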